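/- arXiv:2003.07984 — 5 statements merged into one kernel-verified Lean document; each statement's English description precedes it below -/
import Mathlib

section
/- Let A(x) = 1 + ∑_{i≥1} a_i xⁱ and y(x) = ∑_{i≥1} y_i xⁱ be formal power series over ℝ related by y(x) = xA(y(x)), with a_i ≥ 0 for all i ≥ 1, and assume the radius of convergence R of A satisfies R > 0. Let r > 0 be the radius of convergence of y and Ω = {z ∈ ℂ : |z| < r}. Then: (i) the map y : Ω → y(Ω) is a biholomorphism onto its image; (ii) the function ψ(z) := z/A(z) is well-defined and analytic on y(Ω), and ψ(y(z)) = z for all z ∈ Ω; (iii) if A(x) is not identically equal to 1, then r < ∞; (iv) if y(r) := ∑ y_i rⁱ < ∞, then y extends continuously to the boundary ∂Ω, ψ extends continuously to the boundary of y(Ω), and ψ(y(z)) = z holds for all z ∈ ∂Ω. -/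
open Filter
open Topology
open scoped BigOperators NNReal ENNReal

/-- Composition `f(g(x))` of formal power series; this is the correct notion of
substitution whenever the inner series `g` has zero constant term. -/
noncomputable def pscomp {R : Type*} [CommSemiring R] (f g : PowerSeries R) : PowerSeries R :=
  PowerSeries.mk fun n =>
    ∑ k ∈ Finset.range (n + 1), PowerSeries.coeff k f * PowerSeries.coeff n (g ^ k)
open scoped NNReal ENNReal in
/-- The radius of convergence (in `[0,∞]`) of the power series with real
coefficient sequence `c`. -/
noncomputable def radiusOf (c : ℕ → ℝ) : ℝ≥0∞ :=
  ⨆ (t : ℝ≥0) (_ : Summable fun n : ℕ => |c n| * (t : ℝ) ^ n), (t : ℝ≥0∞)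

/-- The analytic function defined by the power series with coefficients `c`
(as a function of a complex variable). -/
noncomputable def sumFun (c : ℕ → ℝ) : ℂ → ℂ := fun z => ∑' i : ℕ, (c i : ℂ) * z ^ i

/-- The open disc of convergence `Ω = {z : |z| < r}` of the power series with
coefficients `c` (where `r ∈ [0,∞]` is its radius of convergence). -/
noncomputable def discOf (c : ℕ → ℝ) : Set ℂ := {z : ℂ | (‖z‖₊ : ℝ≥0∞) < radiusOf c}

namespace LPsi

open scoped NNReal ENNReal

noncomputable def pser (c : ℕ → ℝ) : FormalMultilinearSeries ℂ ℂ ℂ :=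
  FormalMultilinearSeries.ofScalars ℂ (fun k => (c k : ℂ))

theorem sumFun_eq_psum (c : ℕ → ℝ) : sumFun c = (pser c).sum := by
  funext z
  exact (tsum_congr fun n =>
    by rw [pser, FormalMultilinearSeries.ofScalars_apply_eq]; simp [smul_eq_mul]).symm

theorem le_radiusOf (c : ℕ → ℝ) (t : ℝ≥0) (h : Summable fun n : ℕ => |c n| * (t : ℝ) ^ n) :
    (t : ℝ≥0∞) ≤ radiusOf c :=
  le_iSup₂ (f := fun (t : ℝ≥0) (_ : Summable fun n : ℕ => |c n| * (t:ℝ)^n) => (t:ℝ≥0∞)) t h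

theorem radiusOf_le_radius (c : ℕ → ℝ) : radiusOf c ≤ (pser c).radius := by
  refine iSup₂_le fun t h => ?_
  refine FormalMultilinearSeries.le_radius_of_summable_norm _ ?_
  refine Summable.of_nonneg_of_le (fun n => by positivity) (fun n => ?_) h
  refine mul_le_mul_of_nonneg_right ?_ (by positivity)
  refine (ContinuousMultilinearMap.opNorm_smul_le _ _).trans ?_
  simp [ContinuousMultilinearMap.norm_mkPiAlgebraFin]

theorem analyticAt_sumFun (c : ℕ → ℝ) {z : ℂ} (h : (‖z‖₊ : ℝ≥0∞) < radiusOf c) :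
    AnalyticAt ℂ (sumFun c) z := by
  rw [sumFun_eq_psum]
  have h0 : 0 < (pser c).radius := lt_of_le_of_lt zero_le (h.trans_le (radiusOf_le_radius c))
  refine ((pser c).hasFPowerSeriesOnBall h0).analyticAt_of_mem ?_
  rw [EMetric.mem_ball, edist_eq_enorm_sub, sub_zero]
  exact h.trans_le (radiusOf_le_radius c)

theorem summable_of_lt_radiusOf {c : ℕ → ℝ} {t : ℝ≥0} (h : (t : ℝ≥0∞) < radiusOf c) :
    Summable fun n : ℕ => |c n| * (t : ℝ) ^ n := by
  rw [radiusOf, lt_iSup_iff] at h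
  obtain ⟨t', ht'⟩ := h
  rw [lt_iSup_iff] at ht'
  obtain ⟨hs, hlt⟩ := ht'
  have htt' : t ≤ t' := by exact_mod_cast hlt.le
  refine Summable.of_nonneg_of_le (fun n => by positivity) (fun n => ?_) hs
  exact mul_le_mul_of_nonneg_left (pow_le_pow_left₀ t.2 (by exact_mod_cast htt') n) (abs_nonneg _)

theorem rec_formula (a y : ℕ → ℝ)
    (hcomp : PowerSeries.mk y = PowerSeries.X * pscomp (PowerSeries.mk a) (PowerSeries.mk y))
    (n : ℕ) : y (n+1) = ∑ k ∈ Finset.range (n+1),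
      a k * PowerSeries.coeff n ((PowerSeries.mk y) ^ k) := by
  have := congrArg (PowerSeries.coeff (n+1)) hcomp
  rw [PowerSeries.coeff_succ_X_mul, PowerSeries.coeff_mk, pscomp, PowerSeries.coeff_mk] at this
  simpa only [PowerSeries.coeff_mk] using this

theorem coeff_pow_nonneg (y : ℕ → ℝ) (hy : ∀ m, 0 ≤ y m) (k n : ℕ) :
    0 ≤ PowerSeries.coeff n ((PowerSeries.mk y) ^ k) := by
  induction k generalizing n with
  | zero => simp only [pow_zero, PowerSeries.coeff_one]; positivity
  | succ k ih =>
    rw [pow_succ, PowerSeries.coeff_mul]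
    exact Finset.sum_nonneg fun p _ => mul_nonneg (ih p.1) (by simpa using hy p.2)

theorem y_nonneg (a y : ℕ → ℝ) (ha0 : a 0 = 1) (hy0 : y 0 = 0)
    (hapos : ∀ i : ℕ, 1 ≤ i → 0 ≤ a i)
    (hcomp : PowerSeries.mk y = PowerSeries.X * pscomp (PowerSeries.mk a) (PowerSeries.mk y)) :
    ∀ m, 0 ≤ y m := by
  have ha : ∀ k, 0 ≤ a k := by
    intro k
    rcases Nat.eq_zero_or_pos k with h | h
    · simp [h, ha0]
    · exact hapos k h
  have key : ∀ k n, (∀ m ≤ n, 0 ≤ y m) → 0 ≤ PowerSeries.coeff n ((PowerSeries.mk y) ^ k) := by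
    intro k
    induction k with
    | zero => intro n _; simp only [pow_zero, PowerSeries.coeff_one]; positivity
    | succ k ih =>
      intro n hn
      rw [pow_succ, PowerSeries.coeff_mul]
      refine Finset.sum_nonneg fun p hp => ?_
      rw [Finset.HasAntidiagonal.mem_antidiagonal] at hp
      refine mul_nonneg (ih p.1 fun m hm => hn m (hm.trans ?_)) ?_
      · omega
      · simpa using hn p.2 (by omega)
  intro m
  induction m using Nat.strong_induction_on with
  | _ m ihm =>
    match m with
    | 0 => simp [hy0]
    | (n+1) =>
      rw [rec_formula a y hcomp n]
      exact Finset.sum_nonneg fun k _ => mul_nonneg (ha k)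
        (key k n fun m hm => ihm m (by omega))

theorem coeff_pow_eq_zero (y : ℕ → ℝ) (hy0 : y 0 = 0) {k n : ℕ} (h : n < k) :
    PowerSeries.coeff n ((PowerSeries.mk y) ^ k) = 0 := by
  have hX : PowerSeries.X ∣ PowerSeries.mk y := by
    rw [PowerSeries.X_dvd_iff]; simpa using hy0
  have : (PowerSeries.X : PowerSeries ℝ) ^ k ∣ (PowerSeries.mk y) ^ k := pow_dvd_pow_of_dvd hX k
  rw [PowerSeries.X_pow_dvd_iff] at this
  exact this n h

theorem y_one (a y : ℕ → ℝ) (ha0 : a 0 = 1)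
    (hcomp : PowerSeries.mk y = PowerSeries.X * pscomp (PowerSeries.mk a) (PowerSeries.mk y)) :
    y 1 = 1 := by
  have := rec_formula a y hcomp 0
  simpa [ha0] using this

theorem sumFun_real (c : ℕ → ℝ) (s : ℝ) (hs : Summable fun n => c n * s ^ n) :
    sumFun c (s : ℂ) = ((∑' n, c n * s ^ n : ℝ) : ℂ) := by
  have h := hs.hasSum.mapL Complex.ofRealCLM
  rw [sumFun]
  rw [show (fun i : ℕ => ((c i : ℂ) * (s:ℂ) ^ i)) = fun n => ((c n * s ^ n : ℝ) : ℂ) by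
    funext n; push_cast; ring]
  exact h.tsum_eq

theorem sumFun_zero (c : ℕ → ℝ) : sumFun c 0 = (c 0 : ℂ) := by
  have h : HasSum (fun i : ℕ => (c i : ℂ) * 0 ^ i) ((c 0 : ℂ) * 0 ^ 0) :=
    hasSum_single 0 (fun b hb => by simp [zero_pow hb])
  show (∑' i : ℕ, (c i : ℂ) * 0 ^ i) = _
  simpa using h.tsum_eq

theorem pow_hasSum (y : ℕ → ℝ) (hy : ∀ m, 0 ≤ y m)
    (hcpnn : ∀ k n, 0 ≤ PowerSeries.coeff n ((PowerSeries.mk y) ^ k))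
    (t : ℝ) (ht : 0 ≤ t) (hst : Summable fun n => y n * t ^ n) (k : ℕ) :
    HasSum (fun n => PowerSeries.coeff n ((PowerSeries.mk y) ^ k) * t ^ n)
      ((∑' n, y n * t ^ n) ^ k) := by
  induction k with
  | zero =>
    have : HasSum (fun n => (if n = 0 then (1:ℝ) else 0) * t ^ n) ((if 0 = 0 then (1:ℝ) else 0) * t ^ 0) :=
      hasSum_single 0 (fun b hb => by simp [hb])
    simpa [PowerSeries.coeff_one] using this
  | succ k ih =>
    have hsk : Summable fun n => PowerSeries.coeff n ((PowerSeries.mk y) ^ k) * t ^ n :=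
      ih.summable
    have hnormk : Summable fun n => ‖PowerSeries.coeff n ((PowerSeries.mk y) ^ k) * t ^ n‖ := by
      refine hsk.congr fun n => ?_
      rw [Real.norm_of_nonneg (mul_nonneg (hcpnn k n) (pow_nonneg ht n))]
    have hnormy : Summable fun n => ‖y n * t ^ n‖ := by
      refine hst.congr fun n => ?_
      rw [Real.norm_of_nonneg (mul_nonneg (hy n) (by positivity))]
    have hsum := (summable_norm_sum_mul_antidiagonal_of_summable_norm (R := ℝ) hnormk hnormy).of_norm
    have htsum := tsum_mul_tsum_eq_tsum_sum_antidiagonal_of_summable_norm (R := ℝ) hnormk hnormy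
    have hcoeff : ∀ n, PowerSeries.coeff n ((PowerSeries.mk y) ^ (k+1)) * t ^ n =
        ∑ kl ∈ Finset.HasAntidiagonal.antidiagonal n,
          (PowerSeries.coeff kl.1 ((PowerSeries.mk y) ^ k) * t ^ kl.1) *
          (y kl.2 * t ^ kl.2) := by
      intro n
      rw [pow_succ, PowerSeries.coeff_mul, Finset.sum_mul]
      refine Finset.sum_congr rfl fun p hp => ?_
      rw [Finset.HasAntidiagonal.mem_antidiagonal] at hp
      rw [PowerSeries.coeff_mk, ← hp, pow_add]
      ring
    have : Summable fun n => PowerSeries.coeff n ((PowerSeries.mk y) ^ (k+1)) * t ^ n := by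
      refine hsum.congr fun n => (hcoeff n).symm
    rw [Summable.hasSum_iff this]
    calc ∑' n, PowerSeries.coeff n ((PowerSeries.mk y) ^ (k+1)) * t ^ n
        = ∑' n, ∑ kl ∈ Finset.HasAntidiagonal.antidiagonal n,
            (PowerSeries.coeff kl.1 ((PowerSeries.mk y) ^ k) * t ^ kl.1) *
            (y kl.2 * t ^ kl.2) := tsum_congr hcoeff
      _ = (∑' n, PowerSeries.coeff n ((PowerSeries.mk y) ^ k) * t ^ n) * (∑' n, y n * t ^ n) :=
          htsum.symm
      _ = (∑' n, y n * t ^ n) ^ (k + 1) := by rw [ih.tsum_eq, pow_succ]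

theorem core (a y : ℕ → ℝ) (ha : ∀ k, 0 ≤ a k) (hy : ∀ m, 0 ≤ y m) (hy0 : y 0 = 0)
    (hcpnn : ∀ k n, 0 ≤ PowerSeries.coeff n ((PowerSeries.mk y) ^ k))
    (hrec : ∀ n, y (n+1) = ∑ k ∈ Finset.range (n+1),
      a k * PowerSeries.coeff n ((PowerSeries.mk y) ^ k))
    (hcz : ∀ {k n : ℕ}, n < k → PowerSeries.coeff n ((PowerSeries.mk y) ^ k) = 0)
    (t : ℝ) (ht : 0 < t) (hst : Summable fun n => y n * t ^ n) :
    Summable (fun k => a k * (∑' n, y n * t ^ n) ^ k) ∧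
    (∑' n, y n * t ^ n) = t * ∑' k, a k * (∑' n, y n * t ^ n) ^ k := by
  set T : ℝ := ∑' n, y n * t ^ n with hT
  have hTnn : 0 ≤ T := tsum_nonneg fun n => mul_nonneg (hy n) (by positivity)
  set c : ℕ → ℕ → ℝ := fun n k => PowerSeries.coeff n ((PowerSeries.mk y) ^ k) with hc
  -- shifted summability
  have hs1 : Summable fun n => y (n+1) * t ^ (n+1) := by
    have := (summable_nat_add_iff 1).mpr hst
    simpa using this
  have hs2 : Summable fun n => y (n+1) * t ^ n := by
    have := hs1.mul_left t⁻¹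
    refine this.congr fun n => ?_
    field_simp [pow_succ]
    ring
  have hts2 : T = t * ∑' n, y (n+1) * t ^ n := by
    rw [hT, Summable.tsum_eq_zero_add hst, hy0]
    simp only [zero_mul, zero_add]
    rw [← tsum_mul_left]
    exact tsum_congr fun n => by ring
  -- ENNReal computation
  have hks : ∀ k, Summable fun n => c n k * t ^ n := fun k =>
    (pow_hasSum y hy hcpnn t ht.le hst k).summable
  have hFk : ∀ k, ∑' n, ENNReal.ofReal (c n k * t ^ n) = ENNReal.ofReal (T ^ k) := by
    intro k
    rw [← ENNReal.ofReal_tsum_of_nonneg (fun n => mul_nonneg (hcpnn k n) (by positivity)) (hks k),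
      (pow_hasSum y hy hcpnn t ht.le hst k).tsum_eq]
  have key : ∑' k, ENNReal.ofReal (a k * T ^ k) = ∑' n, ENNReal.ofReal (y (n+1) * t ^ n) := by
    calc ∑' k, ENNReal.ofReal (a k * T ^ k)
        = ∑' k, ENNReal.ofReal (a k) * ENNReal.ofReal (T ^ k) := by
          refine tsum_congr fun k => ?_
          rw [ENNReal.ofReal_mul (ha k)]
      _ = ∑' k, ENNReal.ofReal (a k) * ∑' n, ENNReal.ofReal (c n k * t ^ n) := by
          exact tsum_congr fun k => by rw [hFk k]
      _ = ∑' k, ∑' n, ENNReal.ofReal (a k) * ENNReal.ofReal (c n k * t ^ n) := by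
          exact tsum_congr fun k => (ENNReal.tsum_mul_left).symm
      _ = ∑' n, ∑' k, ENNReal.ofReal (a k) * ENNReal.ofReal (c n k * t ^ n) := ENNReal.tsum_comm
      _ = ∑' n, ENNReal.ofReal (y (n+1) * t ^ n) := by
          refine tsum_congr fun n => ?_
          have hvanish : ∀ k ∉ Finset.range (n+1), ENNReal.ofReal (a k) * ENNReal.ofReal (c n k * t ^ n) = 0 := by
            intro k hk
            rw [Finset.mem_range] at hk
            have : c n k = 0 := hcz (by omega)
            simp only [hc] at this ⊢
            rw [this]
            simp
          rw [tsum_eq_sum hvanish]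
          rw [hrec n, Finset.sum_mul, ENNReal.ofReal_sum_of_nonneg]
          · refine Finset.sum_congr rfl fun k _ => ?_
            rw [mul_assoc, ENNReal.ofReal_mul (ha k)]
          · intro k _
            exact mul_nonneg (mul_nonneg (ha k) (hcpnn k n)) (by positivity)
  have hfin : ∑' k, ENNReal.ofReal (a k * T ^ k) ≠ ⊤ := by
    rw [key, ← ENNReal.ofReal_tsum_of_nonneg (fun n => mul_nonneg (hy (n+1)) (by positivity)) hs2]
    exact ENNReal.ofReal_ne_top
  have hsummable : Summable fun k => a k * T ^ k := by
    have := ENNReal.summable_toReal hfin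
    refine this.congr fun k => ?_
    rw [ENNReal.toReal_ofReal (mul_nonneg (ha k) (pow_nonneg hTnn k))]
  refine ⟨hsummable, ?_⟩
  have : ENNReal.ofReal (∑' k, a k * T ^ k) = ENNReal.ofReal (∑' n, y (n+1) * t ^ n) := by
    rw [ENNReal.ofReal_tsum_of_nonneg (fun k => mul_nonneg (ha k) (pow_nonneg hTnn k)) hsummable,
      ENNReal.ofReal_tsum_of_nonneg (fun n => mul_nonneg (hy (n+1)) (by positivity)) hs2, key]
  rw [ENNReal.ofReal_eq_ofReal_iff
    (tsum_nonneg fun k => mul_nonneg (ha k) (pow_nonneg hTnn k))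
    (tsum_nonneg fun n => mul_nonneg (hy (n+1)) (by positivity))] at this
  conv_lhs => rw [hts2, ← this]

end LPsi

/-- Let `A(x) = 1 + ∑_{i≥1} aᵢxⁱ` and `y(x) = ∑_{i≥1} yᵢxⁱ` be formal power series over `ℝ`
related by `y(x) = x·A(y(x))`, with `aᵢ ≥ 0`, and assume `R > 0` where `R` is the radius of
convergence of `A`.  Let `Ω = {z : |z| < r}` where `r` is the radius of convergence of `y`.
Then (i) `y : Ω → y(Ω)` is a biholomorphism onto its (open) image; (ii) `ψ(z) = z/A(z)` is
well-defined (i.e. `A ≠ 0`) and analytic on `y(Ω)`, and `ψ(y(z)) = z` on `Ω`; (iii) if `A`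
is not identically `1` then `r < ∞`; (iv) if `y(r) < ∞` then `y` extends continuously to
`∂Ω`, `ψ` extends continuously to the boundary of `y(Ω)`, and `ψ(y(z)) = z` on `∂Ω`
(here the continuous extensions are given by the same convergent-series formulas). -/
theorem lemma_psi (a y : ℕ → ℝ) (ha0 : a 0 = 1) (hy0 : y 0 = 0)
    (hapos : ∀ i : ℕ, 1 ≤ i → 0 ≤ a i)
    (hcomp : PowerSeries.mk y =
      PowerSeries.X * pscomp (PowerSeries.mk a) (PowerSeries.mk y))
    (hR : 0 < radiusOf a) :
    (AnalyticOnNhd ℂ (sumFun y) (discOf y) ∧ Set.InjOn (sumFun y) (discOf y) ∧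
      IsOpen (sumFun y '' discOf y)) ∧
    ((∀ w ∈ sumFun y '' discOf y, sumFun a w ≠ 0) ∧
      AnalyticOnNhd ℂ (fun w => w / sumFun a w) (sumFun y '' discOf y) ∧
      ∀ z ∈ discOf y, sumFun y z / sumFun a (sumFun y z) = z) ∧
    ((∃ i : ℕ, 1 ≤ i ∧ a i ≠ 0) → radiusOf y < ⊤) ∧
    (∀ r : ℝ, 0 ≤ r → radiusOf y = ENNReal.ofReal r →
      Summable (fun i : ℕ => y i * r ^ i) →
      ContinuousOn (sumFun y) (Metric.closedBall 0 r) ∧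
      ContinuousOn (fun w => w / sumFun a w) (closure (sumFun y '' discOf y)) ∧
      ∀ z : ℂ, ‖z‖ = r → sumFun y z / sumFun a (sumFun y z) = z) := by
    classical
  have ha : ∀ k, 0 ≤ a k := fun k => by
    rcases Nat.eq_zero_or_pos k with h | h
    · simp [h, ha0]
    · exact hapos k h
  have hy : ∀ m, 0 ≤ y m := LPsi.y_nonneg a y ha0 hy0 hapos hcomp
  have hy1 : y 1 = 1 := LPsi.y_one a y ha0 hcomp
  have hcpnn : ∀ k n, 0 ≤ PowerSeries.coeff n ((PowerSeries.mk y) ^ k) :=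
    fun k n => LPsi.coeff_pow_nonneg y hy k n
  have hrec := LPsi.rec_formula a y hcomp
  have hsumy : ∀ s : ℝ, 0 ≤ s → ENNReal.ofReal s < radiusOf y →
      Summable fun n => y n * s ^ n := by
    intro s hs hrad
    have hco : ((s.toNNReal : ℝ≥0∞)) = ENNReal.ofReal s := rfl
    have := LPsi.summable_of_lt_radiusOf (c := y) (t := s.toNNReal) (by rw [hco]; exact hrad)
    refine this.congr fun n => ?_
    rw [Real.coe_toNNReal _ hs, abs_of_nonneg (hy n)]
  have hreal : ∀ s : ℝ, 0 < s → ENNReal.ofReal s < radiusOf y →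
      (Summable fun k => a k * (∑' n, y n * s ^ n) ^ k) ∧
      (∑' n, y n * s ^ n) = s * ∑' k, a k * (∑' n, y n * s ^ n) ^ k :=
    fun s hs hrad => LPsi.core a y ha hy hy0 hcpnn hrec
      (fun {k n} h => LPsi.coeff_pow_eq_zero y hy0 h) s hs (hsumy s hs.le hrad)
  have hrada : ∀ s : ℝ, 0 < s → ENNReal.ofReal s < radiusOf y →
      ENNReal.ofReal (∑' n, y n * s ^ n) ≤ radiusOf a := by
    intro s hs hrad
    obtain ⟨hsm, -⟩ := hreal s hs hrad
    have hT : 0 ≤ ∑' n, y n * s ^ n := tsum_nonneg fun n => mul_nonneg (hy n) (by positivity)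
    have hs2 : Summable fun k => |a k| * (((∑' n, y n * s ^ n).toNNReal : ℝ)) ^ k := by
      refine hsm.congr fun k => ?_
      rw [Real.coe_toNNReal _ hT, abs_of_nonneg (ha k)]
    exact LPsi.le_radiusOf a _ hs2
  have hbound : ∀ z ∈ discOf y, (‖sumFun y z‖₊ : ℝ≥0∞) < radiusOf a := by
    intro z hz
    have hz' : (‖z‖₊ : ℝ≥0∞) < radiusOf y := hz
    obtain ⟨t', hzt', ht'rad⟩ := ENNReal.lt_iff_exists_nnreal_btwn.mp hz'
    have hzt'r : ‖z‖ < (t' : ℝ) := by exact_mod_cast hzt'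
    have ht'pos : (0:ℝ) < t' := lt_of_le_of_lt (norm_nonneg z) hzt'r
    have ht'rad' : ENNReal.ofReal (t':ℝ) < radiusOf y := by rwa [ENNReal.ofReal_coe_nnreal]
    have hst' := hsumy (t':ℝ) ht'pos.le ht'rad'
    have hsz : Summable fun n => y n * ‖z‖ ^ n := by
      refine hst'.of_nonneg_of_le (fun n => mul_nonneg (hy n) (by positivity)) fun n => ?_
      exact mul_le_mul_of_nonneg_left (pow_le_pow_left₀ (norm_nonneg z) hzt'r.le n) (hy n)
    have h1 : ‖sumFun y z‖ ≤ ∑' n, y n * ‖z‖ ^ n := by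
      have hns : Summable fun n => ‖(y n : ℂ) * z ^ n‖ := by
        refine hsz.congr fun n => ?_
        rw [norm_mul, norm_pow, Complex.norm_real, Real.norm_of_nonneg (hy n)]
      refine (norm_tsum_le_tsum_norm hns).trans (le_of_eq (tsum_congr fun n => ?_))
      rw [norm_mul, norm_pow, Complex.norm_real, Real.norm_of_nonneg (hy n)]
    have h2 : (∑' n, y n * ‖z‖ ^ n) < ∑' n, y n * (t':ℝ) ^ n := by
      refine Summable.tsum_lt_tsum (i := 1)
        (fun n => mul_le_mul_of_nonneg_left (pow_le_pow_left₀ (norm_nonneg z) hzt'r.le n) (hy n))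
        ?_ hsz hst'
      simpa [hy1] using hzt'r
    calc (‖sumFun y z‖₊ : ℝ≥0∞) = ENNReal.ofReal ‖sumFun y z‖ :=
          (ofReal_norm _).symm
      _ < ENNReal.ofReal (∑' n, y n * (t':ℝ) ^ n) := by
          rw [ENNReal.ofReal_lt_ofReal_iff_of_nonneg (norm_nonneg _)]
          exact h1.trans_lt h2
      _ ≤ radiusOf a := hrada (t':ℝ) ht'pos ht'rad'
  have hyOn : AnalyticOnNhd ℂ (sumFun y) (discOf y) := fun z hz => LPsi.analyticAt_sumFun y hz
  have hgOn : AnalyticOnNhd ℂ (fun z => z * sumFun a (sumFun y z)) (discOf y) := fun z hz =>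
    (analyticAt_id).mul ((LPsi.analyticAt_sumFun a (hbound z hz)).comp (LPsi.analyticAt_sumFun y hz))
  have hcases : discOf y = Set.univ ∨ ∃ R0 : ℝ≥0, discOf y = Metric.ball (0:ℂ) R0 := by
    rcases eq_or_ne (radiusOf y) ⊤ with h | h
    · left; ext z; simp [discOf, h]
    · right
      refine ⟨(radiusOf y).toNNReal, ?_⟩
      ext z
      simp only [discOf, Set.mem_setOf_eq, Metric.mem_ball, dist_zero_right]
      rw [← ENNReal.coe_toNNReal h, ENNReal.coe_lt_coe]
      exact ⟨fun h' => by exact_mod_cast h', fun h' => by exact_mod_cast h'⟩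
  have hopen : IsOpen (discOf y) := by
    rcases hcases with h | ⟨R0, h⟩ <;> rw [h]
    exacts [isOpen_univ, Metric.isOpen_ball]
  have hconn : IsPreconnected (discOf y) := by
    rcases hcases with h | ⟨R0, h⟩ <;> rw [h]
    exacts [isPreconnected_univ, (convex_ball _ _).isPreconnected]
  have hkey : ∀ z ∈ discOf y, sumFun y z = z * sumFun a (sumFun y z) := by
    intro z hz
    have hrpos : 0 < radiusOf y := lt_of_le_of_lt zero_le hz
    obtain ⟨t', ht'0, ht'rad⟩ := ENNReal.lt_iff_exists_nnreal_btwn.mp hrpos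
    have ht'pos : 0 < (t':ℝ) := by exact_mod_cast ht'0
    have hueq : ∀ k : ℕ, sumFun y (((t':ℝ) / (k+1) : ℝ) : ℂ) =
        (((t':ℝ) / (k+1) : ℝ) : ℂ) * sumFun a (sumFun y (((t':ℝ) / (k+1) : ℝ) : ℂ)) := by
      intro k
      have hs : (0:ℝ) < (t':ℝ)/(k+1) := by positivity
      have hsle : (t':ℝ)/(k+1) ≤ (t':ℝ) := by
        apply div_le_self ht'pos.le
        have : (0:ℝ) ≤ (k:ℝ) := k.cast_nonneg
        linarith
      have hsrad : ENNReal.ofReal ((t':ℝ)/(k+1)) < radiusOf y := by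
        refine lt_of_le_of_lt ?_ ht'rad
        rw [← ENNReal.ofReal_coe_nnreal]
        exact ENNReal.ofReal_le_ofReal hsle
      obtain ⟨hsm, hid⟩ := hreal _ hs hsrad
      have hY := LPsi.sumFun_real y _ (hsumy _ hs.le hsrad)
      have hA := LPsi.sumFun_real a _ hsm
      rw [hY, hA, ← Complex.ofReal_mul, ← hid]
    have htend0 : Filter.Tendsto (fun k : ℕ => (t':ℝ)/(k+1)) Filter.atTop (𝓝 0) := by
      have h1 := (tendsto_const_div_atTop_nhds_zero_nat (t':ℝ)).comp
        (Filter.tendsto_add_atTop_nat 1)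
      refine h1.congr fun k => ?_
      simp only [Function.comp_apply]
      push_cast
      ring_nf
    have htendu : Filter.Tendsto (fun k : ℕ => (((t':ℝ)/(k+1) : ℝ) : ℂ)) Filter.atTop
        (𝓝[≠] (0:ℂ)) := by
      apply tendsto_nhdsWithin_of_tendsto_nhds_of_eventually_within
      · have := (Complex.continuous_ofReal.tendsto 0).comp htend0
        simpa only [Function.comp_def, Complex.ofReal_zero] using this
      · refine Filter.Eventually.of_forall fun k => ?_
        have : (0:ℝ) < (t':ℝ)/(k+1) := by positivity
        simp only [Set.mem_compl_iff, Set.mem_singleton_iff]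
        exact_mod_cast ne_of_gt this
    have h0mem : (0:ℂ) ∈ discOf y := by
      show ((‖(0:ℂ)‖₊ : ℝ≥0∞)) < radiusOf y
      simpa using hrpos
    have heq := hyOn.eqOn_of_preconnected_of_frequently_eq hgOn hconn h0mem
      (htendu.frequently (Filter.Frequently.of_forall hueq))
    exact heq hz
  have hAzero : sumFun a 0 = 1 := by rw [LPsi.sumFun_zero a, ha0]; norm_num
  have hAne : ∀ z ∈ discOf y, sumFun a (sumFun y z) ≠ 0 := by
    intro z hz h0
    have h1 := hkey z hz
    rw [h0, mul_zero] at h1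
    rw [h1, hAzero] at h0
    exact one_ne_zero h0
  have hpsi : ∀ z ∈ discOf y, sumFun y z / sumFun a (sumFun y z) = z := by
    intro z hz
    rw [div_eq_iff (hAne z hz)]
    exact hkey z hz
  have hinj : Set.InjOn (sumFun y) (discOf y) := by
    intro z1 h1 z2 h2 heq
    rw [← hpsi z1 h1, ← hpsi z2 h2, heq]
  have himg : IsOpen (sumFun y '' discOf y) := by
    rcases hyOn.is_constant_or_isOpen hconn with ⟨w, hw⟩ | hOp
    · rcases Set.eq_empty_or_nonempty (discOf y) with he | ⟨z0, hz0⟩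
      · rw [he]; simp
      · exfalso
        have hrpos : 0 < radiusOf y := lt_of_le_of_lt zero_le hz0
        obtain ⟨t', ht'0, ht'rad⟩ := ENNReal.lt_iff_exists_nnreal_btwn.mp hrpos
        have ht'pos : 0 < (t':ℝ) := by exact_mod_cast ht'0
        have h0mem : (0:ℂ) ∈ discOf y := by
          show ((‖(0:ℂ)‖₊ : ℝ≥0∞)) < radiusOf y
          simpa using hrpos
        have htmem : (((t':ℝ)) : ℂ) ∈ discOf y := by
          show ((‖(((t':ℝ)):ℂ)‖₊ : ℝ≥0∞)) < radiusOf y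
          rw [← ENNReal.ofReal_coe_nnreal, coe_nnnorm, Complex.norm_real,
            Real.norm_of_nonneg ht'pos.le, ENNReal.ofReal_coe_nnreal]
          exact ht'rad
        have hzero := hinj h0mem htmem (by rw [hw 0 h0mem, hw _ htmem])
        have : ((t':ℝ):ℂ) ≠ 0 := by exact_mod_cast ne_of_gt ht'pos
        exact this hzero.symm
    · exact hOp _ (subset_refl _) hopen
  have hψan : AnalyticOnNhd ℂ (fun w => w / sumFun a w) (sumFun y '' discOf y) := by
    rintro w ⟨z, hz, rfl⟩
    have hA : AnalyticAt ℂ (sumFun a) (sumFun y z) := LPsi.analyticAt_sumFun a (hbound z hz)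
    exact (analyticAt_id).div hA (hAne z hz)
  have hAneImg : ∀ w ∈ sumFun y '' discOf y, sumFun a w ≠ 0 := by
    rintro w ⟨z, hz, rfl⟩
    exact hAne z hz
  have hiii : (∃ i : ℕ, 1 ≤ i ∧ a i ≠ 0) → radiusOf y < ⊤ := by
    rintro ⟨i, hi1, hai⟩
    have haipos : 0 < a i := lt_of_le_of_ne (hapos i hi1) (Ne.symm hai)
    by_contra hlt
    have htop : radiusOf y = ⊤ := by
      rcases eq_or_ne (radiusOf y) ⊤ with h | h
      · exact h
      · exact absurd (lt_top_iff_ne_top.mpr h) hlt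
    set s : ℝ := 1 + (a i)⁻¹ with hsdef
    have hs : 0 < s := by positivity
    have hsrad : ENNReal.ofReal s < radiusOf y := by rw [htop]; exact ENNReal.ofReal_lt_top
    obtain ⟨hsm, hid⟩ := hreal s hs hsrad
    set T : ℝ := ∑' n, y n * s ^ n with hT
    have hTnn : 0 ≤ T := tsum_nonneg fun n => mul_nonneg (hy n) (by positivity)
    have hTs : s ≤ T := by
      have := Summable.le_tsum (hsumy s hs.le hsrad) 1 (fun j _ => mul_nonneg (hy j) (by positivity))
      simpa [hy1] using this
    have hs1 : (1:ℝ) ≤ s := by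
      rw [hsdef]
      have : 0 ≤ (a i)⁻¹ := by positivity
      linarith
    have hT1 : (1:ℝ) ≤ T := hs1.trans hTs
    have hpow : T ≤ T ^ i := by
      calc T = T ^ 1 := (pow_one T).symm
        _ ≤ T ^ i := pow_le_pow_right₀ hT1 hi1
    have hSlb : 1 + a i * T ≤ ∑' k, a k * T ^ k := by
      have hfin : ∑ k ∈ ({0, i} : Finset ℕ), a k * T ^ k ≤ ∑' k, a k * T ^ k :=
        Summable.sum_le_tsum _ (fun k _ => mul_nonneg (ha k) (pow_nonneg hTnn k)) hsm
      rw [Finset.sum_pair (by omega : (0:ℕ) ≠ i)] at hfin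
      refine le_trans ?_ hfin
      rw [ha0, pow_zero, one_mul]
      have := mul_le_mul_of_nonneg_left hpow haipos.le
      linarith
    have hsai : 1 ≤ s * a i := by
      rw [hsdef]
      rw [add_mul, one_mul, inv_mul_cancel₀ (ne_of_gt haipos)]
      linarith [haipos.le]
    nlinarith [mul_le_mul_of_nonneg_left hSlb hs.le,
      mul_le_mul_of_nonneg_right hsai hTnn]
  refine ⟨⟨hyOn, hinj, himg⟩, ⟨hAneImg, hψan, hpsi⟩, hiii, ?_⟩
  intro r hr0 hrad hsumr
  rcases eq_or_lt_of_le hr0 with hr0' | hrpos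
  · -- r = 0 : everything degenerates
    have hr : r = 0 := hr0'.symm
    subst hr
    have hdisc : discOf y = ∅ := by
      ext z
      simp only [discOf, Set.mem_setOf_eq, Set.mem_empty_iff_false, iff_false, not_lt]
      rw [hrad]
      simp
    refine ⟨?_, ?_, ?_⟩
    · rw [Metric.closedBall_zero]
      exact continuousOn_singleton _ _
    · rw [hdisc]
      simp only [Set.image_empty, closure_empty]
      exact continuousOn_empty _
    · intro z hz
      have hz0 : z = 0 := by rwa [norm_eq_zero] at hz
      subst hz0
      rw [LPsi.sumFun_zero y, hy0]
      simp [hAzero]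
  · -- r > 0
    have hYc1 : ContinuousOn (sumFun y) (Metric.closedBall 0 r) := by
      refine continuousOn_tsum (f := fun n z => (y n : ℂ) * z ^ n)
        (fun i => (continuousOn_const.mul ((continuous_pow i).continuousOn))) hsumr ?_
      intro n z hzball
      rw [Metric.mem_closedBall, dist_zero_right] at hzball
      rw [norm_mul, norm_pow, Complex.norm_real, Real.norm_of_nonneg (hy n)]
      exact mul_le_mul_of_nonneg_left (pow_le_pow_left₀ (norm_nonneg z) hzball n) (hy n)
    set Y : ℝ := ∑' n, y n * r ^ n with hYdef
    have hYnn : 0 ≤ Y := tsum_nonneg fun n => mul_nonneg (hy n) (by positivity)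
    have hznorm : ∀ z ∈ discOf y, ‖z‖ < r := by
      intro z hz
      have h' : (‖z‖₊ : ℝ≥0∞) < ENNReal.ofReal r := by rw [← hrad]; exact hz
      rwa [← ENNReal.ofReal_coe_nnreal, coe_nnnorm, ENNReal.ofReal_lt_ofReal_iff hrpos] at h'
    have hnormy : ∀ z : ℂ, ‖z‖ ≤ r → ‖sumFun y z‖ ≤ ∑' n, y n * ‖z‖ ^ n := by
      intro z hzr
      have hsz : Summable fun n => y n * ‖z‖ ^ n :=
        hsumr.of_nonneg_of_le (fun n => mul_nonneg (hy n) (by positivity))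
          (fun n => mul_le_mul_of_nonneg_left (pow_le_pow_left₀ (norm_nonneg z) hzr n) (hy n))
      have hns : Summable fun n => ‖(y n : ℂ) * z ^ n‖ := by
        refine hsz.congr fun n => ?_
        rw [norm_mul, norm_pow, Complex.norm_real, Real.norm_of_nonneg (hy n)]
      refine (norm_tsum_le_tsum_norm hns).trans (le_of_eq (tsum_congr fun n => ?_))
      rw [norm_mul, norm_pow, Complex.norm_real, Real.norm_of_nonneg (hy n)]
    have himgsub : sumFun y '' discOf y ⊆ Metric.closedBall 0 Y := by
      rintro w ⟨z, hz, rfl⟩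
      rw [Metric.mem_closedBall, dist_zero_right]
      have hzr := hznorm z hz
      have hsz : Summable fun n => y n * ‖z‖ ^ n :=
        hsumr.of_nonneg_of_le (fun n => mul_nonneg (hy n) (by positivity))
          (fun n => mul_le_mul_of_nonneg_left (pow_le_pow_left₀ (norm_nonneg z) hzr.le n) (hy n))
      refine (hnormy z hzr.le).trans (Summable.tsum_le_tsum (fun n => ?_) hsz hsumr)
      exact mul_le_mul_of_nonneg_left (pow_le_pow_left₀ (norm_nonneg z) hzr.le n) (hy n)
    -- auxiliary sequence ε j = 1 - 1/(j+2)
    set ε : ℕ → ℝ := fun j => 1 - 1/((j:ℝ)+2) with hεdef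
    have hεhalf : ∀ j, (1:ℝ)/2 ≤ ε j := by
      intro j
      have h2 : (2:ℝ) ≤ (j:ℝ) + 2 := by
        have : (0:ℝ) ≤ (j:ℝ) := j.cast_nonneg
        linarith
      have := one_div_le_one_div_of_le (by norm_num : (0:ℝ) < 2) h2
      rw [hεdef]
      dsimp only
      linarith
    have hε0 : ∀ j, (0:ℝ) < ε j := fun j => lt_of_lt_of_le (by norm_num) (hεhalf j)
    have hε1 : ∀ j, ε j < 1 := by
      intro j
      have : (0:ℝ) < 1/((j:ℝ)+2) := by positivity
      rw [hεdef]
      dsimp only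
      linarith
    have hεtend : Filter.Tendsto ε Filter.atTop (𝓝 1) := by
      have h1 : Filter.Tendsto (fun j : ℕ => 1/((j:ℝ)+2)) Filter.atTop (𝓝 0) := by
        have := (tendsto_const_div_atTop_nhds_zero_nat (1:ℝ)).comp (Filter.tendsto_add_atTop_nat 2)
        refine this.congr fun k => ?_
        simp only [Function.comp_apply]
        push_cast
        ring_nf
      have h2 : Filter.Tendsto (fun j : ℕ => 1 - 1/((j:ℝ)+2)) Filter.atTop (𝓝 (1 - 0)) :=
        tendsto_const_nhds.sub h1
      simpa [hεdef] using h2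
    -- summability of A at Y
    have hsumaY : Summable fun k => a k * Y ^ k := by
      set t : ℕ → ℝ := fun j => r * ε j with htdef
      have htpos : ∀ j, 0 < t j := fun j => mul_pos hrpos (hε0 j)
      have htlt : ∀ j, t j < r := by
        intro j
        have := mul_lt_mul_of_pos_left (hε1 j) hrpos
        simpa [htdef] using this
      have htge : ∀ j, r/2 ≤ t j := by
        intro j
        have := mul_le_mul_of_nonneg_left (hεhalf j) hrpos.le
        rw [htdef]
        dsimp only
        linarith
      have httend : Filter.Tendsto t Filter.atTop (𝓝 r) := by
        have := (tendsto_const_nhds (x := r) (f := Filter.atTop (α := ℕ))).mul hεtend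
        simpa using this
      have hTj_sum : ∀ j, Summable fun n => y n * (t j) ^ n := fun j =>
        hsumy (t j) (htpos j).le (by rw [hrad]; exact ENNReal.ofReal_lt_ofReal_iff_of_nonneg (htpos j).le |>.mpr (htlt j))
      have hTjY : ∀ j, (∑' n, y n * (t j) ^ n) ≤ Y := by
        intro j
        refine Summable.tsum_le_tsum (fun n => ?_) (hTj_sum j) hsumr
        exact mul_le_mul_of_nonneg_left (pow_le_pow_left₀ (htpos j).le (htlt j).le n) (hy n)
      have hyt_tend : Filter.Tendsto (fun j => ∑' n, y n * (t j) ^ n) Filter.atTop (𝓝 Y) := by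
        rw [hYdef]
        refine tendsto_tsum_of_dominated_convergence (bound := fun n => y n * r ^ n) hsumr
          (fun n => ?_) ?_
        · exact ((httend.pow n).const_mul _)
        · refine Filter.Eventually.of_forall fun j n => ?_
          rw [Real.norm_of_nonneg (mul_nonneg (hy n) (pow_nonneg (htpos j).le n))]
          exact mul_le_mul_of_nonneg_left (pow_le_pow_left₀ (htpos j).le (htlt j).le n) (hy n)
      refine summable_of_sum_range_le (c := Y/(r/2))
        (fun k => mul_nonneg (ha k) (pow_nonneg hYnn k)) fun N => ?_
      have hbnd : ∀ j, ∑ k ∈ Finset.range N, a k * (∑' n, y n * (t j) ^ n) ^ k ≤ Y/(r/2) := by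
        intro j
        have htrad : ENNReal.ofReal (t j) < radiusOf y := by
          rw [hrad]
          exact (ENNReal.ofReal_lt_ofReal_iff_of_nonneg (htpos j).le).mpr (htlt j)
        obtain ⟨hsm, hid⟩ := hreal (t j) (htpos j) htrad
        have hle1 : ∑ k ∈ Finset.range N, a k * (∑' n, y n * (t j) ^ n) ^ k ≤
            ∑' k, a k * (∑' n, y n * (t j) ^ n) ^ k := by
          refine Summable.sum_le_tsum _ (fun k _ => ?_) hsm
          exact mul_nonneg (ha k) (pow_nonneg (tsum_nonneg fun n =>
            mul_nonneg (hy n) (pow_nonneg (htpos j).le n)) k)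
        have hS : ∑' k, a k * (∑' n, y n * (t j) ^ n) ^ k = (∑' n, y n * (t j) ^ n) / t j := by
          rw [eq_div_iff (ne_of_gt (htpos j))]
          linarith [hid]
        refine hle1.trans ?_
        rw [hS]
        exact div_le_div₀ hYnn (hTjY j) (by linarith) (htge j)
      have hlim : Filter.Tendsto
          (fun j => ∑ k ∈ Finset.range N, a k * (∑' n, y n * (t j) ^ n) ^ k) Filter.atTop
          (𝓝 (∑ k ∈ Finset.range N, a k * Y ^ k)) := by
        refine tendsto_finset_sum _ fun k _ => ?_
        exact ((hyt_tend.pow k).const_mul _)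
      exact le_of_tendsto hlim (Filter.Eventually.of_forall hbnd)
    have hAcont : ContinuousOn (sumFun a) (Metric.closedBall (0:ℂ) Y) := by
      refine continuousOn_tsum (f := fun k w => (a k : ℂ) * w ^ k)
        (fun i => (continuousOn_const.mul ((continuous_pow i).continuousOn))) hsumaY ?_
      intro n z hz
      rw [Metric.mem_closedBall, dist_zero_right] at hz
      rw [norm_mul, norm_pow, Complex.norm_real, Real.norm_of_nonneg (ha n)]
      exact mul_le_mul_of_nonneg_left (pow_le_pow_left₀ (norm_nonneg z) hz n) (ha n)
    have hclsub : closure (sumFun y '' discOf y) ⊆ Metric.closedBall 0 Y :=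
      closure_minimal himgsub Metric.isClosed_closedBall
    have hAnecl : ∀ w ∈ closure (sumFun y '' discOf y), sumFun a w ≠ 0 := by
      intro w hw h0
      obtain ⟨x, hx, hxw⟩ := mem_closure_iff_seq_limit.mp hw
      have hxball : ∀ j, x j ∈ Metric.closedBall (0:ℂ) Y := fun j => himgsub (hx j)
      have hAx : Filter.Tendsto (fun j => sumFun a (x j)) Filter.atTop (𝓝 (sumFun a w)) := by
        have hcw : ContinuousWithinAt (sumFun a) (Metric.closedBall (0:ℂ) Y) w :=
          hAcont w (hclsub hw)
        exact hcw.tendsto.comp (tendsto_nhdsWithin_of_tendsto_nhds_of_eventually_within x hxw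
          (Filter.Eventually.of_forall hxball))
      have hxnorm : ∀ j, ‖x j‖ ≤ r * ‖sumFun a (x j)‖ := by
        intro j
        obtain ⟨z, hz, hzx⟩ := hx j
        rw [← hzx]
        conv_lhs => rw [hkey z hz]
        rw [norm_mul]
        exact mul_le_mul_of_nonneg_right (hznorm z hz).le (norm_nonneg _)
      have hx0 : Filter.Tendsto x Filter.atTop (𝓝 0) := by
        have h2 : Filter.Tendsto (fun j => r * ‖sumFun a (x j)‖) Filter.atTop
            (𝓝 (r * ‖sumFun a w‖)) := (hAx.norm.const_mul r)
        rw [h0, norm_zero, mul_zero] at h2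
        have h3 : Filter.Tendsto (fun j => ‖x j‖) Filter.atTop (𝓝 0) :=
          squeeze_zero (fun j => norm_nonneg _) hxnorm h2
        exact tendsto_zero_iff_norm_tendsto_zero.mpr h3
      have hweq : w = 0 := tendsto_nhds_unique hxw hx0
      rw [hweq, hAzero] at h0
      exact one_ne_zero h0
    have hψcont : ContinuousOn (fun w => w / sumFun a w) (closure (sumFun y '' discOf y)) :=
      ContinuousOn.div continuousOn_id (hAcont.mono hclsub) hAnecl
    refine ⟨hYc1, hψcont, ?_⟩
    intro z hzr
    set zf : ℕ → ℂ := fun j => ((ε j : ℝ) : ℂ) * z with hzfdef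
    have hzfnorm : ∀ j, ‖zf j‖ = ε j * r := by
      intro j
      rw [hzfdef]
      dsimp only
      rw [norm_mul, Complex.norm_real, Real.norm_of_nonneg (hε0 j).le, hzr]
    have hzfmem : ∀ j, zf j ∈ discOf y := by
      intro j
      show (‖zf j‖₊ : ℝ≥0∞) < radiusOf y
      rw [hrad, ← ENNReal.ofReal_coe_nnreal, coe_nnnorm, hzfnorm j]
      refine (ENNReal.ofReal_lt_ofReal_iff hrpos).mpr ?_
      have := mul_lt_mul_of_pos_right (hε1 j) hrpos
      linarith
    have hzfball : ∀ j, zf j ∈ Metric.closedBall (0:ℂ) r := by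
      intro j
      rw [Metric.mem_closedBall, dist_zero_right, hzfnorm j]
      have := mul_lt_mul_of_pos_right (hε1 j) hrpos
      linarith
    have hzball : z ∈ Metric.closedBall (0:ℂ) r := by
      rw [Metric.mem_closedBall, dist_zero_right, hzr]
    have hzftend : Filter.Tendsto zf Filter.atTop (𝓝 z) := by
      have h1 : Filter.Tendsto (fun j => ((ε j : ℝ) : ℂ)) Filter.atTop (𝓝 ((1:ℝ):ℂ)) :=
        (Complex.continuous_ofReal.tendsto 1).comp hεtend
      have := h1.mul (tendsto_const_nhds (x := z) (f := Filter.atTop (α := ℕ)))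
      simpa using this
    have hyz : Filter.Tendsto (fun j => sumFun y (zf j)) Filter.atTop (𝓝 (sumFun y z)) := by
      have hcw : ContinuousWithinAt (sumFun y) (Metric.closedBall (0:ℂ) r) z := hYc1 z hzball
      exact hcw.tendsto.comp (tendsto_nhdsWithin_of_tendsto_nhds_of_eventually_within zf hzftend
        (Filter.Eventually.of_forall hzfball))
    have hwcl : sumFun y z ∈ closure (sumFun y '' discOf y) :=
      mem_closure_of_tendsto hyz
        (Filter.Eventually.of_forall fun j => Set.mem_image_of_mem _ (hzfmem j))
    have hψw : Filter.Tendsto (fun j => sumFun y (zf j) / sumFun a (sumFun y (zf j)))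
        Filter.atTop (𝓝 (sumFun y z / sumFun a (sumFun y z))) := by
      have hcw : ContinuousWithinAt (fun w => w / sumFun a w)
          (closure (sumFun y '' discOf y)) (sumFun y z) := hψcont _ hwcl
      exact hcw.tendsto.comp (tendsto_nhdsWithin_of_tendsto_nhds_of_eventually_within _ hyz
        (Filter.Eventually.of_forall fun j =>
          subset_closure (Set.mem_image_of_mem _ (hzfmem j))))
    have hψz : ∀ j, sumFun y (zf j) / sumFun a (sumFun y (zf j)) = zf j :=
      fun j => hpsi _ (hzfmem j)
    exact tendsto_nhds_unique ((Filter.Tendsto.congr hψz) hψw) hzftend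
end

section
/- Suppose the power series A(x) = 1 + ∑_{n≥1} a_n xⁿ and y(x) = ∑_{n≥1} y_n xⁿ over ℝ, with radii of convergence R and r respectively, satisfy: (1) R > 0 and a_n ≥ 0 for all n ≥ 1; (2) A and y are related as formal power series by y(x) = xA(y(x)). If y(r) < R ≤ ∞ (where y(r) = ∑ y_n rⁿ), then A(z) − z·A′(z) vanishes at z = y(r), i.e., A(y(r)) − y(r)·A′(y(r)) = 0. -/
open Filter
open scoped BigOperators NNReal ENNReal

open scoped NNReal ENNReal in
/-- The value (in `[0,∞]`) of the power series with nonnegative coefficients `c` at its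
radius of convergence `r`, i.e. `∑ᵢ cᵢ rⁱ = sup_{t ≤ r} ∑ᵢ cᵢ tⁱ` (a supremum which also
makes sense when `r = ∞`). -/
noncomputable def sumAtRadius (c : ℕ → ℝ) : ℝ≥0∞ :=
  ⨆ (t : ℝ≥0) (_ : (t : ℝ≥0∞) ≤ radiusOf c), ∑' i : ℕ, ENNReal.ofReal (c i * (t : ℝ) ^ i)

set_option maxHeartbeats 1000000

namespace VanishAux
open PowerSeries

lemma coeff_pow_nonneg {f : PowerSeries ℝ} (hf : ∀ n, 0 ≤ coeff n f) (k m : ℕ) :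
    0 ≤ coeff m (f ^ k) := by
  induction k generalizing m with
  | zero => rw [pow_zero, PowerSeries.coeff_one]; split <;> norm_num
  | succ k ih =>
    rw [pow_succ, PowerSeries.coeff_mul]
    exact Finset.sum_nonneg fun p _ => mul_nonneg (ih p.1) (hf p.2)

lemma coeff_pow_congr {f g : PowerSeries ℝ} {N : ℕ}
    (h : ∀ m < N, coeff m f = coeff m g) (k : ℕ) :
    ∀ m < N, coeff m (f ^ k) = coeff m (g ^ k) := by
  have hd : (X : PowerSeries ℝ) ^ N ∣ f - g := by
    rw [X_pow_dvd_iff]; intro m hm; rw [map_sub, h m hm, sub_self]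
  have hd2 : (X : PowerSeries ℝ) ^ N ∣ f ^ k - g ^ k :=
    hd.trans (sub_dvd_pow_sub_pow f g k)
  intro m hm
  have := (X_pow_dvd_iff.1 hd2) m hm
  rw [map_sub, sub_eq_zero] at this
  exact this

lemma coeff_pow_eq_zero {f : PowerSeries ℝ} (hf : constantCoeff f = 0) {k m : ℕ}
    (hm : m < k) : coeff m (f ^ k) = 0 := by
  have : (X : PowerSeries ℝ) ^ k ∣ f ^ k :=
    pow_dvd_pow_of_dvd (PowerSeries.X_dvd_iff.2 hf) k
  exact (X_pow_dvd_iff.1 this) m hm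

section Rec

variable {a y : ℕ → ℝ}
    (hcomp : PowerSeries.mk y =
      PowerSeries.X * pscomp (PowerSeries.mk a) (PowerSeries.mk y))

include hcomp in
lemma y_rec (n : ℕ) :
    y (n + 1) = ∑ k ∈ Finset.range (n + 1), a k * coeff n ((PowerSeries.mk y) ^ k) := by
  have := congrArg (coeff (n + 1)) hcomp
  rw [PowerSeries.coeff_mk, PowerSeries.coeff_succ_X_mul] at this
  rw [this, pscomp, PowerSeries.coeff_mk]
  exact Finset.sum_congr rfl fun k _ => by rw [PowerSeries.coeff_mk]

include hcomp in
lemma y_nonneg (ha : ∀ n, 0 ≤ a n) (hy0 : y 0 = 0) : ∀ n, 0 ≤ y n := by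
  intro n
  induction n using Nat.strong_induction_on with
  | _ n ih =>
    match n with
    | 0 => rw [hy0]
    | Nat.succ n =>
      rw [y_rec hcomp]
      apply Finset.sum_nonneg
      intro k _
      apply mul_nonneg (ha k)
      set z : PowerSeries ℝ := PowerSeries.mk (fun i => if i < n + 1 then y i else 0) with hz
      have hcong : ∀ m < n + 1, coeff m (PowerSeries.mk y) = coeff m z := by
        intro m hm; rw [hz, PowerSeries.coeff_mk, PowerSeries.coeff_mk, if_pos hm]
      rw [coeff_pow_congr hcong k n (Nat.lt_succ_self n)]
      apply coeff_pow_nonneg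
      intro i
      rw [hz, PowerSeries.coeff_mk]
      split
      · exact ih i (by omega)
      · exact le_refl 0

include hcomp in
lemma y_one (ha0 : a 0 = 1) : y 1 = 1 := by
  have := y_rec hcomp 0
  simpa [ha0] using this

end Rec
/-- convexity-type bound `s^n - ρ^n ≤ n s^(n-1) (s - ρ)` for nonneg reals. -/
lemma pow_sub_pow_le {s ρ : ℝ} (hs : 0 ≤ s) (hρ : 0 ≤ ρ) (n : ℕ) :
    s ^ n - ρ ^ n ≤ (n : ℝ) * s ^ (n - 1) * (s - ρ) := by
  cases n with
  | zero => simp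
  | succ n =>
    have hgeom := geom_sum₂_mul s ρ (n + 1)
    rw [← hgeom]
    simp only [Nat.add_sub_cancel]
    rcases le_total ρ s with h | h
    · have hb : (∑ i ∈ Finset.range (n + 1), s ^ i * ρ ^ (n - i)) ≤ (n + 1 : ℝ) * s ^ n := by
        calc (∑ i ∈ Finset.range (n + 1), s ^ i * ρ ^ (n - i))
            ≤ ∑ i ∈ Finset.range (n + 1), s ^ n := by
              apply Finset.sum_le_sum
              intro i hi
              rw [Finset.mem_range] at hi
              calc s ^ i * ρ ^ (n - i) ≤ s ^ i * s ^ (n - i) := by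
                    apply mul_le_mul_of_nonneg_left (pow_le_pow_left₀ hρ h _) (pow_nonneg hs _)
                _ = s ^ n := by rw [← pow_add]; congr 1; omega
          _ = (n + 1 : ℝ) * s ^ n := by
              rw [Finset.sum_const, Finset.card_range]; push_cast; ring
      have := mul_le_mul_of_nonneg_right hb (sub_nonneg.2 h)
      calc (∑ i ∈ Finset.range (n + 1), s ^ i * ρ ^ (n + 1 - 1 - i)) * (s - ρ)
          = (∑ i ∈ Finset.range (n + 1), s ^ i * ρ ^ (n - i)) * (s - ρ) := by norm_num
        _ ≤ (n + 1 : ℝ) * s ^ n * (s - ρ) := this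
        _ = (↑(n + 1) : ℝ) * s ^ n * (s - ρ) := by push_cast; ring
    · have hb : (n + 1 : ℝ) * s ^ n ≤ (∑ i ∈ Finset.range (n + 1), s ^ i * ρ ^ (n - i)) := by
        calc (n + 1 : ℝ) * s ^ n = ∑ _i ∈ Finset.range (n + 1), s ^ n := by
              rw [Finset.sum_const, Finset.card_range]; push_cast; ring
          _ ≤ ∑ i ∈ Finset.range (n + 1), s ^ i * ρ ^ (n - i) := by
              apply Finset.sum_le_sum
              intro i hi
              rw [Finset.mem_range] at hi
              calc s ^ n = s ^ i * s ^ (n - i) := by rw [← pow_add]; congr 1; omega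
                _ ≤ s ^ i * ρ ^ (n - i) := by
                    apply mul_le_mul_of_nonneg_left (pow_le_pow_left₀ hs h _) (pow_nonneg hs _)
      have := mul_le_mul_of_nonpos_right hb (sub_nonpos.2 h)
      calc (∑ i ∈ Finset.range (n + 1), s ^ i * ρ ^ (n + 1 - 1 - i)) * (s - ρ)
          = (∑ i ∈ Finset.range (n + 1), s ^ i * ρ ^ (n - i)) * (s - ρ) := by norm_num
        _ ≤ (n + 1 : ℝ) * s ^ n * (s - ρ) := this
        _ = (↑(n + 1) : ℝ) * s ^ n * (s - ρ) := by push_cast; ring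

/-- if `ofReal x < radiusOf c` then the series is (absolutely) summable at `x ≥ 0`. -/
lemma summable_of_lt_radius {c : ℕ → ℝ} {x : ℝ} (hx : 0 ≤ x)
    (h : ENNReal.ofReal x < radiusOf c) : Summable fun n : ℕ => |c n| * x ^ n := by
  rw [radiusOf, lt_iSup_iff] at h
  obtain ⟨t, ht⟩ := h
  by_cases hs : Summable fun n : ℕ => |c n| * (t : ℝ) ^ n
  · rw [iSup_pos hs] at ht
    have hxt : x ≤ (t : ℝ) := by
      by_contra hcon
      push_neg at hcon
      have : (t : ℝ≥0∞) ≤ ENNReal.ofReal x := by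
        rw [← ENNReal.ofReal_coe_nnreal]
        exact ENNReal.ofReal_le_ofReal hcon.le
      exact absurd ht (not_lt.2 this)
    apply hs.of_nonneg_of_le (fun n => mul_nonneg (abs_nonneg _) (pow_nonneg hx _))
    intro n
    exact mul_le_mul_of_nonneg_left (pow_le_pow_left₀ hx hxt n) (abs_nonneg _)
  · rw [iSup_neg hs] at ht
    exact absurd ht (by simp)

lemma le_radius_of_summable {c : ℕ → ℝ} {x : ℝ} (hx : 0 ≤ x)
    (h : Summable fun n : ℕ => |c n| * x ^ n) : ENNReal.ofReal x ≤ radiusOf c := by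
  have hco : ((x.toNNReal : ℝ≥0) : ℝ) = x := Real.coe_toNNReal x hx
  have h' : Summable fun n : ℕ => |c n| * ((x.toNNReal : ℝ≥0) : ℝ) ^ n := by rwa [hco]
  calc ENNReal.ofReal x = ((x.toNNReal : ℝ≥0) : ℝ≥0∞) := rfl
    _ ≤ radiusOf c := le_iSup_of_le x.toNNReal (le_iSup_of_le h' le_rfl)

/-- summability of the derivative series strictly inside the disk of summability. -/
lemma summable_deriv {c : ℕ → ℝ} (hc : ∀ n, 0 ≤ c n) {x t : ℝ} (hx : 0 ≤ x) (hxt : x < t)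
    (ht : Summable fun n : ℕ => c n * t ^ n) :
    Summable fun n : ℕ => (n : ℝ) * c n * x ^ (n - 1) := by
  rcases eq_or_lt_of_le hx with hx0 | hx0
  · apply summable_of_ne_finset_zero (s := Finset.range 2)
    intro n hn
    rw [Finset.mem_range, not_lt] at hn
    rw [← hx0]
    have : (0:ℝ) ^ (n - 1) = 0 := by
      apply zero_pow; omega
    rw [this, mul_zero]
  · have htpos : 0 < t := lt_trans hx0 hxt
    -- bound c n * t^n
    obtain ⟨M, hM⟩ := ht.tendsto_atTop_zero.bddAbove_range
    have hMnn : ∀ n, c n * t ^ n ≤ M := fun n => hM ⟨n, rfl⟩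
    set q := x / t with hq
    have hq0 : 0 ≤ q := div_nonneg hx htpos.le
    have hq1 : q < 1 := (div_lt_one htpos).2 hxt
    have hgeo : Summable fun n : ℕ => (n : ℝ) * q ^ n := by
      simpa using summable_pow_mul_geometric_of_norm_lt_one 1
        (by rwa [Real.norm_eq_abs, abs_of_nonneg hq0])
    have hgeo' : Summable fun n : ℕ => (M / x) * ((n : ℝ) * q ^ n) := hgeo.mul_left _
    apply hgeo'.of_nonneg_of_le
    · intro n
      exact mul_nonneg (mul_nonneg (Nat.cast_nonneg n) (hc n)) (pow_nonneg hx _)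
    · intro n
      cases n with
      | zero => simp
      | succ n =>
        have key : (↑(n+1) : ℝ) * c (n+1) * x ^ n = (c (n+1) * t ^ (n+1)) * ((↑(n+1) : ℝ) * q ^ (n+1)) / x := by
          rw [hq, div_pow]
          field_simp
          ring
        calc (↑(n+1) : ℝ) * c (n+1) * x ^ (n + 1 - 1)
            = (c (n+1) * t ^ (n+1)) * ((↑(n+1) : ℝ) * q ^ (n+1)) / x := by
              simpa using key
          _ ≤ M * ((↑(n+1) : ℝ) * q ^ (n+1)) / x := by
              gcongr
              exact hMnn (n+1)
          _ = M / x * ((↑(n+1) : ℝ) * q ^ (n+1)) := by ring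

/-- partial sums of coefficients of a product of nonneg power series. -/
lemma sum_coeff_mul_le {f g : PowerSeries ℝ} (hf : ∀ n, 0 ≤ coeff n f)
    (hg : ∀ n, 0 ≤ coeff n g) {x : ℝ} (hx : 0 ≤ x) (N : ℕ) :
    ∑ m ∈ Finset.range N, coeff m (f * g) * x ^ m ≤
      (∑ m ∈ Finset.range N, coeff m f * x ^ m) * (∑ m ∈ Finset.range N, coeff m g * x ^ m) := by
  have hexp : ∀ m, coeff m (f * g) * x ^ m =
      ∑ p ∈ Finset.HasAntidiagonal.antidiagonal m, (coeff p.1 f * x ^ p.1) * (coeff p.2 g * x ^ p.2) := by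
    intro m
    rw [PowerSeries.coeff_mul, Finset.sum_mul]
    apply Finset.sum_congr rfl
    intro p hp
    rw [Finset.HasAntidiagonal.mem_antidiagonal] at hp
    rw [← hp, pow_add]
    ring
  rw [Finset.sum_congr rfl (fun m _ => hexp m), Finset.sum_mul_sum, ← Finset.sum_product']
  -- rewrite LHS as a sum over a biUnion of antidiagonals
  rw [← Finset.sum_biUnion]
  · apply Finset.sum_le_sum_of_subset_of_nonneg
    · intro p hp
      rw [Finset.mem_biUnion] at hp
      obtain ⟨m, hm, hpm⟩ := hp
      rw [Finset.HasAntidiagonal.mem_antidiagonal] at hpm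
      rw [Finset.mem_range] at hm
      rw [Finset.mem_product, Finset.mem_range, Finset.mem_range]
      omega
    · intro p _ _
      exact mul_nonneg (mul_nonneg (hf _) (pow_nonneg hx _))
        (mul_nonneg (hg _) (pow_nonneg hx _))
  · intro m _ m' _ hmm'
    apply Finset.disjoint_left.2
    intro p hp hp'
    rw [Finset.HasAntidiagonal.mem_antidiagonal] at hp hp'
    exact hmm' (hp ▸ hp')

lemma sum_coeff_pow_le {y : ℕ → ℝ} (hy : ∀ n, 0 ≤ y n) {x : ℝ} (hx : 0 ≤ x) (N k : ℕ) :
    ∑ m ∈ Finset.range N, coeff m ((PowerSeries.mk y) ^ k) * x ^ m ≤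
      (∑ m ∈ Finset.range N, y m * x ^ m) ^ k := by
  have hyc : ∀ n, 0 ≤ coeff n (PowerSeries.mk y) := fun n => by
    rw [PowerSeries.coeff_mk]; exact hy n
  induction k with
  | zero =>
    simp only [pow_zero, PowerSeries.coeff_one]
    cases N with
    | zero => simp
    | succ N =>
      rw [Finset.sum_eq_single 0 (fun b _ hb => by simp [hb])
        (fun h => absurd (Finset.mem_range.2 (Nat.succ_pos N)) h)]
      simp
  | succ k ih =>
    rw [pow_succ, pow_succ]
    calc ∑ m ∈ Finset.range N, coeff m ((PowerSeries.mk y) ^ k * PowerSeries.mk y) * x ^ m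
        ≤ (∑ m ∈ Finset.range N, coeff m ((PowerSeries.mk y) ^ k) * x ^ m) *
            (∑ m ∈ Finset.range N, coeff m (PowerSeries.mk y) * x ^ m) := by
          apply sum_coeff_mul_le (fun n => coeff_pow_nonneg hyc k n) hyc hx
      _ ≤ (∑ m ∈ Finset.range N, y m * x ^ m) ^ k * (∑ m ∈ Finset.range N, y m * x ^ m) := by
          apply mul_le_mul ih
          · apply le_of_eq; apply Finset.sum_congr rfl; intro m _; rw [PowerSeries.coeff_mk]
          · apply Finset.sum_nonneg; intro m _;
            exact mul_nonneg (hyc m) (pow_nonneg hx _)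
          · exact pow_nonneg (Finset.sum_nonneg fun m _ => mul_nonneg (hy m) (pow_nonneg hx _)) k


section Major

variable {a y : ℕ → ℝ}

lemma partial_le (ha : ∀ n, 0 ≤ a n) (ha0 : a 0 = 1) (hy : ∀ n, 0 ≤ y n) (hy0 : y 0 = 0)
    (hcomp : PowerSeries.mk y =
      PowerSeries.X * pscomp (PowerSeries.mk a) (PowerSeries.mk y))
    {s : ℝ} (hs : 0 ≤ s) (hsum : Summable fun n : ℕ => a n * s ^ n) :
    ∀ N, ∑ n ∈ Finset.range N, y n * (s / ∑' n : ℕ, a n * s ^ n) ^ n ≤ s := by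
  set AV : ℝ := ∑' n : ℕ, a n * s ^ n with hAV
  have hterm : ∀ n : ℕ, 0 ≤ a n * s ^ n := fun n => mul_nonneg (ha n) (pow_nonneg hs n)
  have hAV1 : 1 ≤ AV := by
    have := Summable.le_tsum hsum 0 (fun i _ => hterm i)
    simpa [ha0] using this
  have hAVpos : 0 < AV := lt_of_lt_of_le one_pos hAV1
  set x : ℝ := s / AV with hxdef
  have hx0 : 0 ≤ x := div_nonneg hs hAVpos.le
  have hxAV : x * AV = s := div_mul_cancel₀ s hAVpos.ne'
  intro N
  induction N with
  | zero => simpa using hs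
  | succ N ih =>
    have hcnn : ∀ k m, 0 ≤ coeff m ((PowerSeries.mk y) ^ k) := fun k m =>
      coeff_pow_nonneg (fun n => by rw [PowerSeries.coeff_mk]; exact hy n) k m
    have hSnn : 0 ≤ ∑ m ∈ Finset.range N, y m * x ^ m :=
      Finset.sum_nonneg fun m _ => mul_nonneg (hy m) (pow_nonneg hx0 _)
    calc ∑ n ∈ Finset.range (N + 1), y n * x ^ n
        = (∑ m ∈ Finset.range N, y (m + 1) * x ^ (m + 1)) + y 0 * x ^ 0 :=
          Finset.sum_range_succ' _ N
      _ = ∑ m ∈ Finset.range N,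
            x * ∑ k ∈ Finset.range (m + 1), (a k * coeff m ((PowerSeries.mk y) ^ k)) * x ^ m := by
          rw [hy0, zero_mul, add_zero]
          apply Finset.sum_congr rfl
          intro m _
          rw [y_rec hcomp m, Finset.mul_sum, Finset.sum_mul]
          exact Finset.sum_congr rfl fun k _ => by ring
      _ ≤ ∑ m ∈ Finset.range N,
            x * ∑ k ∈ Finset.range N, (a k * coeff m ((PowerSeries.mk y) ^ k)) * x ^ m := by
          apply Finset.sum_le_sum
          intro m hm
          apply mul_le_mul_of_nonneg_left ?_ hx0
          apply Finset.sum_le_sum_of_subset_of_nonneg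
          · apply Finset.range_subset_range.2
            rw [Finset.mem_range] at hm
            omega
          · intro k _ _
            exact mul_nonneg (mul_nonneg (ha k) (hcnn k m)) (pow_nonneg hx0 _)
      _ = x * ∑ k ∈ Finset.range N,
            a k * ∑ m ∈ Finset.range N, coeff m ((PowerSeries.mk y) ^ k) * x ^ m := by
          rw [← Finset.mul_sum, Finset.sum_comm]
          congr 1
          apply Finset.sum_congr rfl
          intro k _
          rw [Finset.mul_sum]
          exact Finset.sum_congr rfl fun m _ => by ring
      _ ≤ x * ∑ k ∈ Finset.range N, a k * s ^ k := by
          apply mul_le_mul_of_nonneg_left ?_ hx0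
          apply Finset.sum_le_sum
          intro k _
          apply mul_le_mul_of_nonneg_left ?_ (ha k)
          calc ∑ m ∈ Finset.range N, coeff m ((PowerSeries.mk y) ^ k) * x ^ m
              ≤ (∑ m ∈ Finset.range N, y m * x ^ m) ^ k := sum_coeff_pow_le hy hx0 N k
            _ ≤ s ^ k := pow_le_pow_left₀ hSnn ih k
      _ ≤ x * AV := by
          apply mul_le_mul_of_nonneg_left ?_ hx0
          exact Summable.sum_le_tsum (Finset.range N) (fun i _ => hterm i) hsum
      _ = s := hxAV

lemma radius_ge (ha : ∀ n, 0 ≤ a n) (ha0 : a 0 = 1) (hy : ∀ n, 0 ≤ y n) (hy0 : y 0 = 0)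
    (hcomp : PowerSeries.mk y =
      PowerSeries.X * pscomp (PowerSeries.mk a) (PowerSeries.mk y))
    {s : ℝ} (hs : 0 ≤ s) (hsum : Summable fun n : ℕ => a n * s ^ n) :
    ENNReal.ofReal (s / ∑' n : ℕ, a n * s ^ n) ≤ radiusOf y := by
  set x : ℝ := s / ∑' n : ℕ, a n * s ^ n with hxdef
  have hAVpos : (0:ℝ) < ∑' n : ℕ, a n * s ^ n := by
    have hterm : ∀ n : ℕ, 0 ≤ a n * s ^ n := fun n => mul_nonneg (ha n) (pow_nonneg hs n)
    have := Summable.le_tsum hsum 0 (fun i _ => hterm i)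
    simp only [ha0, pow_zero, mul_one] at this
    linarith
  have hx0 : 0 ≤ x := div_nonneg hs hAVpos.le
  have hsummy : Summable fun n : ℕ => y n * x ^ n := by
    apply summable_of_sum_range_le (c := s)
      (fun n => mul_nonneg (hy n) (pow_nonneg hx0 _))
    exact partial_le ha ha0 hy hy0 hcomp hs hsum
  apply le_radius_of_summable hx0
  apply hsummy.congr
  intro n
  rw [abs_of_nonneg (hy n)]

end Major

section FunEq

variable {a y : ℕ → ℝ}
    (hcomp : PowerSeries.mk y =
      PowerSeries.X * pscomp (PowerSeries.mk a) (PowerSeries.mk y))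

/-- value of powers of the series `y` at a point of summability. -/
lemma pow_val (hy : ∀ n, 0 ≤ y n) {x : ℝ} (hx : 0 ≤ x)
    (hsummy : Summable fun n : ℕ => y n * x ^ n) (k : ℕ) :
    (Summable fun m : ℕ => coeff m ((PowerSeries.mk y) ^ k) * x ^ m) ∧
      (∑' m : ℕ, coeff m ((PowerSeries.mk y) ^ k) * x ^ m) = (∑' n : ℕ, y n * x ^ n) ^ k := by
  have hcnn : ∀ k m, 0 ≤ coeff m ((PowerSeries.mk y) ^ k) := fun k m =>
    coeff_pow_nonneg (fun n => by rw [PowerSeries.coeff_mk]; exact hy n) k m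
  induction k with
  | zero =>
    constructor
    · apply summable_of_ne_finset_zero (s := {0})
      intro m hm
      simp only [Finset.mem_singleton] at hm
      rw [pow_zero, PowerSeries.coeff_one, if_neg hm, zero_mul]
    · rw [pow_zero, tsum_eq_single 0 (fun b hb => by
        rw [PowerSeries.coeff_one, if_neg hb, zero_mul])]
      simp
  | succ k ih =>
    obtain ⟨ihs, ihv⟩ := ih
    have hfn : Summable fun m : ℕ => ‖coeff m ((PowerSeries.mk y) ^ k) * x ^ m‖ := by
      apply ihs.congr
      intro m
      rw [Real.norm_of_nonneg (mul_nonneg (hcnn k m) (pow_nonneg hx m))]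
    have hgn : Summable fun m : ℕ => ‖y m * x ^ m‖ := by
      apply hsummy.congr
      intro m
      rw [Real.norm_of_nonneg (mul_nonneg (hy m) (pow_nonneg hx m))]
    have hmul := tsum_mul_tsum_eq_tsum_sum_antidiagonal_of_summable_norm hfn hgn
    have hsum2 : Summable fun n : ℕ => ∑ kl ∈ Finset.HasAntidiagonal.antidiagonal n,
        (coeff kl.1 ((PowerSeries.mk y) ^ k) * x ^ kl.1) * (y kl.2 * x ^ kl.2) :=
      (summable_norm_sum_mul_antidiagonal_of_summable_norm hfn hgn).of_norm
    have hco : ∀ n : ℕ, ∑ kl ∈ Finset.HasAntidiagonal.antidiagonal n,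
        (coeff kl.1 ((PowerSeries.mk y) ^ k) * x ^ kl.1) * (y kl.2 * x ^ kl.2)
        = coeff n ((PowerSeries.mk y) ^ (k + 1)) * x ^ n := by
      intro n
      rw [pow_succ, PowerSeries.coeff_mul, Finset.sum_mul]
      apply Finset.sum_congr rfl
      intro p hp
      rw [Finset.HasAntidiagonal.mem_antidiagonal] at hp
      rw [PowerSeries.coeff_mk, ← hp, pow_add]
      ring
    constructor
    · exact (hsum2.congr hco)
    · calc ∑' m : ℕ, coeff m ((PowerSeries.mk y) ^ (k+1)) * x ^ m
          = ∑' n : ℕ, ∑ kl ∈ Finset.HasAntidiagonal.antidiagonal n,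
              (coeff kl.1 ((PowerSeries.mk y) ^ k) * x ^ kl.1) * (y kl.2 * x ^ kl.2) :=
            (tsum_congr hco).symm
        _ = (∑' m : ℕ, coeff m ((PowerSeries.mk y) ^ k) * x ^ m) * ∑' n : ℕ, y n * x ^ n :=
            hmul.symm
        _ = (∑' n : ℕ, y n * x ^ n) ^ k * ∑' n : ℕ, y n * x ^ n := by rw [ihv]
        _ = (∑' n : ℕ, y n * x ^ n) ^ (k + 1) := (pow_succ _ k).symm

include hcomp in
/-- the functional equation `y(x) = x·A(y(x))` at a point of summability. -/
lemma funeq (ha : ∀ n, 0 ≤ a n) (hy : ∀ n, 0 ≤ y n) (hy0 : y 0 = 0)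
    {x : ℝ} (hx : 0 < x) (hsummy : Summable fun n : ℕ => y n * x ^ n)
    (hsA : Summable fun k : ℕ => a k * (∑' n : ℕ, y n * x ^ n) ^ k) :
    (∑' n : ℕ, y n * x ^ n) = x * ∑' k : ℕ, a k * (∑' n : ℕ, y n * x ^ n) ^ k := by
  set ρ := ∑' n : ℕ, y n * x ^ n with hρ
  have hcnn : ∀ k m, 0 ≤ coeff m ((PowerSeries.mk y) ^ k) := fun k m =>
    coeff_pow_nonneg (fun n => by rw [PowerSeries.coeff_mk]; exact hy n) k m
  have hpows := pow_val hy hx.le hsummy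
  have htermnn : ∀ k m : ℕ, 0 ≤ coeff m ((PowerSeries.mk y) ^ k) * x ^ m :=
    fun k m => mul_nonneg (hcnn k m) (pow_nonneg hx.le m)
  -- ENNReal double sum, summed in two orders
  have hsw : (∑' k : ℕ, ∑' m : ℕ,
        ENNReal.ofReal (a k * (coeff m ((PowerSeries.mk y) ^ k) * x ^ m)))
      = ∑' m : ℕ, ∑' k : ℕ,
        ENNReal.ofReal (a k * (coeff m ((PowerSeries.mk y) ^ k) * x ^ m)) :=
    ENNReal.tsum_comm
  -- left side
  have hleft : ∀ k : ℕ, (∑' m : ℕ,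
      ENNReal.ofReal (a k * (coeff m ((PowerSeries.mk y) ^ k) * x ^ m)))
      = ENNReal.ofReal (a k * ρ ^ k) := by
    intro k
    calc (∑' m : ℕ, ENNReal.ofReal (a k * (coeff m ((PowerSeries.mk y) ^ k) * x ^ m)))
        = ∑' m : ℕ, ENNReal.ofReal (a k) *
            ENNReal.ofReal (coeff m ((PowerSeries.mk y) ^ k) * x ^ m) :=
          tsum_congr fun m => ENNReal.ofReal_mul (ha k)
      _ = ENNReal.ofReal (a k) *
            ∑' m : ℕ, ENNReal.ofReal (coeff m ((PowerSeries.mk y) ^ k) * x ^ m) :=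
          ENNReal.tsum_mul_left
      _ = ENNReal.ofReal (a k) * ENNReal.ofReal (ρ ^ k) := by
          rw [← ENNReal.ofReal_tsum_of_nonneg (fun m => htermnn k m) (hpows k).1, (hpows k).2]
      _ = ENNReal.ofReal (a k * ρ ^ k) := (ENNReal.ofReal_mul (ha k)).symm
  have hleft' : (∑' k : ℕ, ∑' m : ℕ,
        ENNReal.ofReal (a k * (coeff m ((PowerSeries.mk y) ^ k) * x ^ m)))
      = ENNReal.ofReal (∑' k : ℕ, a k * ρ ^ k) := by
    rw [tsum_congr hleft,
      ENNReal.ofReal_tsum_of_nonneg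
        (fun k => mul_nonneg (ha k) (pow_nonneg (tsum_nonneg fun n =>
          mul_nonneg (hy n) (pow_nonneg hx.le n)) k)) hsA]
  -- right side
  have hright : ∀ m : ℕ, (∑' k : ℕ,
      ENNReal.ofReal (a k * (coeff m ((PowerSeries.mk y) ^ k) * x ^ m)))
      = ENNReal.ofReal (y (m + 1) * x ^ m) := by
    intro m
    have hy0' : constantCoeff (PowerSeries.mk y) = 0 := by
      rw [← PowerSeries.coeff_zero_eq_constantCoeff, PowerSeries.coeff_mk]
      exact hy0
    have hvanish : ∀ k ∉ Finset.range (m + 1),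
        ENNReal.ofReal (a k * (coeff m ((PowerSeries.mk y) ^ k) * x ^ m)) = 0 := by
      intro k hk
      rw [Finset.mem_range, not_lt] at hk
      rw [coeff_pow_eq_zero hy0' (by omega : m < k), zero_mul, mul_zero, ENNReal.ofReal_zero]
    rw [tsum_eq_sum hvanish, ← ENNReal.ofReal_sum_of_nonneg
      (fun k _ => mul_nonneg (ha k) (htermnn k m))]
    congr 1
    rw [y_rec hcomp m, Finset.sum_mul]
    exact Finset.sum_congr rfl fun k _ => by ring
  -- real summability of the shifted series
  have hsummy1 : Summable fun m : ℕ => y (m + 1) * x ^ (m + 1) :=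
    (summable_nat_add_iff 1).2 hsummy
  have hsummyW : Summable fun m : ℕ => y (m + 1) * x ^ m := by
    apply (hsummy1.mul_right x⁻¹).congr
    intro m
    rw [pow_succ]
    field_simp
  set W := ∑' m : ℕ, y (m + 1) * x ^ m with hW
  have hxW : x * W = ρ := by
    rw [hW, ← tsum_mul_left, hρ, Summable.tsum_eq_zero_add hsummy, hy0, zero_mul, zero_add]
    exact tsum_congr fun m => by ring
  -- combine
  have hfin : ENNReal.ofReal (∑' k : ℕ, a k * ρ ^ k) = ENNReal.ofReal W := by
    rw [← hleft', hsw, tsum_congr hright,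
      ← ENNReal.ofReal_tsum_of_nonneg
        (fun m => mul_nonneg (hy (m + 1)) (pow_nonneg hx.le m)) hsummyW]
  have hWnn : 0 ≤ W := tsum_nonneg fun m => mul_nonneg (hy (m + 1)) (pow_nonneg hx.le m)
  have hAnn : 0 ≤ ∑' k : ℕ, a k * ρ ^ k := tsum_nonneg fun k =>
    mul_nonneg (ha k) (pow_nonneg (tsum_nonneg fun n =>
      mul_nonneg (hy n) (pow_nonneg hx.le n)) k)
  have : (∑' k : ℕ, a k * ρ ^ k) = W := by
    rwa [ENNReal.ofReal_eq_ofReal_iff hAnn hWnn] at hfin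
  rw [this, hxW]

end FunEq

section Final

variable {a y : ℕ → ℝ}

lemma one_le_sumA (ha : ∀ n, 0 ≤ a n) (ha0 : a 0 = 1) {s : ℝ} (hs : 0 ≤ s)
    (hsum : Summable fun n : ℕ => a n * s ^ n) : 1 ≤ ∑' n : ℕ, a n * s ^ n := by
  have := Summable.le_tsum hsum 0 (fun i _ => mul_nonneg (ha i) (pow_nonneg hs i))
  simpa [ha0] using this

lemma radius_le_sum (hy : ∀ n, 0 ≤ y n) (hy1 : y 1 = 1) :
    radiusOf y ≤ sumAtRadius y := by
  apply le_of_forall_lt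
  intro c hc
  obtain ⟨t, hct, htr⟩ := ENNReal.lt_iff_exists_nnreal_btwn.1 hc
  have h1 : ENNReal.ofReal (y 1 * (t : ℝ) ^ 1) = (t : ℝ≥0∞) := by
    rw [hy1, one_mul, pow_one, ENNReal.ofReal_coe_nnreal]
  calc c < (t : ℝ≥0∞) := hct
    _ = ENNReal.ofReal (y 1 * (t : ℝ) ^ 1) := h1.symm
    _ ≤ ∑' i : ℕ, ENNReal.ofReal (y i * (t : ℝ) ^ i) := ENNReal.le_tsum 1
    _ ≤ sumAtRadius y := le_iSup₂_of_le t htr.le le_rfl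

end Final
end VanishAux

open VanishAux

/-- Suppose `A(x) = 1 + ∑_{n≥1} aₙxⁿ` and `y(x) = ∑_{n≥1} yₙxⁿ` are real power series with
radii of convergence `R` and `r`, such that `R > 0`, `aₙ ≥ 0` for `n ≥ 1`, and
`y(x) = x·A(y(x))` as formal power series.  If `y(r) < R ≤ ∞`, then `A(z) − z·A′(z)`
vanishes at `z = y(r)`. -/
theorem vanishing_at_yr (a y : ℕ → ℝ) (ha0 : a 0 = 1) (hy0 : y 0 = 0)
    (hapos : ∀ n : ℕ, 1 ≤ n → 0 ≤ a n)
    (hcomp : PowerSeries.mk y =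
      PowerSeries.X * pscomp (PowerSeries.mk a) (PowerSeries.mk y))
    (hR : 0 < radiusOf a)
    (hlt : sumAtRadius y < radiusOf a) :
    (∑' n : ℕ, a n * (sumAtRadius y).toReal ^ n) -
      (sumAtRadius y).toReal *
        (∑' n : ℕ, (n : ℝ) * a n * (sumAtRadius y).toReal ^ (n - 1)) = 0 := by
  classical
  have ha : ∀ n, 0 ≤ a n := by
    intro n
    cases n with
    | zero => rw [ha0]; norm_num
    | succ n => exact hapos _ (Nat.succ_le_succ (Nat.zero_le _))
  have hy : ∀ n, 0 ≤ y n := y_nonneg hcomp ha hy0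
  have hy1 : y 1 = 1 := y_one hcomp ha0
  -- extract a summability point above sumAtRadius y
  obtain ⟨t₁, hsumt₁, hρt₁⟩ : ∃ t₁ : ℝ≥0,
      (Summable fun n : ℕ => a n * (t₁ : ℝ) ^ n) ∧ sumAtRadius y < (t₁ : ℝ≥0∞) := by
    rw [radiusOf, lt_iSup_iff] at hlt
    obtain ⟨t, ht⟩ := hlt
    by_cases hs : Summable fun n : ℕ => |a n| * (t : ℝ) ^ n
    · rw [iSup_pos hs] at ht
      exact ⟨t, hs.congr (fun n => by rw [abs_of_nonneg (ha n)]), ht⟩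
    · rw [iSup_neg hs] at ht
      exact absurd ht (by simp)
  -- extract a positive summability point
  obtain ⟨t₀, hsumt₀, ht₀pos⟩ : ∃ t₀ : ℝ≥0,
      (Summable fun n : ℕ => a n * (t₀ : ℝ) ^ n) ∧ 0 < t₀ := by
    rw [radiusOf, lt_iSup_iff] at hR
    obtain ⟨t, ht⟩ := hR
    by_cases hs : Summable fun n : ℕ => |a n| * (t : ℝ) ^ n
    · rw [iSup_pos hs] at ht
      exact ⟨t, hs.congr (fun n => by rw [abs_of_nonneg (ha n)]),
        by exact_mod_cast ht⟩
    · rw [iSup_neg hs] at ht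
      exact absurd ht (by simp)
  have hrρ : radiusOf y ≤ sumAtRadius y := radius_le_sum hy hy1
  have hρtop : sumAtRadius y ≠ ⊤ := hρt₁.ne_top
  have hrtop : radiusOf y ≠ ⊤ := by
    intro h
    exact hρtop (top_le_iff.1 (h ▸ hrρ))
  set xs : ℝ := (radiusOf y).toReal with hxs
  have hxs0 : 0 ≤ xs := ENNReal.toReal_nonneg
  -- positivity of xs
  have hxspos : 0 < xs := by
    have hmaj := radius_ge ha ha0 hy hy0 hcomp t₀.coe_nonneg hsumt₀
    have hAV1 : (1:ℝ) ≤ ∑' n : ℕ, a n * (t₀ : ℝ) ^ n :=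
      one_le_sumA ha ha0 t₀.coe_nonneg hsumt₀
    have hdivpos : (0:ℝ) < (t₀ : ℝ) / ∑' n : ℕ, a n * (t₀ : ℝ) ^ n :=
      div_pos (by exact_mod_cast ht₀pos) (lt_of_lt_of_le one_pos hAV1)
    have h2 := ENNReal.toReal_mono hrtop hmaj
    rw [ENNReal.toReal_ofReal hdivpos.le] at h2
    exact lt_of_lt_of_le hdivpos h2
  -- the value of the sum at the radius
  have hρ_eq : sumAtRadius y = ∑' i : ℕ, ENNReal.ofReal (y i * xs ^ i) := by
    have hcoe_r : (((radiusOf y).toNNReal : ℝ≥0) : ℝ≥0∞) = radiusOf y :=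
      ENNReal.coe_toNNReal hrtop
    apply le_antisymm
    · rw [sumAtRadius]
      apply iSup₂_le
      intro t ht
      apply ENNReal.tsum_le_tsum
      intro i
      apply ENNReal.ofReal_le_ofReal
      have htxs : (t : ℝ) ≤ xs := by
        have := ENNReal.toReal_mono hrtop ht
        simpa using this
      exact mul_le_mul_of_nonneg_left (pow_le_pow_left₀ t.coe_nonneg htxs i) (hy i)
    · rw [sumAtRadius]
      exact le_iSup₂_of_le (radiusOf y).toNNReal (le_of_eq hcoe_r) le_rfl
  -- summability of y at xs
  have hsummy : Summable fun n : ℕ => y n * xs ^ n := by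
    apply summable_of_sum_range_le (c := (sumAtRadius y).toReal)
      (fun n => mul_nonneg (hy n) (pow_nonneg hxs0 n))
    intro N
    have h1 : ENNReal.ofReal (∑ i ∈ Finset.range N, y i * xs ^ i)
        ≤ sumAtRadius y := by
      rw [ENNReal.ofReal_sum_of_nonneg
        (fun i _ => mul_nonneg (hy i) (pow_nonneg hxs0 i)), hρ_eq]
      exact Summable.sum_le_tsum (Finset.range N) (fun i _ => zero_le) ENNReal.summable
    have h2 := ENNReal.toReal_mono hρtop h1
    rwa [ENNReal.toReal_ofReal (Finset.sum_nonneg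
      (fun i _ => mul_nonneg (hy i) (pow_nonneg hxs0 i)))] at h2
  set ρ : ℝ := (sumAtRadius y).toReal with hρdef
  have hρval : ρ = ∑' n : ℕ, y n * xs ^ n := by
    rw [hρdef, hρ_eq, ← ENNReal.ofReal_tsum_of_nonneg
      (fun n => mul_nonneg (hy n) (pow_nonneg hxs0 n)) hsummy,
      ENNReal.toReal_ofReal (tsum_nonneg
        (fun n => mul_nonneg (hy n) (pow_nonneg hxs0 n)))]
  have hxsρ : xs ≤ ρ := ENNReal.toReal_mono hρtop hrρ
  have hρpos : 0 < ρ := lt_of_lt_of_le hxspos hxsρ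
  have hρltt₁ : ρ < (t₁ : ℝ) := by
    have := (ENNReal.toReal_lt_toReal hρtop ENNReal.coe_ne_top).2 hρt₁
    simpa using this
  -- summability of A at every s ≤ t₁
  have hsA : ∀ s : ℝ, 0 ≤ s → s ≤ (t₁ : ℝ) → Summable fun n : ℕ => a n * s ^ n := by
    intro s hs hst
    apply hsumt₁.of_nonneg_of_le (fun n => mul_nonneg (ha n) (pow_nonneg hs n))
    intro n
    exact mul_le_mul_of_nonneg_left (pow_le_pow_left₀ hs hst n) (ha n)
  -- functional equation at xs : ρ = xs·A(ρ)
  have hfe : ρ = xs * ∑' k : ℕ, a k * ρ ^ k := by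
    have h1 : Summable fun k : ℕ => a k * (∑' n : ℕ, y n * xs ^ n) ^ k := by
      rw [← hρval]
      exact hsA ρ hρpos.le hρltt₁.le
    have := funeq hcomp ha hy hy0 hxspos hsummy h1
    rw [← hρval] at this
    exact this
  -- maximality : s ≤ xs·A(s) for every s ∈ [0, t₁]
  have hmax : ∀ s : ℝ, 0 ≤ s → s ≤ (t₁ : ℝ) → s ≤ xs * ∑' n : ℕ, a n * s ^ n := by
    intro s hs hst
    have hsums := hsA s hs hst
    have hAV1 := one_le_sumA ha ha0 hs hsums
    have hAVpos : (0:ℝ) < ∑' n : ℕ, a n * s ^ n := lt_of_lt_of_le one_pos hAV1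
    have hmaj := radius_ge ha ha0 hy hy0 hcomp hs hsums
    have h2 := ENNReal.toReal_mono hrtop hmaj
    rw [ENNReal.toReal_ofReal (div_nonneg hs hAVpos.le)] at h2
    calc s = s / (∑' n : ℕ, a n * s ^ n) * ∑' n : ℕ, a n * s ^ n :=
          (div_mul_cancel₀ s hAVpos.ne').symm
      _ ≤ xs * ∑' n : ℕ, a n * s ^ n := mul_le_mul_of_nonneg_right h2 hAVpos.le
  set t₂ : ℝ := (ρ + t₁) / 2 with ht₂def
  have hρt₂ : ρ < t₂ := by rw [ht₂def]; linarith
  have ht₂t₁ : t₂ < (t₁ : ℝ) := by rw [ht₂def]; linarith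
  have ht₂0 : 0 < t₂ := lt_trans hρpos hρt₂
  have hDsum : ∀ s : ℝ, 0 ≤ s → s < (t₁ : ℝ) →
      Summable fun n : ℕ => (n : ℝ) * a n * s ^ (n - 1) := by
    intro s hs hst
    exact summable_deriv ha hs hst hsumt₁
  have hAρ := hsA ρ hρpos.le hρltt₁.le
  -- the key inequality 0 ≤ (s − ρ)·(ρ·A'(s) − A(ρ))
  have hkey : ∀ s : ℝ, 0 ≤ s → s ≤ t₂ →
      0 ≤ (s - ρ) * (ρ * (∑' n : ℕ, (n : ℝ) * a n * s ^ (n - 1)) -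
        ∑' k : ℕ, a k * ρ ^ k) := by
    intro s hs hst
    have hst₁ : s ≤ (t₁ : ℝ) := le_trans hst ht₂t₁.le
    have hAs := hsA s hs hst₁
    have hDs := hDsum s hs (lt_of_le_of_lt hst ht₂t₁)
    have hAρnn : (0:ℝ) ≤ ∑' k : ℕ, a k * ρ ^ k :=
      le_trans zero_le_one (one_le_sumA ha ha0 hρpos.le hAρ)
    have hG : 0 ≤ ρ * (∑' n : ℕ, a n * s ^ n) - s * (∑' k : ℕ, a k * ρ ^ k) := by
      have h1 : s * (∑' k : ℕ, a k * ρ ^ k) ≤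
          (xs * ∑' n : ℕ, a n * s ^ n) * (∑' k : ℕ, a k * ρ ^ k) :=
        mul_le_mul_of_nonneg_right (hmax s hs hst₁) hAρnn
      have h2 : (xs * ∑' n : ℕ, a n * s ^ n) * (∑' k : ℕ, a k * ρ ^ k)
          = ρ * (∑' n : ℕ, a n * s ^ n) := by
        calc (xs * ∑' n : ℕ, a n * s ^ n) * (∑' k : ℕ, a k * ρ ^ k)
            = xs * (∑' k : ℕ, a k * ρ ^ k) * (∑' n : ℕ, a n * s ^ n) := by ring
          _ = ρ * (∑' n : ℕ, a n * s ^ n) := by rw [← hfe]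
      linarith
    have hdiff : (∑' n : ℕ, a n * s ^ n) - (∑' k : ℕ, a k * ρ ^ k) ≤
        (∑' n : ℕ, (n : ℝ) * a n * s ^ (n - 1)) * (s - ρ) := by
      rw [← Summable.tsum_sub hAs hAρ, ← tsum_mul_right]
      apply Summable.tsum_le_tsum ?_ (hAs.sub hAρ) (hDs.mul_right _)
      intro n
      have hp := pow_sub_pow_le hs hρpos.le n
      have := mul_le_mul_of_nonneg_left hp (ha n)
      nlinarith
    have h3 : ρ * ((∑' n : ℕ, a n * s ^ n) - (∑' k : ℕ, a k * ρ ^ k))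
        ≤ ρ * ((∑' n : ℕ, (n : ℝ) * a n * s ^ (n - 1)) * (s - ρ)) :=
      mul_le_mul_of_nonneg_left hdiff hρpos.le
    nlinarith [h3, hG]
  -- upper bound via a decreasing sequence
  have hDbound : Summable fun n : ℕ => (n : ℝ) * a n * t₂ ^ (n - 1) :=
    hDsum t₂ ht₂0.le ht₂t₁
  have key_lim : ∀ (u : ℕ → ℝ), (∀ k, 0 ≤ u k) → (∀ k, u k ≤ t₂) →
      Tendsto u atTop (nhds ρ) →
      Tendsto (fun k => ∑' n : ℕ, (n : ℝ) * a n * (u k) ^ (n - 1)) atTop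
        (nhds (∑' n : ℕ, (n : ℝ) * a n * ρ ^ (n - 1))) := by
    intro u hu0 hut hulim
    apply tendsto_tsum_of_dominated_convergence hDbound
    · intro n
      have := ((hulim.pow (n - 1)).const_mul (a n)).const_mul (n : ℝ)
      simpa [mul_assoc] using this
    · apply Filter.Eventually.of_forall
      intro k n
      rw [Real.norm_of_nonneg (mul_nonneg (mul_nonneg (Nat.cast_nonneg n) (ha n))
        (pow_nonneg (hu0 k) _))]
      exact mul_le_mul_of_nonneg_left (pow_le_pow_left₀ (hu0 k) (hut k) _)
        (mul_nonneg (Nat.cast_nonneg n) (ha n))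
  -- upper bound: approach ρ from the right
  have upper : 0 ≤ ρ * (∑' n : ℕ, (n : ℝ) * a n * ρ ^ (n - 1)) - ∑' k : ℕ, a k * ρ ^ k := by
    set u : ℕ → ℝ := fun k => ρ + (t₂ - ρ) / (k + 1) with hudef
    have hu0 : ∀ k, 0 ≤ u k := fun k => by
      have : 0 ≤ (t₂ - ρ) / ((k : ℝ) + 1) := div_nonneg (by linarith) (by positivity)
      rw [hudef]; dsimp only; linarith
    have hut : ∀ k, u k ≤ t₂ := fun k => by
      have h1 : (t₂ - ρ) / ((k : ℝ) + 1) ≤ t₂ - ρ :=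
        div_le_self (by linarith) (by norm_num)
      rw [hudef]; dsimp only; linarith
    have huρ : ∀ k, 0 < u k - ρ := fun k => by
      have : 0 < (t₂ - ρ) / ((k : ℝ) + 1) := div_pos (by linarith) (by positivity)
      rw [hudef]; dsimp only; linarith
    have hulim : Tendsto u atTop (nhds ρ) := by
      have h0 : Tendsto (fun k : ℕ => (t₂ - ρ) / ((k : ℝ) + 1)) atTop (nhds 0) := by
        have := (tendsto_one_div_add_atTop_nhds_zero_nat (𝕜 := ℝ)).const_mul (t₂ - ρ)
        simpa [div_eq_mul_inv] using this
      have := h0.const_add ρ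
      simpa using this
    have hge : ∀ k, 0 ≤ ρ * (∑' n : ℕ, (n : ℝ) * a n * (u k) ^ (n - 1)) -
        ∑' j : ℕ, a j * ρ ^ j := by
      intro k
      have hk := hkey (u k) (hu0 k) (hut k)
      by_contra hneg
      push_neg at hneg
      have := mul_neg_of_pos_of_neg (huρ k) hneg
      linarith
    have hlim2 : Tendsto (fun k => ρ * (∑' n : ℕ, (n : ℝ) * a n * (u k) ^ (n - 1)) -
        ∑' j : ℕ, a j * ρ ^ j) atTop
        (nhds (ρ * (∑' n : ℕ, (n : ℝ) * a n * ρ ^ (n - 1)) - ∑' j : ℕ, a j * ρ ^ j)) :=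
      ((key_lim u hu0 hut hulim).const_mul ρ).sub_const _
    exact ge_of_tendsto' hlim2 hge
  -- lower bound: approach ρ from the left
  have lower : ρ * (∑' n : ℕ, (n : ℝ) * a n * ρ ^ (n - 1)) - (∑' k : ℕ, a k * ρ ^ k) ≤ 0 := by
    set v : ℕ → ℝ := fun k => ρ - ρ / (k + 1) with hvdef
    have hvd : ∀ k : ℕ, 0 < ρ / ((k : ℝ) + 1) := fun k => div_pos hρpos (by positivity)
    have hvd2 : ∀ k : ℕ, ρ / ((k : ℝ) + 1) ≤ ρ := fun k =>
      div_le_self hρpos.le (by norm_num)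
    have hv0 : ∀ k, 0 ≤ v k := fun k => by
      rw [hvdef]; dsimp only; linarith [hvd2 k]
    have hvt : ∀ k, v k ≤ t₂ := fun k => by
      rw [hvdef]; dsimp only; linarith [hvd k]
    have hvρ : ∀ k, v k - ρ < 0 := fun k => by
      rw [hvdef]; dsimp only; linarith [hvd k]
    have hvlim : Tendsto v atTop (nhds ρ) := by
      have h0 : Tendsto (fun k : ℕ => ρ / ((k : ℝ) + 1)) atTop (nhds 0) := by
        have := (tendsto_one_div_add_atTop_nhds_zero_nat (𝕜 := ℝ)).const_mul ρ
        simpa [div_eq_mul_inv] using this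
      have := h0.const_sub ρ
      simpa using this
    have hle : ∀ k, ρ * (∑' n : ℕ, (n : ℝ) * a n * (v k) ^ (n - 1)) -
        (∑' j : ℕ, a j * ρ ^ j) ≤ 0 := by
      intro k
      have hk := hkey (v k) (hv0 k) (hvt k)
      by_contra hneg
      push_neg at hneg
      have := mul_neg_of_neg_of_pos (hvρ k) hneg
      linarith
    have hlim2 : Tendsto (fun k => ρ * (∑' n : ℕ, (n : ℝ) * a n * (v k) ^ (n - 1)) -
        ∑' j : ℕ, a j * ρ ^ j) atTop
        (nhds (ρ * (∑' n : ℕ, (n : ℝ) * a n * ρ ^ (n - 1)) - ∑' j : ℕ, a j * ρ ^ j)) :=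
      ((key_lim v hv0 hvt hvlim).const_mul ρ).sub_const _
    exact le_of_tendsto' hlim2 hle
  linarith
end

section
/- Weaker sharpness criterion: Suppose A(x) = 1 + ∑_{n≥1} a_n xⁿ and y(x) = ∑_{n≥1} y_n xⁿ are power series over ℝ with radii of convergence R and r respectively, satisfying R > 0, a_n ≥ 0 for all n ≥ 1, and y(x) = xA(y(x)) as formal power series, with 0 < r < ∞. If y_n = Θ(r^{-n} n^{-α}) as n → ∞ for some real α ≥ 2 (i.e., there exist constants c₁, c₂ > 0 with c₁ r^{-n} n^{-α} ≤ y_n ≤ c₂ r^{-n} n^{-α} for all large n), then y(r) = R, where y(r) = ∑ y_n rⁿ. -/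
open Filter
open scoped BigOperators NNReal ENNReal

private lemma aux_sum_range_cast (k : ℕ) : (∑ i ∈ Finset.range k, (i : ℝ)) = k * ((k : ℝ) - 1) / 2 := by
  induction k with
  | zero => simp
  | succ n ih => rw [Finset.sum_range_succ, ih]; push_cast; ring

private lemma aux_pow_sub_pow_le {x b : ℝ} (hx : 0 ≤ x) (hxb : x ≤ b) (k : ℕ) :
    b ^ k - x ^ k ≤ k * b ^ (k - 1) * (b - x) := by
  have hb : 0 ≤ b := hx.trans hxb
  rw [← geom_sum₂_mul b x k]
  have hs : (∑ i ∈ Finset.range k, b ^ i * x ^ (k - 1 - i)) ≤ k * b ^ (k - 1) := by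
    calc (∑ i ∈ Finset.range k, b ^ i * x ^ (k - 1 - i))
        ≤ ∑ _i ∈ Finset.range k, b ^ (k - 1) := by
          apply Finset.sum_le_sum
          intro i hi
          have hi' : i + (k - 1 - i) = k - 1 := by
            have := Finset.mem_range.mp hi; omega
          calc b ^ i * x ^ (k - 1 - i) ≤ b ^ i * b ^ (k - 1 - i) := by
                have := pow_le_pow_left₀ hx hxb (k - 1 - i)
                exact mul_le_mul_of_nonneg_left this (pow_nonneg hb i)
            _ = b ^ (k - 1) := by rw [← pow_add, hi']
      _ = k * b ^ (k - 1) := by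
          rw [Finset.sum_const, Finset.card_range, nsmul_eq_mul]
  exact mul_le_mul_of_nonneg_right hs (sub_nonneg.2 hxb)

private lemma aux_pow_lower {x b : ℝ} (hx : 0 ≤ x) (hxb : x ≤ b) (k : ℕ) :
    b ^ k - k * b ^ (k - 1) * (b - x) ≤ x ^ k := by
  linarith [aux_pow_sub_pow_le hx hxb k]

private lemma aux_one_sub_pow_le {q : ℝ} (h0 : 0 ≤ q) (h1 : q ≤ 1) (n : ℕ) :
    1 - q ^ n ≤ n * (1 - q) := by
  have := aux_pow_sub_pow_le h0 h1 n
  simpa using this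

private lemma aux_taylor2_pow {a u : ℝ} (hu : 0 ≤ u) (hua : u ≤ a) (k : ℕ) :
    (a - u) ^ k + k * a ^ (k - 1) * u ≤ a ^ k + (k * ((k : ℝ) - 1) / 2) * a ^ (k - 2) * u ^ 2 := by
  have ha : 0 ≤ a := hu.trans hua
  have hau : 0 ≤ a - u := by linarith
  -- identity : (∑ i ∈ range k, a^i * (a-u)^(k-1-i)) * u = a^k - (a-u)^k
  have hid : (∑ i ∈ Finset.range k, a ^ i * (a - u) ^ (k - 1 - i)) * u = a ^ k - (a - u) ^ k := by
    have := geom_sum₂_mul a (a - u) k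
    simpa using this
  -- per-term lower bound
  have hterm : ∀ i ∈ Finset.range k,
      a ^ (k - 1) - ((k - 1 - i : ℕ) : ℝ) * a ^ (k - 2) * u ≤ a ^ i * (a - u) ^ (k - 1 - i) := by
    intro i hi
    have hik : i < k := Finset.mem_range.mp hi
    set m := k - 1 - i with hm
    rcases Nat.eq_zero_or_pos m with hm0 | hmpos
    · -- m = 0 : i = k-1, term = a^i ≥ a^(k-1)
      rw [hm0]
      have : i = k - 1 := by omega
      simp [this, hm0]
    · have h1 : a ^ m - m * a ^ (m - 1) * u ≤ (a - u) ^ m := by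
        have h := aux_pow_lower hau (by linarith : a - u ≤ a) m
        rw [sub_sub_cancel] at h
        exact h
      have h2 := mul_le_mul_of_nonneg_left h1 (pow_nonneg ha i)
      have e1 : a ^ i * a ^ m = a ^ (k - 1) := by rw [← pow_add]; congr 1; omega
      have e2 : a ^ i * (↑m * a ^ (m - 1) * u) = (m : ℝ) * a ^ (k - 2) * u := by
        rw [show a ^ i * ((m : ℝ) * a ^ (m - 1) * u) = (m : ℝ) * (a ^ i * a ^ (m - 1)) * u by ring]
        congr 2
        rw [← pow_add]; congr 1; omega
      calc a ^ (k - 1) - ((m : ℕ) : ℝ) * a ^ (k - 2) * u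
          = a ^ i * a ^ m - a ^ i * ((m : ℝ) * a ^ (m - 1) * u) := by rw [e1, e2]
        _ = a ^ i * (a ^ m - (m : ℝ) * a ^ (m - 1) * u) := by ring
        _ ≤ a ^ i * (a - u) ^ m := h2
  -- sum the lower bounds
  have hsum : (k : ℝ) * a ^ (k - 1) - (k * ((k : ℝ) - 1) / 2) * a ^ (k - 2) * u
      ≤ ∑ i ∈ Finset.range k, a ^ i * (a - u) ^ (k - 1 - i) := by
    have h3 := Finset.sum_le_sum hterm
    have h4 : (∑ i ∈ Finset.range k, (a ^ (k - 1) - ((k - 1 - i : ℕ) : ℝ) * a ^ (k - 2) * u))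
        = (k : ℝ) * a ^ (k - 1) - (k * ((k : ℝ) - 1) / 2) * a ^ (k - 2) * u := by
      rw [Finset.sum_sub_distrib]
      congr 1
      · rw [Finset.sum_const, Finset.card_range, nsmul_eq_mul]
      · rw [← Finset.sum_mul, ← Finset.sum_mul]
        congr 2
        have h5 : (∑ i ∈ Finset.range k, ((k - 1 - i : ℕ) : ℝ)) = ∑ i ∈ Finset.range k, (i : ℝ) :=
          Finset.sum_range_reflect (fun j => (j : ℝ)) k
        rw [h5, aux_sum_range_cast]
    linarith [h3, h4.ge]
  -- multiply by u and rearrange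
  have h6 := mul_le_mul_of_nonneg_right hsum hu
  rw [hid] at h6
  nlinarith [h6, sq_nonneg u]

private lemma aux_summable_of_eventually_le {f g : ℕ → ℝ} (hf : ∀ n, 0 ≤ f n)
    (h : ∀ᶠ n in Filter.atTop, f n ≤ g n) (hg : Summable g) : Summable f := by
  obtain ⟨N, hN⟩ := Filter.eventually_atTop.mp h
  rw [← summable_nat_add_iff N]
  exact Summable.of_nonneg_of_le (fun n => hf _) (fun n => hN _ (by omega))
    ((summable_nat_add_iff N).2 hg)

private lemma aux_summable_of_tsum_ofReal_ne_top {f : ℕ → ℝ} (hf : ∀ n, 0 ≤ f n)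
    (h : (∑' n, ENNReal.ofReal (f n)) ≠ ⊤) : Summable f := by
  set g : ℕ → ℝ≥0 := fun n => ⟨f n, hf n⟩ with hg
  have h1 : ∀ n, ENNReal.ofReal (f n) = (g n : ℝ≥0∞) := fun n =>
    ENNReal.ofReal_eq_coe_nnreal (hf n)
  rw [tsum_congr h1] at h
  have h2 := ENNReal.tsum_coe_ne_top_iff_summable.mp h
  have h3 := NNReal.summable_coe.mpr h2
  exact h3

private lemma aux_ennreal_cauchy (f g : ℕ → ℝ≥0∞) :
    (∑' n : ℕ, ∑ p ∈ Finset.HasAntidiagonal.antidiagonal n, f p.1 * g p.2) = (∑' n, f n) * (∑' n, g n) := by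
  set F : ℕ × ℕ → ℝ≥0∞ := fun p => f p.1 * g p.2 with hF
  have h1 : (∑' n, f n) * (∑' n, g n) = ∑' p : ℕ × ℕ, F p := by
    rw [show (∑' p : ℕ × ℕ, F p) = ∑' (a : ℕ) (b : ℕ), f a * g b from
      ENNReal.tsum_prod (f := fun a b => f a * g b)]
    simp_rw [ENNReal.tsum_mul_left, ENNReal.tsum_mul_right]
  have h2 : (∑' p : ℕ × ℕ, F p)
      = ∑' x : (n : ℕ) × {p // p ∈ Finset.HasAntidiagonal.antidiagonal n}, F (x.2 : ℕ × ℕ) :=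
    (Finset.HasAntidiagonal.sigmaAntidiagonalEquivProd.tsum_eq F).symm
  have h3 : (∑' x : (n : ℕ) × {p // p ∈ Finset.HasAntidiagonal.antidiagonal n}, F (x.2 : ℕ × ℕ))
      = ∑' (n : ℕ) (p : {p // p ∈ Finset.HasAntidiagonal.antidiagonal n}), F (p : ℕ × ℕ) :=
    ENNReal.tsum_sigma (f := fun (n : ℕ) (p : {p // p ∈ Finset.HasAntidiagonal.antidiagonal n}) => F (p : ℕ × ℕ))
  rw [h1, h2, h3]
  refine tsum_congr fun n => ?_
  rw [tsum_fintype]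
  exact (Finset.sum_coe_sort (Finset.HasAntidiagonal.antidiagonal n) F).symm

private lemma aux_coeff_pow_nonneg_cond {y : ℕ → ℝ} :
    ∀ (k m : ℕ), (∀ j, j ≤ m → 0 ≤ y j) → 0 ≤ PowerSeries.coeff m ((PowerSeries.mk y) ^ k)
  | 0, m, _ => by
    rw [pow_zero, PowerSeries.coeff_one]
    split <;> norm_num
  | (k + 1), m, hy => by
    rw [pow_succ, PowerSeries.coeff_mul]
    apply Finset.sum_nonneg
    intro p hp
    have h1 : p.1 ≤ m := by have := Finset.HasAntidiagonal.mem_antidiagonal.mp hp; omega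
    have h2 : p.2 ≤ m := by have := Finset.HasAntidiagonal.mem_antidiagonal.mp hp; omega
    refine mul_nonneg (aux_coeff_pow_nonneg_cond k p.1 (fun j hj => hy j (hj.trans h1))) ?_
    simpa using hy p.2 h2

set_option maxRecDepth 8000 in
set_option maxHeartbeats 2000000 in
/-- **Weaker sharpness criterion.**  Suppose `A(x) = 1 + ∑_{n≥1} aₙxⁿ` and
`y(x) = ∑_{n≥1} yₙxⁿ` are real power series with radii of convergence `R` and `r`,
satisfying `R > 0`, `aₙ ≥ 0` for `n ≥ 1`, `y(x) = x·A(y(x))` as formal power series,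
and `0 < r < ∞`.  If `yₙ = Θ(r⁻ⁿ n^{−α})` for some real `α ≥ 2`, then `y(r) = R`. -/
theorem weaker_sharpness_criterion (a y : ℕ → ℝ) (ha0 : a 0 = 1) (hy0 : y 0 = 0)
    (hapos : ∀ n : ℕ, 1 ≤ n → 0 ≤ a n)
    (hcomp : PowerSeries.mk y =
      PowerSeries.X * pscomp (PowerSeries.mk a) (PowerSeries.mk y))
    (hR : 0 < radiusOf a) (hr0 : 0 < radiusOf y) (hrfin : radiusOf y ≠ ⊤)
    (α : ℝ) (hα : 2 ≤ α)
    (hTheta : ∃ c₁ c₂ : ℝ, 0 < c₁ ∧ 0 < c₂ ∧ ∀ᶠ n : ℕ in atTop,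
      c₁ * ((radiusOf y).toReal)⁻¹ ^ n * (n : ℝ) ^ (-α) ≤ y n ∧
        y n ≤ c₂ * ((radiusOf y).toReal)⁻¹ ^ n * (n : ℝ) ^ (-α)) :
    ∑' n : ℕ, ENNReal.ofReal (y n * (radiusOf y).toReal ^ n) = radiusOf a := by
  set_option maxHeartbeats 2000000 in

  classical
  set r : ℝ := (radiusOf y).toReal with hrdef
  have hr : 0 < r := ENNReal.toReal_pos hr0.ne' hrfin
  have hofr : ENNReal.ofReal r = radiusOf y := ENNReal.ofReal_toReal hrfin
  have hann : ∀ k, 0 ≤ a k := by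
    intro k
    rcases Nat.eq_zero_or_pos k with h | h
    · rw [h, ha0]; norm_num
    · exact hapos k h
  set c : ℕ → ℕ → ℝ := fun m k => PowerSeries.coeff m ((PowerSeries.mk y) ^ k) with hcdef
  -- coefficient recursion
  have hrec : ∀ m, y (m + 1) = ∑ k ∈ Finset.range (m + 1), a k * c m k := by
    intro m
    conv_lhs => rw [show y (m + 1) = PowerSeries.coeff (m + 1) (PowerSeries.mk y) from
      (PowerSeries.coeff_mk _ _).symm, hcomp]
    rw [PowerSeries.coeff_succ_X_mul, pscomp, PowerSeries.coeff_mk]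
    simp [hcdef]
  -- nonnegativity of y
  have hynn : ∀ n, 0 ≤ y n := by
    intro n
    induction n using Nat.strong_induction_on with
    | _ n ih =>
      match n with
      | 0 => rw [hy0]
      | (m + 1) =>
        rw [hrec m]
        apply Finset.sum_nonneg
        intro k _
        exact mul_nonneg (hann k) (aux_coeff_pow_nonneg_cond k m (fun j hj => ih j (by omega)))
  have hcnn : ∀ m k, 0 ≤ c m k := fun m k =>
    aux_coeff_pow_nonneg_cond k m (fun j _ => hynn j)
  have hczero : ∀ k m, m < k → c m k = 0 := by
    intro k m hmk
    have hdvd : (PowerSeries.X : PowerSeries ℝ) ^ k ∣ (PowerSeries.mk y) ^ k :=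
      pow_dvd_pow_of_dvd ⟨_, hcomp⟩ k
    exact PowerSeries.X_pow_dvd_iff.mp hdvd m hmk
  have hy1 : y 1 = 1 := by
    have h := hrec 0
    simpa [hcdef, ha0, PowerSeries.coeff_one] using h
  -- Theta upper bound consequences
  obtain ⟨c₁, c₂, hc₁, hc₂, hTh⟩ := hTheta
  have hp54 : Summable (fun n : ℕ => c₂ * ((n : ℝ) ^ ((5 : ℝ)/4))⁻¹) :=
    ((Real.summable_nat_rpow_inv).2 (by norm_num)).mul_left c₂
  have hub : ∀ᶠ n : ℕ in atTop, y n * r ^ n ≤ c₂ * (n : ℝ) ^ (-α) := by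
    filter_upwards [hTh] with n hn
    have h2 := hn.2
    have h3 := mul_le_mul_of_nonneg_right h2 (pow_nonneg hr.le n)
    calc y n * r ^ n ≤ c₂ * r⁻¹ ^ n * (n : ℝ) ^ (-α) * r ^ n := h3
      _ = c₂ * (n : ℝ) ^ (-α) * (r⁻¹ * r) ^ n := by rw [mul_pow]; ring
      _ = c₂ * (n : ℝ) ^ (-α) := by rw [inv_mul_cancel₀ hr.ne', one_pow, mul_one]
  have hKsum : Summable (fun n : ℕ => y n * r ^ n * (n : ℝ) ^ ((3 : ℝ)/4)) := by
    apply aux_summable_of_eventually_le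
      (fun n => mul_nonneg (mul_nonneg (hynn n) (pow_nonneg hr.le n))
        (Real.rpow_nonneg (Nat.cast_nonneg n) _)) ?_ hp54
    filter_upwards [hub, Filter.eventually_ge_atTop 1] with n hn hn1
    have hn0 : (0 : ℝ) < (n : ℝ) := by exact_mod_cast hn1
    have hn1' : (1 : ℝ) ≤ (n : ℝ) := by exact_mod_cast hn1
    calc y n * r ^ n * (n : ℝ) ^ ((3 : ℝ)/4)
        ≤ (c₂ * (n : ℝ) ^ (-α)) * (n : ℝ) ^ ((3 : ℝ)/4) :=
          mul_le_mul_of_nonneg_right hn (Real.rpow_nonneg (Nat.cast_nonneg n) _)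
      _ = c₂ * (n : ℝ) ^ (-α + (3 : ℝ)/4) := by
          rw [Real.rpow_add hn0]; ring
      _ ≤ c₂ * (n : ℝ) ^ (-((5 : ℝ)/4)) := by
          refine mul_le_mul_of_nonneg_left ?_ hc₂.le
          exact Real.rpow_le_rpow_of_exponent_le hn1' (by linarith)
      _ = c₂ * ((n : ℝ) ^ ((5 : ℝ)/4))⁻¹ := by
          rw [Real.rpow_neg (Nat.cast_nonneg n)]
  have hSr : Summable (fun n => y n * r ^ n) := by
    apply aux_summable_of_eventually_le
      (fun n => mul_nonneg (hynn n) (pow_nonneg hr.le n)) ?_ hKsum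
    filter_upwards [Filter.eventually_ge_atTop 1] with n hn
    nth_rewrite 1 [← mul_one (y n * r ^ n)]
    refine mul_le_mul_of_nonneg_left ?_ (mul_nonneg (hynn n) (pow_nonneg hr.le n))
    exact Real.one_le_rpow (by exact_mod_cast hn) (by norm_num)
  -- the sum function
  set yv : ℝ → ℝ := fun x => ∑' n, y n * x ^ n with hyvdef
  have hsumx : ∀ x, 0 ≤ x → x ≤ r → Summable (fun n => y n * x ^ n) := by
    intro x hx0 hxr
    exact Summable.of_nonneg_of_le (fun n => mul_nonneg (hynn n) (pow_nonneg hx0 n))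
      (fun n => mul_le_mul_of_nonneg_left (pow_le_pow_left₀ hx0 hxr n) (hynn n)) hSr
  set τ : ℝ := yv r with hτdef
  have hτ0 : 0 ≤ τ := tsum_nonneg (fun n => mul_nonneg (hynn n) (pow_nonneg hr.le n))
  have hrτ : r ≤ τ := by
    have h := Summable.le_tsum hSr 1 (fun j _ => mul_nonneg (hynn j) (pow_nonneg hr.le j))
    simpa [hy1] using h
  have hyvnn : ∀ x, 0 ≤ x → 0 ≤ yv x := fun x hx =>
    tsum_nonneg (fun n => mul_nonneg (hynn n) (pow_nonneg hx n))
  have hyvle : ∀ x, 0 ≤ x → x ≤ r → yv x ≤ τ := by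
    intro x hx hxr
    exact Summable.tsum_le_tsum
      (fun n => mul_le_mul_of_nonneg_left (pow_le_pow_left₀ hx hxr n) (hynn n))
      (hsumx x hx hxr) hSr
  -- (★) truncated power bound
  have star : ∀ (ρ : ℝ), 0 ≤ ρ → ∀ k M, (∑ m ∈ Finset.range (M + 1), c m k * ρ ^ m)
      ≤ (∑ n ∈ Finset.range (M + 1), y n * ρ ^ n) ^ k := by
    intro ρ hρ k
    induction k with
    | zero =>
      intro M
      have h1 : ∀ m, c m 0 * ρ ^ m = if m = 0 then ρ ^ m else 0 := by
        intro m
        simp only [hcdef, pow_zero, PowerSeries.coeff_one]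
        split <;> simp
      rw [Finset.sum_congr rfl (fun m _ => h1 m), Finset.sum_ite_eq' (Finset.range (M + 1)) 0]
      simp
    | succ k ih =>
      intro M
      have hexp : ∀ m, c m (k + 1) * ρ ^ m
          = ∑ i ∈ Finset.range (m + 1), (y i * ρ ^ i) * (c (m - i) k * ρ ^ (m - i)) := by
        intro m
        have h2 : c m (k + 1) = ∑ i ∈ Finset.range (m + 1), y i * c (m - i) k := by
          simp only [hcdef]
          rw [pow_succ', PowerSeries.coeff_mul,
            Finset.Nat.sum_antidiagonal_eq_sum_range_succ (fun i j =>
              PowerSeries.coeff i (PowerSeries.mk y) * PowerSeries.coeff j ((PowerSeries.mk y) ^ k))]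
          simp [PowerSeries.coeff_mk]
        rw [h2, Finset.sum_mul]
        refine Finset.sum_congr rfl (fun i hi => ?_)
        have him : i ≤ m := by have := Finset.mem_range.mp hi; omega
        have : ρ ^ m = ρ ^ i * ρ ^ (m - i) := by rw [← pow_add]; congr 1; omega
        rw [this]; ring
      calc (∑ m ∈ Finset.range (M + 1), c m (k + 1) * ρ ^ m)
          = ∑ m ∈ Finset.range (M + 1), ∑ i ∈ Finset.range (m + 1),
              (y i * ρ ^ i) * (c (m - i) k * ρ ^ (m - i)) :=
            Finset.sum_congr rfl (fun m _ => hexp m)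
        _ = ∑ i ∈ Finset.range (M + 1), ∑ m ∈ Finset.Ico i (M + 1),
              (y i * ρ ^ i) * (c (m - i) k * ρ ^ (m - i)) := by
            have h3 := Finset.sum_Ico_Ico_comm 0 (M + 1)
              (fun i m => (y i * ρ ^ i) * (c (m - i) k * ρ ^ (m - i)))
            simp only [Finset.range_eq_Ico]
            exact h3.symm
        _ = ∑ i ∈ Finset.range (M + 1), (y i * ρ ^ i) *
              ∑ j ∈ Finset.range (M + 1 - i), (c j k * ρ ^ j) := by
            refine Finset.sum_congr rfl (fun i _ => ?_)
            rw [Finset.mul_sum, Finset.sum_Ico_eq_sum_range]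
            refine Finset.sum_congr rfl (fun j _ => ?_)
            simp
        _ ≤ ∑ i ∈ Finset.range (M + 1), (y i * ρ ^ i) *
              ∑ j ∈ Finset.range (M + 1), (c j k * ρ ^ j) := by
            refine Finset.sum_le_sum (fun i _ => ?_)
            refine mul_le_mul_of_nonneg_left ?_ (mul_nonneg (hynn i) (pow_nonneg hρ i))
            refine Finset.sum_le_sum_of_subset_of_nonneg
              (Finset.range_subset_range.mpr (by omega))
              (fun j _ _ => mul_nonneg (hcnn j k) (pow_nonneg hρ j))
        _ ≤ (∑ n ∈ Finset.range (M + 1), y n * ρ ^ n) *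
              (∑ n ∈ Finset.range (M + 1), y n * ρ ^ n) ^ k := by
            rw [← Finset.sum_mul]
            refine mul_le_mul_of_nonneg_left (ih M) ?_
            exact Finset.sum_nonneg (fun n _ => mul_nonneg (hynn n) (pow_nonneg hρ n))
        _ = (∑ n ∈ Finset.range (M + 1), y n * ρ ^ n) ^ (k + 1) := (pow_succ' _ _).symm
  -- ENNReal machinery
  set F : ℕ → ℝ≥0∞ := fun n => ENNReal.ofReal (y n) with hFdef
  set G : ℕ → ℕ → ℝ≥0∞ := fun k m => ENNReal.ofReal (c m k) with hGdef
  set Ak : ℕ → ℝ≥0∞ := fun k => ENNReal.ofReal (a k) with hAkdef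
  set YE : ℝ → ℝ≥0∞ := fun x => ∑' n, F n * (ENNReal.ofReal x) ^ n with hYEdef
  have hPowE : ∀ x : ℝ, 0 ≤ x → ∀ k,
      (∑' m, G k m * (ENNReal.ofReal x) ^ m) = (YE x) ^ k := by
    intro x hx k
    induction k with
    | zero =>
      rw [pow_zero, tsum_eq_single 0 ?_]
      · simp [hGdef, hcdef, PowerSeries.coeff_one]
      · intro m hm
        simp [hGdef, hcdef, PowerSeries.coeff_one, hm]
    | succ k ih =>
      have hcoef : ∀ m, G (k + 1) m = ∑ p ∈ Finset.HasAntidiagonal.antidiagonal m, F p.1 * G k p.2 := by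
        intro m
        have h2 : c m (k + 1) = ∑ p ∈ Finset.HasAntidiagonal.antidiagonal m, y p.1 * c p.2 k := by
          simp only [hcdef]
          rw [pow_succ', PowerSeries.coeff_mul]
          simp [PowerSeries.coeff_mk]
        rw [hGdef]
        simp only
        rw [h2, ENNReal.ofReal_sum_of_nonneg (fun p _ => mul_nonneg (hynn _) (hcnn _ _))]
        exact Finset.sum_congr rfl (fun p _ => ENNReal.ofReal_mul (hynn _))
      calc (∑' m, G (k + 1) m * (ENNReal.ofReal x) ^ m)
          = ∑' m, ∑ p ∈ Finset.HasAntidiagonal.antidiagonal m,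
              (F p.1 * (ENNReal.ofReal x) ^ p.1) * (G k p.2 * (ENNReal.ofReal x) ^ p.2) := by
            refine tsum_congr fun m => ?_
            rw [hcoef m, Finset.sum_mul]
            refine Finset.sum_congr rfl (fun p hp => ?_)
            have hp' : p.1 + p.2 = m := Finset.HasAntidiagonal.mem_antidiagonal.mp hp
            rw [← hp', pow_add]; ring
        _ = (∑' n, F n * (ENNReal.ofReal x) ^ n) * (∑' m, G k m * (ENNReal.ofReal x) ^ m) :=
            aux_ennreal_cauchy (fun n => F n * (ENNReal.ofReal x) ^ n)
              (fun m => G k m * (ENNReal.ofReal x) ^ m)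
        _ = YE x ^ (k + 1) := by rw [ih, hYEdef, pow_succ']
  have hT : ∀ x : ℝ, 0 ≤ x → YE x = ENNReal.ofReal x * ∑' k, Ak k * (YE x) ^ k := by
    intro x hx
    have h0 : YE x = ∑' m, F (m + 1) * (ENNReal.ofReal x) ^ (m + 1) := by
      rw [hYEdef]
      simp only
      rw [tsum_eq_zero_add' ENNReal.summable]
      simp [hFdef, hy0]
    have hstep : ∀ m, F (m + 1) * (ENNReal.ofReal x) ^ (m + 1)
        = ENNReal.ofReal x * ∑' k, Ak k * (G k m * (ENNReal.ofReal x) ^ m) := by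
      intro m
      have h1 : F (m + 1) = ∑ k ∈ Finset.range (m + 1), Ak k * G k m := by
        rw [hFdef]
        simp only
        rw [hrec m, ENNReal.ofReal_sum_of_nonneg (fun k _ => mul_nonneg (hann k) (hcnn m k))]
        exact Finset.sum_congr rfl (fun k _ => ENNReal.ofReal_mul (hann k))
      have h2 : (∑' k, Ak k * (G k m * (ENNReal.ofReal x) ^ m))
          = (∑ k ∈ Finset.range (m + 1), Ak k * G k m) * (ENNReal.ofReal x) ^ m := by
        rw [tsum_eq_sum (s := Finset.range (m + 1)) ?_, Finset.sum_mul]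
        · exact Finset.sum_congr rfl (fun k _ => (mul_assoc _ _ _).symm)
        · intro k hk
          have hmk : m < k := by
            rcases Finset.mem_range.not.mp hk with h
            omega
          simp [hGdef, hczero k m hmk]
      rw [h1, h2, pow_succ']
      ring
    conv_lhs => rw [h0]
    rw [tsum_congr hstep, ENNReal.tsum_mul_left]
    congr 1
    rw [ENNReal.tsum_comm]
    refine tsum_congr fun k => ?_
    rw [ENNReal.tsum_mul_left, hPowE x hx k]
  have hYEofReal : ∀ x, 0 ≤ x → x ≤ r → YE x = ENNReal.ofReal (yv x) := by
    intro x hx hxr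
    rw [hyvdef]
    simp only
    rw [ENNReal.ofReal_tsum_of_nonneg (fun n => mul_nonneg (hynn n) (pow_nonneg hx n))
      (hsumx x hx hxr)]
    refine tsum_congr fun n => ?_
    rw [ENNReal.ofReal_mul (hynn n), ENNReal.ofReal_pow hx]
  -- the A-function
  set Av : ℝ → ℝ := fun w => ∑' k, a k * w ^ k with hAvdef
  have hterm : ∀ w : ℝ, 0 ≤ w → ∀ k : ℕ,
      Ak k * (ENNReal.ofReal w) ^ k = ENNReal.ofReal (a k * w ^ k) := by
    intro w hw k
    rw [ENNReal.ofReal_mul (hann k), ENNReal.ofReal_pow hw, hAkdef]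
  -- summability of a_k τ^k and the identity at r
  have hTr := hT r hr.le
  rw [hYEofReal r hr.le le_rfl, ← hτdef] at hTr
  have hSig : (∑' k, Ak k * (ENNReal.ofReal τ) ^ k) = ∑' k, ENNReal.ofReal (a k * τ ^ k) :=
    tsum_congr (hterm τ hτ0)
  have hSigne : (∑' k, ENNReal.ofReal (a k * τ ^ k)) ≠ ⊤ := by
    intro htop
    rw [hSig, htop, ENNReal.mul_top (by simpa using hr : ENNReal.ofReal r ≠ 0)] at hTr
    exact ENNReal.ofReal_ne_top hTr
  have hAτsum : Summable (fun k => a k * τ ^ k) :=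
    aux_summable_of_tsum_ofReal_ne_top (fun k => mul_nonneg (hann k) (pow_nonneg hτ0 k)) hSigne
  have hAsum_at : ∀ w, 0 ≤ w → w ≤ τ → Summable (fun k => a k * w ^ k) := by
    intro w hw hwτ
    exact Summable.of_nonneg_of_le (fun k => mul_nonneg (hann k) (pow_nonneg hw k))
      (fun k => mul_le_mul_of_nonneg_left (pow_le_pow_left₀ hw hwτ k) (hann k)) hAτsum
  have hAv1 : ∀ w, 0 ≤ w → Summable (fun k => a k * w ^ k) → 1 ≤ Av w := by
    intro w hw hsum
    have h := Summable.le_tsum hsum 0 (fun j _ => mul_nonneg (hann j) (pow_nonneg hw j))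
    simpa [ha0] using h
  have hAvnn : ∀ w, 0 ≤ w → 0 ≤ Av w := fun w hw =>
    tsum_nonneg (fun k => mul_nonneg (hann k) (pow_nonneg hw k))
  -- real functional identity on [0, r]
  have hfx : ∀ x, 0 ≤ x → x ≤ r → yv x = x * Av (yv x) := by
    intro x hx hxr
    have hE := hT x hx
    rw [hYEofReal x hx hxr] at hE
    have hs := hAsum_at (yv x) (hyvnn x hx) (hyvle x hx hxr)
    rw [tsum_congr (hterm (yv x) (hyvnn x hx)),
      ← ENNReal.ofReal_tsum_of_nonneg (fun k => mul_nonneg (hann k) (pow_nonneg (hyvnn x hx) k)) hs,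
      ← ENNReal.ofReal_mul hx] at hE
    exact (ENNReal.ofReal_eq_ofReal_iff (hyvnn x hx)
      (mul_nonneg hx (hAvnn (yv x) (hyvnn x hx)))).mp hE
  have hτeq : τ = r * Av τ := by
    have := hfx r hr.le le_rfl
    rwa [← hτdef] at this
  -- reduce the goal
  have hgoal : (∑' n : ℕ, ENNReal.ofReal (y n * r ^ n)) = ENNReal.ofReal τ := by
    rw [← ENNReal.ofReal_tsum_of_nonneg (fun n => mul_nonneg (hynn n) (pow_nonneg hr.le n)) hSr]
  rw [hgoal]
  refine le_antisymm ?_ ?_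
  · -- easy direction: ofReal τ ≤ radiusOf a
    rw [radiusOf, ENNReal.ofReal_eq_coe_nnreal hτ0]
    refine le_iSup₂ (f := fun (t : ℝ≥0) (_ : Summable fun n : ℕ => |a n| * (t : ℝ) ^ n) =>
      (t : ℝ≥0∞)) (⟨τ, hτ0⟩ : ℝ≥0) ?_
    exact (by simpa [abs_of_nonneg (hann _)] using hAτsum : Summable fun n => |a n| * τ ^ n)
  · -- hard direction
    by_contra hcon
    rw [not_le] at hcon
    rw [radiusOf, lt_iSup_iff] at hcon
    obtain ⟨t, ht⟩ := hcon
    rw [lt_iSup_iff] at ht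
    obtain ⟨hts, htτ⟩ := ht
    set T : ℝ := (t : ℝ) with hTdef
    have hτT : τ < T := by
      have h1 : ENNReal.ofReal τ < ENNReal.ofReal T := by
        rwa [hTdef, ENNReal.ofReal_coe_nnreal]
      exact (ENNReal.ofReal_lt_ofReal_iff_of_nonneg hτ0).mp h1
    have hTsum : Summable (fun k => a k * T ^ k) := by
      have := hts
      simpa [abs_of_nonneg (hann _)] using this
    have hT0 : 0 < T := lt_of_le_of_lt hτ0 hτT
    set t₂ : ℝ := (τ + T) / 2 with ht₂def
    have hτt₂ : τ < t₂ := by rw [ht₂def]; linarith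
    have ht₂T : t₂ < T := by rw [ht₂def]; linarith
    have ht₂0 : 0 < t₂ := lt_of_le_of_lt hτ0 hτt₂
    have hAsum_le : ∀ w, 0 ≤ w → w ≤ T → Summable (fun k => a k * w ^ k) := by
      intro w hw hwT
      exact Summable.of_nonneg_of_le (fun k => mul_nonneg (hann k) (pow_nonneg hw k))
        (fun k => mul_le_mul_of_nonneg_left (pow_le_pow_left₀ hw hwT k) (hann k)) hTsum
    by_cases hcase : ∃ w, τ < w ∧ w ≤ t₂ ∧ r * Av w < w
    · -- Case 1 : subcritical, the radius of y would exceed r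
      obtain ⟨w, hw1, hw2, hw3⟩ := hcase
      have hw0 : 0 < w := lt_of_le_of_lt hτ0 hw1
      have hwsum : Summable (fun k => a k * w ^ k) := hAsum_le w hw0.le (hw2.trans ht₂T.le)
      have hAw1 : 1 ≤ Av w := hAv1 w hw0.le hwsum
      have hAw0 : 0 < Av w := lt_of_lt_of_le one_pos hAw1
      set ρ : ℝ := w / Av w with hρdef
      have hρr : r < ρ := by
        rw [hρdef, lt_div_iff₀ hAw0]
        linarith
      have hρ0 : 0 < ρ := hr.trans hρr
      have key : ∀ N, (∑ n ∈ Finset.range (N + 1), y n * ρ ^ n) ≤ w := by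
        intro N
        induction N with
        | zero => simp [hy0]; exact hw0.le
        | succ N ih =>
          rw [Finset.sum_range_succ']
          have hmain : (∑ m ∈ Finset.range (N + 1), y (m + 1) * ρ ^ (m + 1)) ≤ w := by
            calc (∑ m ∈ Finset.range (N + 1), y (m + 1) * ρ ^ (m + 1))
                = ρ * ∑ m ∈ Finset.range (N + 1), ∑ k ∈ Finset.range (m + 1),
                    a k * (c m k * ρ ^ m) := by
                  rw [Finset.mul_sum]
                  refine Finset.sum_congr rfl (fun m _ => ?_)
                  rw [hrec m, Finset.sum_mul, Finset.mul_sum]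
                  refine Finset.sum_congr rfl (fun k _ => ?_)
                  rw [pow_succ']; ring
              _ = ρ * ∑ k ∈ Finset.range (N + 1), ∑ m ∈ Finset.Ico k (N + 1),
                    a k * (c m k * ρ ^ m) := by
                  congr 1
                  have h3 := Finset.sum_Ico_Ico_comm 0 (N + 1)
                    (fun k m => a k * (c m k * ρ ^ m))
                  simp only [Finset.range_eq_Ico]
                  exact h3.symm
              _ ≤ ρ * ∑ k ∈ Finset.range (N + 1), a k * w ^ k := by
                  refine mul_le_mul_of_nonneg_left ?_ hρ0.le
                  refine Finset.sum_le_sum (fun k _ => ?_)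
                  rw [← Finset.mul_sum]
                  refine mul_le_mul_of_nonneg_left ?_ (hann k)
                  calc (∑ m ∈ Finset.Ico k (N + 1), c m k * ρ ^ m)
                      ≤ ∑ m ∈ Finset.range (N + 1), c m k * ρ ^ m := by
                        refine Finset.sum_le_sum_of_subset_of_nonneg ?_
                          (fun m _ _ => mul_nonneg (hcnn m k) (pow_nonneg hρ0.le m))
                        rw [Finset.range_eq_Ico]
                        exact Finset.Ico_subset_Ico (by omega) le_rfl
                    _ ≤ (∑ n ∈ Finset.range (N + 1), y n * ρ ^ n) ^ k := star ρ hρ0.le k N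
                    _ ≤ w ^ k := pow_le_pow_left₀
                        (Finset.sum_nonneg (fun n _ => mul_nonneg (hynn n) (pow_nonneg hρ0.le n)))
                        ih k
              _ ≤ ρ * Av w := by
                  refine mul_le_mul_of_nonneg_left ?_ hρ0.le
                  exact Summable.sum_le_tsum _ (fun k _ => mul_nonneg (hann k) (pow_nonneg hw0.le k)) hwsum
              _ = w := by rw [hρdef, div_mul_cancel₀ _ (ne_of_gt hAw0)]
          simpa [hy0] using hmain
      have hsumρ : Summable (fun n => y n * ρ ^ n) := by
        refine summable_of_sum_range_le (c := w)
          (fun n => mul_nonneg (hynn n) (pow_nonneg hρ0.le n)) (fun n => ?_)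
        calc (∑ i ∈ Finset.range n, y i * ρ ^ i)
            ≤ ∑ i ∈ Finset.range (n + 1), y i * ρ ^ i := by
              refine Finset.sum_le_sum_of_subset_of_nonneg (Finset.range_subset_range.mpr (by omega))
                (fun i _ _ => mul_nonneg (hynn i) (pow_nonneg hρ0.le i))
          _ ≤ w := key n
      have hlt : radiusOf y < radiusOf y := by
        calc radiusOf y = ENNReal.ofReal r := hofr.symm
          _ < ENNReal.ofReal ρ := (ENNReal.ofReal_lt_ofReal_iff hρ0).mpr hρr
          _ ≤ radiusOf y := by
              rw [radiusOf, ENNReal.ofReal_eq_coe_nnreal hρ0.le]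
              refine le_iSup₂ (f := fun (s : ℝ≥0) (_ : Summable fun n : ℕ => |y n| * (s : ℝ) ^ n) =>
                (s : ℝ≥0∞)) (⟨ρ, hρ0.le⟩ : ℝ≥0) ?_
              exact (by simpa [abs_of_nonneg (hynn _)] using hsumρ : Summable fun n => |y n| * ρ ^ n)
      exact lt_irrefl _ hlt
    · -- Case 2 : critical; contradiction with the Θ upper bound
      push_neg at hcase
      set q : ℝ := t₂ / T with hqdef
      have hq0 : 0 < q := div_pos ht₂0 hT0
      have hq1 : q < 1 := (div_lt_one hT0).mpr ht₂T
      have hbound : ∀ᶠ k in atTop, a k * T ^ k ≤ 1 :=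
        hTsum.tendsto_atTop_zero.eventually_le_const one_pos
      have hnormq : ‖q‖ < 1 := by rw [Real.norm_eq_abs, abs_of_pos hq0]; exact hq1
      have hgeo1 : Summable (fun k : ℕ => (k : ℝ) * q ^ k) := by
        have h := summable_pow_mul_geometric_of_norm_lt_one (R := ℝ) 1 hnormq
        simpa using h
      have hgeo2 : Summable (fun k : ℕ => (k : ℝ) ^ 2 * q ^ k) :=
        summable_pow_mul_geometric_of_norm_lt_one (R := ℝ) 2 hnormq
      have hkk : ∀ k : ℕ, 0 ≤ (k : ℝ) * ((k : ℝ) - 1) := by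
        intro k
        rcases Nat.eq_zero_or_pos k with hk0 | hk1
        · simp [hk0]
        · have h1 : (1 : ℝ) ≤ (k : ℝ) := by exact_mod_cast hk1
          nlinarith
      have hA1t₂ : Summable (fun k : ℕ => (k : ℝ) * a k * t₂ ^ (k - 1)) := by
        apply aux_summable_of_eventually_le
          (fun k => mul_nonneg (mul_nonneg (Nat.cast_nonneg k) (hann k)) (pow_nonneg ht₂0.le _))
          ?_ (hgeo1.mul_left (1 / (T * q)))
        filter_upwards [hbound, Filter.eventually_ge_atTop 1] with k haT hk1
        obtain ⟨j, rfl⟩ : ∃ j, k = j + 1 := ⟨k - 1, by omega⟩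
        have hTk : (0 : ℝ) < T ^ (j + 1) := pow_pos hT0 _
        have hak : a (j + 1) ≤ (T ^ (j + 1))⁻¹ := by
          rw [← one_div]
          exact (le_div_iff₀ hTk).mpr haT
        have hstep : ((j + 1 : ℕ) : ℝ) * a (j + 1) * t₂ ^ ((j + 1) - 1)
            ≤ ((j + 1 : ℕ) : ℝ) * (T ^ (j + 1))⁻¹ * t₂ ^ j := by
          simp only [Nat.add_sub_cancel]
          exact mul_le_mul_of_nonneg_right
            (mul_le_mul_of_nonneg_left hak (Nat.cast_nonneg _)) (pow_nonneg ht₂0.le j)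
        refine hstep.trans (le_of_eq ?_)
        rw [hqdef]
        field_simp
        have hTne : T ≠ 0 := hT0.ne'
        rw [← mul_pow, show T * (t₂ / T) = t₂ by field_simp]; ring
      have hA2t₂ : Summable (fun k : ℕ => (k : ℝ) * ((k : ℝ) - 1) * a k * t₂ ^ (k - 2)) := by
        apply aux_summable_of_eventually_le
          (fun k => mul_nonneg (mul_nonneg (hkk k) (hann k)) (pow_nonneg ht₂0.le _))
          ?_ (hgeo2.mul_left (1 / (T ^ 2 * q ^ 2)))
        filter_upwards [hbound, Filter.eventually_ge_atTop 2] with k haT hk2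
        obtain ⟨j, rfl⟩ : ∃ j, k = j + 2 := ⟨k - 2, by omega⟩
        have hTk : (0 : ℝ) < T ^ (j + 2) := pow_pos hT0 _
        have hak : a (j + 2) ≤ (T ^ (j + 2))⁻¹ := by
          rw [← one_div]
          exact (le_div_iff₀ hTk).mpr haT
        have hkc : ((j + 2 : ℕ) : ℝ) * (((j + 2 : ℕ) : ℝ) - 1) ≤ ((j + 2 : ℕ) : ℝ) ^ 2 := by
          push_cast
          nlinarith [Nat.cast_nonneg (α := ℝ) j]
        have hstep : ((j + 2 : ℕ) : ℝ) * (((j + 2 : ℕ) : ℝ) - 1) * a (j + 2) * t₂ ^ ((j + 2) - 2)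
            ≤ ((j + 2 : ℕ) : ℝ) ^ 2 * (T ^ (j + 2))⁻¹ * t₂ ^ j := by
          simp only [Nat.add_sub_cancel]
          refine mul_le_mul_of_nonneg_right ?_ (pow_nonneg ht₂0.le j)
          exact mul_le_mul hkc hak (hann _) (by positivity)
        refine hstep.trans (le_of_eq ?_)
        rw [hqdef]
        field_simp
        have hTne : T ≠ 0 := hT0.ne'
        rw [← mul_pow, show T * (t₂ / T) = t₂ by field_simp]; ring
      have hA1sum : ∀ s, 0 ≤ s → s ≤ t₂ → Summable (fun k : ℕ => (k : ℝ) * a k * s ^ (k - 1)) := by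
        intro s hs hst
        refine Summable.of_nonneg_of_le
          (fun k => mul_nonneg (mul_nonneg (Nat.cast_nonneg k) (hann k)) (pow_nonneg hs _))
          (fun k => ?_) hA1t₂
        exact mul_le_mul_of_nonneg_left (pow_le_pow_left₀ hs hst _)
          (mul_nonneg (Nat.cast_nonneg k) (hann k))
      have hA2sum : ∀ s, 0 ≤ s → s ≤ t₂ →
          Summable (fun k : ℕ => (k : ℝ) * ((k : ℝ) - 1) * a k * s ^ (k - 2)) := by
        intro s hs hst
        refine Summable.of_nonneg_of_le
          (fun k => mul_nonneg (mul_nonneg (hkk k) (hann k)) (pow_nonneg hs _))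
          (fun k => ?_) hA2t₂
        exact mul_le_mul_of_nonneg_left (pow_le_pow_left₀ hs hst _)
          (mul_nonneg (hkk k) (hann k))
      set A1 : ℝ → ℝ := fun s => ∑' k : ℕ, (k : ℝ) * a k * s ^ (k - 1) with hA1def
      set A2 : ℝ → ℝ := fun s => ∑' k : ℕ, (k : ℝ) * ((k : ℝ) - 1) * a k * s ^ (k - 2) with hA2def
      have hA2t₂nn : 0 ≤ A2 t₂ := tsum_nonneg
        (fun k => mul_nonneg (mul_nonneg (hkk k) (hann k)) (pow_nonneg ht₂0.le _))
      have hA2τnn : 0 ≤ A2 τ := tsum_nonneg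
        (fun k => mul_nonneg (mul_nonneg (hkk k) (hann k)) (pow_nonneg hτ0 _))
      have hA1τsum := hA1sum τ hτ0 hτt₂.le
      have hA2τsum := hA2sum τ hτ0 hτt₂.le
      -- Step A : 1 ≤ r * A1 τ
      have hstepA : ∀ h : ℝ, 0 < h → τ + h ≤ t₂ → 1 ≤ r * (A1 τ + h * A2 t₂) := by
        intro h hh ht
        have hτh0 : 0 ≤ τ + h := by linarith
        have hw := hcase (τ + h) (by linarith) ht
        have hsum1 : Summable (fun k => a k * (τ + h) ^ k) := hAsum_le _ hτh0 (by linarith)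
        have hsumA1τh : Summable (fun k : ℕ => (k : ℝ) * a k * (τ + h) ^ (k - 1)) :=
          hA1sum _ hτh0 ht
        have h1 : Av (τ + h) ≤ Av τ + h * A1 (τ + h) := by
          have hterm1 : ∀ k, a k * (τ + h) ^ k
              ≤ a k * τ ^ k + h * ((k : ℝ) * a k * (τ + h) ^ (k - 1)) := by
            intro k
            have hp := aux_pow_sub_pow_le hτ0 (by linarith : τ ≤ τ + h) k
            have hp' : (τ + h) ^ k - τ ^ k ≤ (k : ℝ) * (τ + h) ^ (k - 1) * h := by
              have he : τ + h - τ = h := by ring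
              rwa [he] at hp
            have h9 := mul_le_mul_of_nonneg_left hp' (hann k)
            rw [mul_sub] at h9
            have e : a k * ((k : ℝ) * (τ + h) ^ (k - 1) * h)
                = h * ((k : ℝ) * a k * (τ + h) ^ (k - 1)) := by ring
            linarith [h9, e.le, e.ge]
          calc Av (τ + h) ≤ ∑' k, (a k * τ ^ k + h * ((k : ℝ) * a k * (τ + h) ^ (k - 1))) :=
              Summable.tsum_le_tsum hterm1 hsum1 (hAτsum.add (hsumA1τh.mul_left h))
            _ = Av τ + h * A1 (τ + h) := by
                rw [Summable.tsum_add hAτsum (hsumA1τh.mul_left h), tsum_mul_left]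
        have h2 : A1 (τ + h) ≤ A1 τ + h * A2 t₂ := by
          have hterm2 : ∀ k : ℕ, (k : ℝ) * a k * (τ + h) ^ (k - 1)
              ≤ (k : ℝ) * a k * τ ^ (k - 1)
                + h * ((k : ℝ) * ((k : ℝ) - 1) * a k * t₂ ^ (k - 2)) := by
            intro k
            rcases Nat.eq_zero_or_pos k with hk0 | hk1
            · simp [hk0]
            · have hp := aux_pow_sub_pow_le hτ0 (by linarith : τ ≤ τ + h) (k - 1)
              have hka : 0 ≤ (k : ℝ) * a k := mul_nonneg (Nat.cast_nonneg k) (hann k)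
              have h5 := mul_le_mul_of_nonneg_left hp hka
              rw [mul_sub] at h5
              have hcast : ((k - 1 : ℕ) : ℝ) = (k : ℝ) - 1 := by
                have h6 : (1 : ℕ) ≤ k := hk1
                push_cast [h6]
                ring
              have hk1' : (0 : ℝ) ≤ (k : ℝ) - 1 := by
                have : (1 : ℝ) ≤ (k : ℝ) := by exact_mod_cast hk1
                linarith
              have hpow2 : (τ + h) ^ (k - 1 - 1) ≤ t₂ ^ (k - 2) := by
                rw [show k - 1 - 1 = k - 2 from by omega]
                exact pow_le_pow_left₀ hτh0 (by linarith) _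
              have step2 : (k : ℝ) * a k * (((k - 1 : ℕ) : ℝ) * (τ + h) ^ (k - 1 - 1) * (τ + h - τ))
                  = ((k : ℝ) * ((k : ℝ) - 1) * a k * h) * (τ + h) ^ (k - 1 - 1) := by
                rw [hcast]; ring
              have hcoef0 : 0 ≤ (k : ℝ) * ((k : ℝ) - 1) * a k * h :=
                mul_nonneg (mul_nonneg (hkk k) (hann k)) hh.le
              have step3 : ((k : ℝ) * ((k : ℝ) - 1) * a k * h) * (τ + h) ^ (k - 1 - 1)
                  ≤ ((k : ℝ) * ((k : ℝ) - 1) * a k * h) * t₂ ^ (k - 2) :=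
                mul_le_mul_of_nonneg_left hpow2 hcoef0
              have step4 : ((k : ℝ) * ((k : ℝ) - 1) * a k * h) * t₂ ^ (k - 2)
                  = h * ((k : ℝ) * ((k : ℝ) - 1) * a k * t₂ ^ (k - 2)) := by ring
              linarith [h5, step2.le, step2.ge, step3, step4.le, step4.ge]
          calc A1 (τ + h) ≤ ∑' k : ℕ, ((k : ℝ) * a k * τ ^ (k - 1)
                + h * ((k : ℝ) * ((k : ℝ) - 1) * a k * t₂ ^ (k - 2))) :=
              Summable.tsum_le_tsum hterm2 hsumA1τh (hA1τsum.add (hA2t₂.mul_left h))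
            _ = A1 τ + h * A2 t₂ := by
                rw [Summable.tsum_add hA1τsum (hA2t₂.mul_left h), tsum_mul_left]
        have h3 : τ + h ≤ r * Av τ + r * (h * (A1 τ + h * A2 t₂)) := by
          calc τ + h ≤ r * Av (τ + h) := hw
            _ ≤ r * (Av τ + h * A1 (τ + h)) := mul_le_mul_of_nonneg_left h1 hr.le
            _ ≤ r * (Av τ + h * (A1 τ + h * A2 t₂)) := by
                refine mul_le_mul_of_nonneg_left ?_ hr.le
                exact add_le_add_right (mul_le_mul_of_nonneg_left h2 hh.le) _
            _ = r * Av τ + r * (h * (A1 τ + h * A2 t₂)) := by ring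
        have h4 : h * 1 ≤ h * (r * (A1 τ + h * A2 t₂)) := by
          have h5 : h ≤ r * (h * (A1 τ + h * A2 t₂)) := by
            have := hτeq
            linarith
          calc h * 1 = h := mul_one h
            _ ≤ r * (h * (A1 τ + h * A2 t₂)) := h5
            _ = h * (r * (A1 τ + h * A2 t₂)) := by ring
        exact le_of_mul_le_mul_left h4 hh
      have hDge : 1 ≤ r * A1 τ := by
        by_contra hD'
        push_neg at hD'
        set B : ℝ := r * A2 t₂ with hBdef
        have hB0 : 0 ≤ B := mul_nonneg hr.le hA2t₂nn
        set h0 : ℝ := min (t₂ - τ) ((1 - r * A1 τ) / (B + 1)) with hh0def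
        have hh0pos : 0 < h0 :=
          lt_min (by linarith) (div_pos (by linarith) (by linarith))
        have hh0le : h0 ≤ (1 - r * A1 τ) / (B + 1) := min_le_right _ _
        have hA := hstepA h0 hh0pos (by
          have := min_le_left (t₂ - τ) ((1 - r * A1 τ) / (B + 1))
          linarith)
        have hexp : r * (A1 τ + h0 * A2 t₂) = r * A1 τ + h0 * B := by rw [hBdef]; ring
        have h6 : h0 * B ≤ ((1 - r * A1 τ) / (B + 1)) * B :=
          mul_le_mul_of_nonneg_right hh0le hB0
        have h7 : ((1 - r * A1 τ) / (B + 1)) * B < 1 - r * A1 τ := by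
          rw [div_mul_eq_mul_div, div_lt_iff₀ (by linarith)]
          nlinarith
        linarith [hA, hexp.le, hexp.ge]
      -- Step B : Taylor bound on Av near τ
      set CC : ℝ := r / 2 * A2 τ with hCCdef
      have hCC0 : 0 ≤ CC := mul_nonneg (by linarith) hA2τnn
      have hgB : ∀ u, 0 ≤ u → u ≤ τ → r * Av (τ - u) ≤ (τ - u) + CC * u ^ 2 := by
        intro u hu huτ
        have hτu0 : 0 ≤ τ - u := by linarith
        have hsum1 : Summable (fun k => a k * (τ - u) ^ k) := hAsum_at _ hτu0 (by linarith)
        have hterm1 : ∀ k, a k * (τ - u) ^ k + u * ((k : ℝ) * a k * τ ^ (k - 1))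
            ≤ a k * τ ^ k + u ^ 2 / 2 * ((k : ℝ) * ((k : ℝ) - 1) * a k * τ ^ (k - 2)) := by
          intro k
          have ht2 := aux_taylor2_pow hu huτ k
          have h9 := mul_le_mul_of_nonneg_left ht2 (hann k)
          have e1 : a k * ((τ - u) ^ k + (k : ℝ) * τ ^ (k - 1) * u)
              = a k * (τ - u) ^ k + u * ((k : ℝ) * a k * τ ^ (k - 1)) := by ring
          have e2 : a k * (τ ^ k + (k : ℝ) * ((k : ℝ) - 1) / 2 * τ ^ (k - 2) * u ^ 2)
              = a k * τ ^ k + u ^ 2 / 2 * ((k : ℝ) * ((k : ℝ) - 1) * a k * τ ^ (k - 2)) := by ring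
          rw [mul_add, mul_add] at h9
          linarith [h9, e1.le, e1.ge, e2.le, e2.ge]
        have hL : Summable (fun k => a k * (τ - u) ^ k + u * ((k : ℝ) * a k * τ ^ (k - 1))) :=
          hsum1.add (hA1τsum.mul_left u)
        have hRt : Summable (fun k => a k * τ ^ k
            + u ^ 2 / 2 * ((k : ℝ) * ((k : ℝ) - 1) * a k * τ ^ (k - 2))) :=
          hAτsum.add (hA2τsum.mul_left _)
        have h8 := Summable.tsum_le_tsum hterm1 hL hRt
        rw [Summable.tsum_add hsum1 (hA1τsum.mul_left u), Summable.tsum_add hAτsum (hA2τsum.mul_left _),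
          tsum_mul_left, tsum_mul_left] at h8
        -- h8 : Av (τ - u) + u * A1 τ ≤ Av τ + u^2/2 * A2 τ
        have h10 := mul_le_mul_of_nonneg_left h8 hr.le
        have h11 : r * (Av τ + u ^ 2 / 2 * A2 τ) = τ + CC * u ^ 2 := by
          rw [hCCdef, mul_add, ← hτeq]; ring
        have h12 : r * (Av (τ - u) + u * A1 τ) = r * Av (τ - u) + u * (r * A1 τ) := by ring
        have h13 : u * 1 ≤ u * (r * A1 τ) := mul_le_mul_of_nonneg_left hDge hu
        linarith [h10, h11.le, h11.ge, h12.le, h12.ge, h13]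
      -- Step C : square-root lower bound on τ - yv x
      have hstepC : ∀ x, 0 < x → x < r → r - x ≤ CC * (τ - yv x) ^ 2 := by
        intro x hx hxr
        have hv0 : 0 ≤ yv x := hyvnn x hx.le
        have hvτ : yv x ≤ τ := hyvle x hx.le hxr.le
        have hvx : yv x = x * Av (yv x) := hfx x hx.le hxr.le
        have hvsum : Summable (fun k => a k * (yv x) ^ k) := hAsum_at _ hv0 hvτ
        have hAvv1 : 1 ≤ Av (yv x) := hAv1 _ hv0 hvsum
        have hB := hgB (τ - yv x) (by linarith) (by linarith)
        rw [show τ - (τ - yv x) = yv x from by ring] at hB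
        have h3 : (r - x) * Av (yv x) ≤ CC * (τ - yv x) ^ 2 := by
          have e : (r - x) * Av (yv x) = r * Av (yv x) - x * Av (yv x) := by ring
          linarith [hB, e.le, e.ge, hvx.le, hvx.ge]
        calc r - x = (r - x) * 1 := (mul_one _).symm
          _ ≤ (r - x) * Av (yv x) := mul_le_mul_of_nonneg_left hAvv1 (by linarith)
          _ ≤ CC * (τ - yv x) ^ 2 := h3
      -- Step D : upper bound τ - yv x ≤ Kα * ε^(3/4)
      set Kα : ℝ := ∑' n, y n * r ^ n * (n : ℝ) ^ ((3 : ℝ) / 4) with hKdef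
      have hKr : r ≤ Kα := by
        have h := Summable.le_tsum hKsum 1 (fun j _ => mul_nonneg
          (mul_nonneg (hynn j) (pow_nonneg hr.le j)) (Real.rpow_nonneg (Nat.cast_nonneg j) _))
        simpa [hy1, Real.one_rpow] using h
      have hK0 : 0 < Kα := lt_of_lt_of_le hr hKr
      have hstepD : ∀ x, 0 ≤ x → x < r →
          τ - yv x ≤ Kα * ((r - x) / r) ^ ((3 : ℝ) / 4) := by
        intro x hx hxr
        set ε : ℝ := (r - x) / r with hεdef
        have hε0 : 0 < ε := div_pos (by linarith) hr
        have hxr0 : 0 ≤ x / r := div_nonneg hx hr.le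
        have hxr1 : x / r ≤ 1 := by rw [div_le_one hr]; linarith
        have hterm : ∀ n, y n * r ^ n - y n * x ^ n
            ≤ (y n * r ^ n * (n : ℝ) ^ ((3 : ℝ) / 4)) * ε ^ ((3 : ℝ) / 4) := by
          intro n
          have hxn : x ^ n = r ^ n * (x / r) ^ n := by
            rw [div_pow]
            field_simp
          have hkey : 1 - (x / r) ^ n ≤ ((n : ℝ) * ε) ^ ((3 : ℝ) / 4) := by
            rcases le_or_gt 1 ((n : ℝ) * ε) with hge | hlt
            · have h1 : 1 - (x / r) ^ n ≤ 1 := by nlinarith [pow_nonneg hxr0 n]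
              exact h1.trans (Real.one_le_rpow hge (by norm_num))
            · rcases Nat.eq_zero_or_pos n with hn0 | hn1
              · rw [hn0]
                simp only [pow_zero, Nat.cast_zero, zero_mul, sub_self]
                exact Real.rpow_nonneg le_rfl _
              · have hnε0 : 0 < (n : ℝ) * ε := mul_pos (by exact_mod_cast hn1) hε0
                have h2 := aux_one_sub_pow_le hxr0 hxr1 n
                have h3 : 1 - x / r = ε := by rw [hεdef]; field_simp
                calc 1 - (x / r) ^ n ≤ (n : ℝ) * (1 - x / r) := h2
                  _ = (n : ℝ) * ε := by rw [h3]
                  _ = ((n : ℝ) * ε) ^ (1 : ℝ) := (Real.rpow_one _).symm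
                  _ ≤ ((n : ℝ) * ε) ^ ((3 : ℝ) / 4) :=
                    Real.rpow_le_rpow_of_exponent_ge hnε0 hlt.le (by norm_num)
          have h4 : y n * r ^ n - y n * x ^ n = (y n * r ^ n) * (1 - (x / r) ^ n) := by
            rw [hxn]; ring
          have h5 : ((n : ℝ) * ε) ^ ((3 : ℝ) / 4)
              = (n : ℝ) ^ ((3 : ℝ) / 4) * ε ^ ((3 : ℝ) / 4) :=
            Real.mul_rpow (Nat.cast_nonneg n) hε0.le
          calc y n * r ^ n - y n * x ^ n = (y n * r ^ n) * (1 - (x / r) ^ n) := h4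
            _ ≤ (y n * r ^ n) * (((n : ℝ) * ε) ^ ((3 : ℝ) / 4)) :=
              mul_le_mul_of_nonneg_left hkey (mul_nonneg (hynn n) (pow_nonneg hr.le n))
            _ = (y n * r ^ n * (n : ℝ) ^ ((3 : ℝ) / 4)) * ε ^ ((3 : ℝ) / 4) := by
              rw [h5]; ring
        have hsub : τ - yv x = ∑' n, (y n * r ^ n - y n * x ^ n) :=
          (Summable.tsum_sub hSr (hsumx x hx hxr.le)).symm
        rw [hsub]
        calc (∑' n, (y n * r ^ n - y n * x ^ n))
            ≤ ∑' n, (y n * r ^ n * (n : ℝ) ^ ((3 : ℝ) / 4)) * ε ^ ((3 : ℝ) / 4) :=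
              Summable.tsum_le_tsum hterm (hSr.sub (hsumx x hx hxr.le)) (hKsum.mul_right _)
          _ = Kα * ε ^ ((3 : ℝ) / 4) := by rw [tsum_mul_right, hKdef]
      -- Step E : choose a point close to r and derive the contradiction
      set C' : ℝ := CC * Kα ^ 2 + 1 with hC'def
      have hC'0 : 0 < C' := by nlinarith [hCC0, sq_nonneg Kα]
      set ε₀ : ℝ := min (1 / 2) ((r / (2 * C')) ^ 2) with hε₀def
      have hε₀0 : 0 < ε₀ := lt_min (by norm_num) (by positivity)
      have hε₀1 : ε₀ ≤ 1 / 2 := min_le_left _ _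
      set x₀ : ℝ := r * (1 - ε₀) with hx₀def
      have hx₀0 : 0 < x₀ := by
        rw [hx₀def]
        exact mul_pos hr (by linarith)
      have hx₀r : x₀ < r := by
        rw [hx₀def]
        nlinarith
      have hεx : (r - x₀) / r = ε₀ := by
        rw [hx₀def]
        field_simp
        ring
      have hCx := hstepC x₀ hx₀0 hx₀r
      have hDx := hstepD x₀ hx₀0.le hx₀r
      rw [hεx] at hDx
      have hu0 : 0 ≤ τ - yv x₀ := by
        have := hyvle x₀ hx₀0.le hx₀r.le
        linarith
      have hsq : (τ - yv x₀) ^ 2 ≤ (Kα * ε₀ ^ ((3 : ℝ) / 4)) ^ 2 :=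
        pow_le_pow_left₀ hu0 hDx 2
      have hE : r - x₀ ≤ C' * (ε₀ ^ ((3 : ℝ) / 4)) ^ 2 := by
        calc r - x₀ ≤ CC * (τ - yv x₀) ^ 2 := hCx
          _ ≤ CC * (Kα * ε₀ ^ ((3 : ℝ) / 4)) ^ 2 := mul_le_mul_of_nonneg_left hsq hCC0
          _ = (CC * Kα ^ 2) * (ε₀ ^ ((3 : ℝ) / 4)) ^ 2 := by ring
          _ ≤ C' * (ε₀ ^ ((3 : ℝ) / 4)) ^ 2 := by
              refine mul_le_mul_of_nonneg_right ?_ (by positivity)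
              rw [hC'def]; linarith
      have hrx : r - x₀ = r * ε₀ := by rw [hx₀def]; ring
      have hpoweq : (ε₀ ^ ((3 : ℝ) / 4)) ^ 2 = ε₀ * ε₀ ^ ((1 : ℝ) / 2) := by
        rw [← Real.rpow_natCast (ε₀ ^ ((3 : ℝ) / 4)) 2, ← Real.rpow_mul hε₀0.le,
          show (3 : ℝ) / 4 * ((2 : ℕ) : ℝ) = 1 + 1 / 2 by push_cast; norm_num,
          Real.rpow_add hε₀0, Real.rpow_one]
      rw [hrx, hpoweq] at hE
      have h5 : r ≤ C' * ε₀ ^ ((1 : ℝ) / 2) := by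
        have h6 : r * ε₀ ≤ (C' * ε₀ ^ ((1 : ℝ) / 2)) * ε₀ := by
          calc r * ε₀ ≤ C' * (ε₀ * ε₀ ^ ((1 : ℝ) / 2)) := hE
            _ = (C' * ε₀ ^ ((1 : ℝ) / 2)) * ε₀ := by ring
        exact le_of_mul_le_mul_right h6 hε₀0
      have h7 : ε₀ ^ ((1 : ℝ) / 2) ≤ r / (2 * C') := by
        have h8 : ε₀ ≤ (r / (2 * C')) ^ 2 := min_le_right _ _
        have h9 : (0 : ℝ) ≤ r / (2 * C') := by positivity
        calc ε₀ ^ ((1 : ℝ) / 2) ≤ ((r / (2 * C')) ^ 2) ^ ((1 : ℝ) / 2) :=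
            Real.rpow_le_rpow hε₀0.le h8 (by norm_num)
          _ = r / (2 * C') := by
            rw [← Real.rpow_natCast (r / (2 * C')) 2, ← Real.rpow_mul h9,
              show ((2 : ℕ) : ℝ) * (1 / 2) = 1 by push_cast; norm_num, Real.rpow_one]
      have h10 : C' * ε₀ ^ ((1 : ℝ) / 2) ≤ r / 2 := by
        calc C' * ε₀ ^ ((1 : ℝ) / 2) ≤ C' * (r / (2 * C')) :=
            mul_le_mul_of_nonneg_left h7 hC'0.le
          _ = r / 2 := by
              field_simp
      linarith
end

section
/- The analytic function z ↦ ∑_{n≥0} b_n zⁿ, defined on the disk {z ∈ ℂ : |z| < 1/7}, admits an analytic continuation to the doubly slit plane Ω̃ = ℂ ∖ ((−∞, −1/2] ∪ [1/7, ∞)); that is, there exists a function analytic on Ω̃ that agrees with the power series on the disk. In particular, B extends analytically to a Delta-domain around its disk of convergence. -/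
open Filter
open scoped BigOperators

/-- The Laurent polynomial `M(x,y) = 1 + x + y + xy + x²y + xy² + (xy)²`,
as an element of the group algebra of `ℤ × ℤ` over `ℤ`. -/
noncomputable def Mp : AddMonoidAlgebra ℤ (ℤ × ℤ) :=
  AddMonoidAlgebra.single (0, 0) 1 + AddMonoidAlgebra.single (1, 0) 1 +
    AddMonoidAlgebra.single (0, 1) 1 + AddMonoidAlgebra.single (1, 1) 1 +
    AddMonoidAlgebra.single (2, 1) 1 + AddMonoidAlgebra.single (1, 2) 1 +
    AddMonoidAlgebra.single (2, 2) 1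

/-- The Laurent polynomial
`W(x,y) = x⁻²y⁻³(x²y³ − xy³ + x⁻¹y² − x⁻²y + x⁻³y⁻¹ − x⁻³y⁻² + x⁻²y⁻³ − x⁻¹y⁻³ + xy⁻² − x²y⁻¹ + x³y − x³y²)`. -/
noncomputable def Wp : AddMonoidAlgebra ℤ (ℤ × ℤ) :=
  AddMonoidAlgebra.single (-2, -3) 1 *
    (AddMonoidAlgebra.single (2, 3) 1 - AddMonoidAlgebra.single (1, 3) 1 +
      AddMonoidAlgebra.single (-1, 2) 1 - AddMonoidAlgebra.single (-2, 1) 1 +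
      AddMonoidAlgebra.single (-3, -1) 1 - AddMonoidAlgebra.single (-3, -2) 1 +
      AddMonoidAlgebra.single (-2, -3) 1 - AddMonoidAlgebra.single (-1, -3) 1 +
      AddMonoidAlgebra.single (1, -2) 1 - AddMonoidAlgebra.single (2, -1) 1 +
      AddMonoidAlgebra.single (3, 1) 1 - AddMonoidAlgebra.single (3, 2) 1)

/-- `bseq n` is the coefficient of `xⁿyⁿ` in `W·Mⁿ`,
i.e. `dim Inv_{G₂}(V(λ₁)^{⊗n})`, viewed as a real number. -/
noncomputable def bseq (n : ℕ) : ℝ := ((Wp * Mp ^ n).coeff ((n : ℤ), (n : ℤ)) : ℤ)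
/-- The doubly slit plane `Ω̃ = ℂ ∖ ((−∞, −1/2] ∪ [1/7, ∞))` (slits along the real axis). -/
def doublySlitPlane : Set ℂ :=
  {z : ℂ | ¬(z.im = 0 ∧ z.re ≤ -(1 / 2)) ∧ ¬(z.im = 0 ∧ 1 / 7 ≤ z.re)}

open MeasureTheory Complex Real

noncomputable def ch (k : ℤ × ℤ) (p : ℝ × ℝ) : ℂ :=
  Complex.exp (((k.1 * p.1 + k.2 * p.2 : ℝ) : ℂ) * Complex.I)

lemma ch_add (k l : ℤ × ℤ) (p : ℝ × ℝ) : ch (k + l) p = ch k p * ch l p := by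
  simp only [ch, ← Complex.exp_add]
  congr 1
  have h1 : ((k+l).1 : ℂ) = k.1 + l.1 := by push_cast [Prod.fst_add]; ring
  have h2 : ((k+l).2 : ℂ) = k.2 + l.2 := by push_cast [Prod.snd_add]; ring
  push_cast [Prod.fst_add, Prod.snd_add]
  ring

lemma ch_zero (p : ℝ × ℝ) : ch 0 p = 1 := by simp [ch]

lemma norm_ch (k : ℤ × ℤ) (p : ℝ × ℝ) : ‖ch k p‖ = 1 := by
  rw [ch]
  exact Complex.norm_exp_ofReal_mul_I _

lemma continuous_ch (k : ℤ × ℤ) : Continuous (ch k) := by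
  apply Complex.continuous_exp.comp
  fun_prop

noncomputable def evhom (p : ℝ × ℝ) : AddMonoidAlgebra ℤ (ℤ × ℤ) →ₐ[ℤ] ℂ :=
  AddMonoidAlgebra.lift ℤ ℂ (ℤ × ℤ)
    { toFun := fun k => ch (Multiplicative.toAdd k) p
      map_one' := ch_zero p
      map_mul' := fun k l => ch_add _ _ p }

lemma evhom_single (p : ℝ × ℝ) (k : ℤ × ℤ) (r : ℤ) :
    evhom p (AddMonoidAlgebra.single k r) = (r : ℂ) * ch k p := by
  rw [evhom, AddMonoidAlgebra.lift_single]
  simp [zsmul_eq_mul]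

noncomputable def sqr : Set (ℝ × ℝ) := Set.Ioc 0 (2 * π) ×ˢ Set.Ioc 0 (2 * π)

lemma integral_exp_single (k : ℤ) :
    (∫ x in Set.Ioc (0:ℝ) (2 * π), Complex.exp (((k * x : ℝ) : ℂ) * Complex.I)) =
      if k = 0 then ((2 * π : ℝ) : ℂ) else 0 := by
  have h2 : (0:ℝ) ≤ 2 * π := by positivity
  rw [← intervalIntegral.integral_of_le h2]
  rcases eq_or_ne k 0 with hk | hk
  · simp [hk]
  · have hc : ((k : ℂ) * Complex.I) ≠ 0 := by
      simp [Complex.I_ne_zero, hk]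
    have : ∀ x : ℝ, (((k * x : ℝ) : ℂ) * Complex.I) = ((k : ℂ) * Complex.I) * (x : ℂ) := by
      intro x; push_cast; ring
    simp_rw [this]
    rw [integral_exp_mul_complex hc]
    have : Complex.exp ((k : ℂ) * Complex.I * ((2 * π : ℝ) : ℂ)) = 1 := by
      rw [show (k : ℂ) * Complex.I * ((2 * π : ℝ) : ℂ) = (k : ℤ) * (2 * (π : ℂ) * Complex.I) by
        push_cast; ring]
      exact Complex.exp_int_mul_two_pi_mul_I k
    rw [this]
    simp [hk]

lemma integral_ch (k : ℤ × ℤ) :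
    (∫ p in sqr, ch k p) = if k = 0 then (((2 * π) ^ 2 : ℝ) : ℂ) else 0 := by
  have hsplit : ∀ p : ℝ × ℝ, ch k p =
      Complex.exp (((k.1 * p.1 : ℝ) : ℂ) * Complex.I) *
        Complex.exp (((k.2 * p.2 : ℝ) : ℂ) * Complex.I) := by
    intro p
    rw [ch, ← Complex.exp_add]
    congr 1
    push_cast
    ring
  simp_rw [hsplit]
  rw [sqr, show (volume : Measure (ℝ × ℝ)) = volume.prod volume from Measure.volume_eq_prod ℝ ℝ,
    ← Measure.prod_restrict]
  rw [MeasureTheory.integral_prod_mul (μ := volume.restrict (Set.Ioc 0 (2*π)))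
    (ν := volume.restrict (Set.Ioc 0 (2*π)))
    (fun x : ℝ => Complex.exp (((k.1 * x : ℝ) : ℂ) * Complex.I))
    (fun y : ℝ => Complex.exp (((k.2 * y : ℝ) : ℂ) * Complex.I))]
  rw [integral_exp_single k.1, integral_exp_single k.2]
  rcases eq_or_ne k 0 with hk | hk
  · rw [hk]; simp; push_cast; ring
  · have : k.1 ≠ 0 ∨ k.2 ≠ 0 := by
      by_contra h
      push_neg at h
      exact hk (Prod.ext h.1 h.2)
    rcases this with h | h
    · simp [h, hk]
    · simp [h, hk]

instance sqr_finite : IsFiniteMeasure (volume.restrict sqr) := by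
  rw [sqr, show (volume : Measure (ℝ × ℝ)) = volume.prod volume from Measure.volume_eq_prod ℝ ℝ,
    ← Measure.prod_restrict]
  infer_instance

lemma integrable_bdd {f : ℝ × ℝ → ℂ} (hf : Continuous f) {C : ℝ}
    (hC : ∀ p, ‖f p‖ ≤ C) : IntegrableOn f sqr := by
  refine Integrable.mono' (integrable_const C) hf.aestronglyMeasurable ?_
  exact Filter.Eventually.of_forall hC

lemma integrable_ch (k : ℤ × ℤ) : IntegrableOn (ch k) sqr :=
  integrable_bdd (continuous_ch k) (fun p => (norm_ch k p).le)

/-- Coefficient extraction. -/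
lemma integral_evhom (P : AddMonoidAlgebra ℤ (ℤ × ℤ)) (m : ℤ × ℤ) :
    (∫ p in sqr, evhom p P * ch (-m) p) = (((2 * π) ^ 2 : ℝ) : ℂ) * (P.coeff m : ℂ) := by
  have hev : ∀ p : ℝ × ℝ, evhom p P * ch (-m) p =
      ∑ k ∈ P.coeff.support, (P.coeff k : ℂ) * ch (k - m) p := by
    intro p
    have : evhom p P = ∑ k ∈ P.coeff.support, (P.coeff k : ℂ) * ch k p := by
      conv_lhs => rw [← AddMonoidAlgebra.ofCoeff_coeff P, ← Finsupp.sum_single P.coeff]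
      rw [Finsupp.sum, AddMonoidAlgebra.ofCoeff_sum, map_sum]
      exact Finset.sum_congr rfl fun k _ => evhom_single p k (P.coeff k)
    rw [this, Finset.sum_mul]
    refine Finset.sum_congr rfl fun k _ => ?_
    rw [mul_assoc, ← ch_add, sub_eq_add_neg]
  simp_rw [hev]
  rw [MeasureTheory.integral_finset_sum _ (fun k _ => ((integrable_ch (k - m)).const_mul _))]
  have : ∀ k ∈ P.coeff.support, (∫ p in sqr, (P.coeff k : ℂ) * ch (k - m) p) =
      if k = m then (((2 * π) ^ 2 : ℝ) : ℂ) * (P.coeff k : ℂ) else 0 := by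
    intro k _
    rw [MeasureTheory.integral_const_mul, integral_ch]
    rcases eq_or_ne k m with h | h
    · simp [h, mul_comm]
    · have : k - m ≠ 0 := sub_ne_zero.mpr h
      simp [this, h]
  rw [Finset.sum_congr rfl this, Finset.sum_ite_eq' P.coeff.support m
    (fun k => (((2 * π) ^ 2 : ℝ) : ℂ) * (P.coeff k : ℂ))]
  rcases Finset.decidableMem m P.coeff.support with h | h
  · simp [Finsupp.notMem_support_iff.mp h]
  · simp [h]

noncomputable def Gr (p : ℝ × ℝ) : ℝ :=
  1 + 2 * Real.cos p.1 + 2 * Real.cos p.2 + 2 * Real.cos (p.1 + p.2)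

lemma ch_pair (a b : ℤ) (p : ℝ × ℝ) :
    ch (a, b) p = Complex.exp (((a * p.1 + b * p.2 : ℝ) : ℂ) * Complex.I) := rfl

lemma two_cos_exp (x : ℝ) :
    Complex.exp (((x : ℝ) : ℂ) * Complex.I) + Complex.exp (((-x : ℝ) : ℂ) * Complex.I)
      = ((2 * Real.cos x : ℝ) : ℂ) := by
  push_cast
  exact (Complex.two_cos _).symm

lemma ch_eq (a b : ℤ) (x : ℝ) (p : ℝ × ℝ) (h : (a * p.1 + b * p.2 : ℝ) = x) :
    ch (a, b) p = Complex.exp (((x : ℝ) : ℂ) * Complex.I) := by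
  rw [ch_pair, h]

lemma evM (p : ℝ × ℝ) : evhom p Mp * ch (-1, -1) p = ((Gr p : ℝ) : ℂ) := by
  have key : ∀ a b : ℤ, ch (a, b) p * ch (-1, -1) p = ch (a - 1, b - 1) p := by
    intro a b
    rw [← ch_add]
    norm_num [Prod.mk_add_mk, sub_eq_add_neg]
  have keyx : ∀ (a b : ℤ) (x : ℝ), (((a - 1 : ℤ) : ℝ) * p.1 + ((b - 1 : ℤ) : ℝ) * p.2 : ℝ) = x →
      ch (a, b) p * ch (-1, -1) p = Complex.exp (((x : ℝ) : ℂ) * Complex.I) := by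
    intro a b x h
    rw [key a b, ch_eq _ _ x p h]
  have hM : evhom p Mp = ch (0, 0) p + ch (1, 0) p + ch (0, 1) p + ch (1, 1) p +
      ch (2, 1) p + ch (1, 2) p + ch (2, 2) p := by
    simp only [Mp, map_add, evhom_single]
    push_cast
    ring
  rw [hM, add_mul, add_mul, add_mul, add_mul, add_mul, add_mul,
    keyx 0 0 (-(p.1 + p.2)) (by push_cast; ring), keyx 1 0 (-p.2) (by push_cast; ring),
    keyx 0 1 (-p.1) (by push_cast; ring), keyx 1 1 0 (by push_cast; ring),
    keyx 2 1 p.1 (by push_cast; ring), keyx 1 2 p.2 (by push_cast; ring),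
    keyx 2 2 (p.1 + p.2) (by push_cast; ring),
    show ((0 : ℝ) : ℂ) * Complex.I = 0 by norm_num, Complex.exp_zero]
  have e1 := two_cos_exp p.1
  have e2 := two_cos_exp p.2
  have e3 := two_cos_exp (p.1 + p.2)
  simp only [Gr]
  push_cast at e1 e2 e3 ⊢
  linear_combination e1 + e2 + e3

noncomputable def Wf (p : ℝ × ℝ) : ℂ := evhom p Wp

lemma Wf_eq (p : ℝ × ℝ) : Wf p = ch (-2, -3) p *
    (ch (2, 3) p - ch (1, 3) p + ch (-1, 2) p - ch (-2, 1) p + ch (-3, -1) p - ch (-3, -2) p +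
      ch (-2, -3) p - ch (-1, -3) p + ch (1, -2) p - ch (2, -1) p + ch (3, 1) p - ch (3, 2) p) := by
  simp only [Wf, Wp, map_mul, map_add, map_sub, evhom_single]
  push_cast
  ring

lemma continuous_Wf : Continuous Wf := by
  have : Wf = fun p => ch (-2, -3) p *
    (ch (2, 3) p - ch (1, 3) p + ch (-1, 2) p - ch (-2, 1) p + ch (-3, -1) p - ch (-3, -2) p +
      ch (-2, -3) p - ch (-1, -3) p + ch (1, -2) p - ch (2, -1) p + ch (3, 1) p - ch (3, 2) p) :=
    funext Wf_eq
  rw [this]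
  refine (continuous_ch _).mul ?_
  exact (((((((((((continuous_ch _).sub (continuous_ch _)).add (continuous_ch _)).sub (continuous_ch _)).add (continuous_ch _)).sub (continuous_ch _)).add (continuous_ch _)).sub (continuous_ch _)).add (continuous_ch _)).sub (continuous_ch _)).add (continuous_ch _)).sub (continuous_ch _)

lemma norm_Wf_le (p : ℝ × ℝ) : ‖Wf p‖ ≤ 12 := by
  have hadd : ∀ (a b : ℂ) (m : ℝ), ‖a‖ ≤ m → ‖b‖ = 1 → ‖a + b‖ ≤ m + 1 := by
    intro a b m ha hb
    calc ‖a + b‖ ≤ ‖a‖ + ‖b‖ := norm_add_le _ _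
    _ ≤ m + 1 := by rw [hb]; linarith
  have hsub : ∀ (a b : ℂ) (m : ℝ), ‖a‖ ≤ m → ‖b‖ = 1 → ‖a - b‖ ≤ m + 1 := by
    intro a b m ha hb
    calc ‖a - b‖ ≤ ‖a‖ + ‖b‖ := norm_sub_le _ _
    _ ≤ m + 1 := by rw [hb]; linarith
  rw [Wf_eq]
  refine (norm_mul_le _ _).trans ?_
  rw [norm_ch, one_mul]
  have h1 : ‖ch (2, 3) p‖ ≤ 1 := (norm_ch _ _).le
  have b2 := hsub _ (ch (1, 3) p) 1 h1 (norm_ch _ _)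
  have b3 := hadd _ (ch (-1, 2) p) 2 (by linarith [b2]) (norm_ch _ _)
  have b4 := hsub _ (ch (-2, 1) p) 3 (by linarith [b3]) (norm_ch _ _)
  have b5 := hadd _ (ch (-3, -1) p) 4 (by linarith [b4]) (norm_ch _ _)
  have b6 := hsub _ (ch (-3, -2) p) 5 (by linarith [b5]) (norm_ch _ _)
  have b7 := hadd _ (ch (-2, -3) p) 6 (by linarith [b6]) (norm_ch _ _)
  have b8 := hsub _ (ch (-1, -3) p) 7 (by linarith [b7]) (norm_ch _ _)
  have b9 := hadd _ (ch (1, -2) p) 8 (by linarith [b8]) (norm_ch _ _)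
  have b10 := hsub _ (ch (2, -1) p) 9 (by linarith [b9]) (norm_ch _ _)
  have b11 := hadd _ (ch (3, 1) p) 10 (by linarith [b10]) (norm_ch _ _)
  have b12 := hsub _ (ch (3, 2) p) 11 (by linarith [b11]) (norm_ch _ _)
  linarith [b12]

lemma Gr_le (p : ℝ × ℝ) : Gr p ≤ 7 := by
  have := Real.cos_le_one p.1
  have := Real.cos_le_one p.2
  have := Real.cos_le_one (p.1 + p.2)
  simp only [Gr]
  linarith

lemma neg_two_le_Gr (p : ℝ × ℝ) : -2 ≤ Gr p := by
  simp only [Gr]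
  nlinarith [sq_nonneg (1 + Real.cos p.1 + Real.cos p.2),
    sq_nonneg (Real.sin p.1 - Real.sin p.2), Real.sin_sq_add_cos_sq p.1,
    Real.sin_sq_add_cos_sq p.2, Real.cos_add p.1 p.2]

lemma abs_Gr_le (p : ℝ × ℝ) : |Gr p| ≤ 7 := by
  rw [abs_le]
  exact ⟨by linarith [neg_two_le_Gr p], Gr_le p⟩

lemma continuous_Gr : Continuous Gr := by
  unfold Gr
  fun_prop

lemma slit_ne {z : ℂ} (hz : z ∈ doublySlitPlane) {t : ℝ} (h1 : -2 ≤ t) (h2 : t ≤ 7) :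
    (1 : ℂ) - z * (t : ℝ) ≠ 0 := by
  intro h
  have ht : (t : ℝ) ≠ 0 := by
    rintro rfl
    simp at h
  have hzz : z = ((t⁻¹ : ℝ) : ℂ) := by
    have h' : z * (t : ℂ) = 1 := by linear_combination -h
    have htc : (t : ℂ) ≠ 0 := Complex.ofReal_ne_zero.mpr ht
    rw [Complex.ofReal_inv]
    exact eq_inv_of_mul_eq_one_left h'
  have him : z.im = 0 := by rw [hzz]; simp
  have hre : z.re = t⁻¹ := by rw [hzz]; simp
  rcases lt_or_gt_of_ne ht with hneg | hpos
  · refine hz.1 ⟨him, ?_⟩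
    rw [hre]
    have hinv : t * t⁻¹ = 1 := mul_inv_cancel₀ ht
    nlinarith
  · refine hz.2 ⟨him, ?_⟩
    rw [hre]
    have hinv : t * t⁻¹ = 1 := mul_inv_cancel₀ ht
    nlinarith

lemma isOpen_doublySlitPlane : IsOpen doublySlitPlane := by
  have : doublySlitPlane = ({z : ℂ | z.im = 0 ∧ z.re ≤ -(1 / 2)} ∪
      {z : ℂ | z.im = 0 ∧ 1 / 7 ≤ z.re})ᶜ := by
    ext z
    simp only [doublySlitPlane, Set.mem_setOf_eq, Set.mem_compl_iff, Set.mem_union, not_or]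
  rw [this]
  refine (IsClosed.union ?_ ?_).isOpen_compl
  · exact (isClosed_eq Complex.continuous_im continuous_const).inter
      (isClosed_le Complex.continuous_re continuous_const)
  · exact (isClosed_eq Complex.continuous_im continuous_const).inter
      (isClosed_le continuous_const Complex.continuous_re)

lemma ch_pow (k : ℤ × ℤ) (p : ℝ × ℝ) (n : ℕ) : ch k p ^ n = ch (n • k) p := by
  induction n with
  | zero => simp [ch_zero]
  | succ n ih => rw [pow_succ, ih, ← ch_add, succ_nsmul]

noncomputable def Bfun (z : ℂ) : ℂ :=
  (((2 * π) ^ 2 : ℝ) : ℂ)⁻¹ * ∫ p in sqr, Wf p * ((1 : ℂ) - z * ((Gr p : ℝ) : ℂ))⁻¹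

lemma exists_min {z₀ : ℂ} (hz : z₀ ∈ doublySlitPlane) :
    ∃ m : ℝ, 0 < m ∧ ∀ t : ℝ, -2 ≤ t → t ≤ 7 → m ≤ ‖(1 : ℂ) - z₀ * (t : ℝ)‖ := by
  have hcont : ContinuousOn (fun t : ℝ => ‖(1 : ℂ) - z₀ * (t : ℝ)‖) (Set.Icc (-2) 7) := by
    fun_prop
  obtain ⟨t₀, ht₀, hmin⟩ := isCompact_Icc.exists_isMinOn ⟨-2, by norm_num⟩ hcont
  refine ⟨‖(1 : ℂ) - z₀ * (t₀ : ℝ)‖, ?_, fun t h1 h2 => ?_⟩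
  · rw [norm_pos_iff]
    exact slit_ne hz ht₀.1 ht₀.2
  · exact isMinOn_iff.mp hmin t ⟨h1, h2⟩

lemma ball_bound {z₀ : ℂ} {m : ℝ} (hm : ∀ t : ℝ, -2 ≤ t → t ≤ 7 → m ≤ ‖(1 : ℂ) - z₀ * (t : ℝ)‖)
    {z : ℂ} (hz : z ∈ Metric.ball z₀ (m / 14)) (p : ℝ × ℝ) :
    m / 2 ≤ ‖(1 : ℂ) - z * ((Gr p : ℝ) : ℂ)‖ := by
  have hd : ‖z - z₀‖ < m / 14 := by
    rw [← dist_eq_norm]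
    exact Metric.mem_ball.mp hz
  have key : (1 : ℂ) - z * ((Gr p : ℝ) : ℂ) =
      ((1 : ℂ) - z₀ * ((Gr p : ℝ) : ℂ)) - (z - z₀) * ((Gr p : ℝ) : ℂ) := by ring
  rw [key]
  have h1 := hm (Gr p) (neg_two_le_Gr p) (Gr_le p)
  have h2 : ‖(z - z₀) * ((Gr p : ℝ) : ℂ)‖ ≤ (m / 14) * 7 := by
    rw [norm_mul, Complex.norm_real, Real.norm_eq_abs]
    exact mul_le_mul hd.le (abs_Gr_le p) (abs_nonneg _) ((norm_nonneg _).trans hd.le)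
  calc m / 2 ≤ ‖(1 : ℂ) - z₀ * ((Gr p : ℝ) : ℂ)‖ - ‖(z - z₀) * ((Gr p : ℝ) : ℂ)‖ := by linarith
  _ ≤ _ := norm_sub_norm_le _ _

lemma measurable_inner (z : ℂ) :
    AEStronglyMeasurable (fun p : ℝ × ℝ => Wf p * ((1 : ℂ) - z * ((Gr p : ℝ) : ℂ))⁻¹)
      (volume.restrict sqr) := by
  refine (continuous_Wf.measurable.mul ?_).aestronglyMeasurable
  exact ((measurable_const.sub
    (measurable_const.mul (Complex.measurable_ofReal.comp continuous_Gr.measurable))).inv)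

lemma diff_integral {z₀ : ℂ} (hz : z₀ ∈ doublySlitPlane) :
    DifferentiableAt ℂ (fun z => ∫ p in sqr, Wf p * ((1 : ℂ) - z * ((Gr p : ℝ) : ℂ))⁻¹) z₀ := by
  obtain ⟨m, hm0, hm⟩ := exists_min hz
  set μ := volume.restrict sqr
  set F : ℂ → ℝ × ℝ → ℂ := fun z p => Wf p * ((1 : ℂ) - z * ((Gr p : ℝ) : ℂ))⁻¹ with hF
  set F' : ℂ → ℝ × ℝ → ℂ := fun z p =>
    Wf p * (((Gr p : ℝ) : ℂ) / ((1 : ℂ) - z * ((Gr p : ℝ) : ℂ)) ^ 2) with hF'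
  have hmain := hasDerivAt_integral_of_dominated_loc_of_deriv_le (F := F) (F' := F')
    (x₀ := z₀) (μ := μ) (bound := fun _ => 12 * (7 / (m / 2) ^ 2))
    (Metric.ball_mem_nhds z₀ (half_pos (by positivity : (0:ℝ) < m / 7)))
    (Filter.Eventually.of_forall fun z => measurable_inner z)
    ?_ ?_ ?_ (integrable_const _) ?_
  · exact hmain.2.differentiableAt
  · -- Integrable (F z₀)
    have hcont : Continuous (F z₀) := by
      refine continuous_Wf.mul (Continuous.inv₀ ?_ ?_)
      · exact continuous_const.sub (continuous_const.mul
          (Complex.continuous_ofReal.comp continuous_Gr))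
      · intro p
        exact slit_ne hz (neg_two_le_Gr p) (Gr_le p)
    refine integrable_bdd hcont (C := 12 * m⁻¹) fun p => ?_
    rw [hF, norm_mul, norm_inv]
    have h1 := hm (Gr p) (neg_two_le_Gr p) (Gr_le p)
    have h2 : ‖(1 : ℂ) - z₀ * ((Gr p : ℝ) : ℂ)‖⁻¹ ≤ m⁻¹ := by
      apply inv_anti₀ hm0 h1
    exact mul_le_mul (norm_Wf_le p) h2 (by positivity) (by norm_num)
  · -- AEStronglyMeasurable (F' z₀)
    refine (continuous_Wf.measurable.mul ?_).aestronglyMeasurable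
    apply Measurable.div
    · exact Complex.measurable_ofReal.comp continuous_Gr.measurable
    · exact ((measurable_const.sub (measurable_const.mul
        (Complex.measurable_ofReal.comp continuous_Gr.measurable))).pow_const 2)
  · -- bound on ball
    refine Filter.Eventually.of_forall fun p => fun z hzb => ?_
    have hb : m / 2 ≤ ‖(1 : ℂ) - z * ((Gr p : ℝ) : ℂ)‖ := by
      refine ball_bound hm ?_ p
      have : m / 14 = m / 7 / 2 := by ring
      rwa [← this] at hzb
    rw [hF', norm_mul, norm_div, norm_pow, Complex.norm_real, Real.norm_eq_abs]
    have hden : (m / 2) ^ 2 ≤ ‖(1 : ℂ) - z * ((Gr p : ℝ) : ℂ)‖ ^ 2 := by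
      apply pow_le_pow_left₀ (by positivity) hb
    have h2 : |Gr p| / ‖(1 : ℂ) - z * ((Gr p : ℝ) : ℂ)‖ ^ 2 ≤ 7 / (m / 2) ^ 2 := by
      apply div_le_div₀ (by positivity) (abs_Gr_le p) (by positivity) hden
    exact mul_le_mul (norm_Wf_le p) h2 (by positivity) (by norm_num)
  · -- differentiability
    refine Filter.Eventually.of_forall fun p => fun z hzb => ?_
    have hb : m / 2 ≤ ‖(1 : ℂ) - z * ((Gr p : ℝ) : ℂ)‖ := by
      refine ball_bound hm ?_ p
      have : m / 14 = m / 7 / 2 := by ring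
      rwa [← this] at hzb
    have hne : (1 : ℂ) - z * ((Gr p : ℝ) : ℂ) ≠ 0 := by
      intro h
      rw [h, norm_zero] at hb
      linarith
    have hd : HasDerivAt (fun z : ℂ => (1 : ℂ) - z * ((Gr p : ℝ) : ℂ))
        (-((Gr p : ℝ) : ℂ)) z := by
      simpa using ((hasDerivAt_id z).mul_const (((Gr p : ℝ) : ℂ))).const_sub 1
    have := (hd.inv hne).const_mul (Wf p)
    refine this.congr_deriv ?_
    rw [hF']
    simp only [neg_neg]

lemma analyticOnNhd_Bfun : AnalyticOnNhd ℂ Bfun doublySlitPlane := by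
  apply DifferentiableOn.analyticOnNhd _ isOpen_doublySlitPlane
  intro z hz
  apply DifferentiableAt.differentiableWithinAt
  exact (diff_integral hz).const_mul _

lemma Wf_Gr_pow (p : ℝ × ℝ) (n : ℕ) :
    Wf p * ((Gr p : ℝ) : ℂ) ^ n = evhom p (Wp * Mp ^ n) * ch (-((n : ℤ), (n : ℤ))) p := by
  have h1 : ((Gr p : ℝ) : ℂ) ^ n = (evhom p Mp) ^ n * ch (-1, -1) p ^ n := by
    rw [← mul_pow, evM]
  have h2 : ch (-1, -1) p ^ n = ch (-((n : ℤ), (n : ℤ))) p := by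
    rw [ch_pow]
    congr 1
    ext
    · simp
    · simp
  rw [h1, h2, map_mul, map_pow, Wf]
  ring

lemma integral_Wf_Gr_pow (n : ℕ) :
    (∫ p in sqr, Wf p * ((Gr p : ℝ) : ℂ) ^ n) = (((2 * π) ^ 2 : ℝ) : ℂ) * ((bseq n : ℝ) : ℂ) := by
  have : ∀ p : ℝ × ℝ, Wf p * ((Gr p : ℝ) : ℂ) ^ n
      = evhom p (Wp * Mp ^ n) * ch (-((n : ℤ), (n : ℤ))) p := fun p => Wf_Gr_pow p n
  simp_rw [this]
  rw [integral_evhom (Wp * Mp ^ n) ((n : ℤ), (n : ℤ))]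
  congr 1

lemma continuous_term (n : ℕ) (z : ℂ) :
    Continuous (fun p : ℝ × ℝ => Wf p * ((Gr p : ℝ) : ℂ) ^ n * z ^ n) :=
  (continuous_Wf.mul
    ((Complex.continuous_ofReal.comp continuous_Gr).pow n)).mul continuous_const

lemma norm_term_le (n : ℕ) (z : ℂ) (p : ℝ × ℝ) :
    ‖Wf p * ((Gr p : ℝ) : ℂ) ^ n * z ^ n‖ ≤ 12 * (7 * ‖z‖) ^ n := by
  rw [norm_mul, norm_mul, norm_pow, norm_pow, Complex.norm_real, Real.norm_eq_abs, mul_pow]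
  have h1 : |Gr p| ^ n ≤ 7 ^ n := pow_le_pow_left₀ (abs_nonneg _) (abs_Gr_le p) n
  have := norm_Wf_le p
  have h0 : (0:ℝ) ≤ |Gr p| ^ n := by positivity
  have h2 : ‖Wf p‖ * |Gr p| ^ n ≤ 12 * 7 ^ n :=
    mul_le_mul this h1 h0 (by norm_num)
  have h3 : (0:ℝ) ≤ ‖z‖ ^ n := by positivity
  calc ‖Wf p‖ * |Gr p| ^ n * ‖z‖ ^ n ≤ 12 * 7 ^ n * ‖z‖ ^ n := mul_le_mul_of_nonneg_right h2 h3
  _ = 12 * (7 ^ n * ‖z‖ ^ n) := by ring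

lemma Bfun_series {z : ℂ} (hz : ‖z‖ < 1 / 7) :
    Bfun z = ∑' n : ℕ, ((bseq n : ℝ) : ℂ) * z ^ n := by
  have h7 : 7 * ‖z‖ < 1 := by linarith
  have hlt : ∀ p : ℝ × ℝ, ‖z * ((Gr p : ℝ) : ℂ)‖ < 1 := by
    intro p
    rw [norm_mul, Complex.norm_real, Real.norm_eq_abs]
    calc ‖z‖ * |Gr p| ≤ ‖z‖ * 7 := by
          exact mul_le_mul_of_nonneg_left (abs_Gr_le p) (norm_nonneg z)
    _ < 1 := by linarith
  have hgeo : ∀ p : ℝ × ℝ, Wf p * ((1 : ℂ) - z * ((Gr p : ℝ) : ℂ))⁻¹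
      = ∑' n : ℕ, Wf p * ((Gr p : ℝ) : ℂ) ^ n * z ^ n := by
    intro p
    rw [← tsum_geometric_of_norm_lt_one (hlt p), ← tsum_mul_left]
    congr 1
    ext n
    rw [mul_pow]
    ring
  have hint : ∀ n : ℕ, IntegrableOn (fun p => Wf p * ((Gr p : ℝ) : ℂ) ^ n * z ^ n) sqr :=
    fun n => integrable_bdd (continuous_term n z) (norm_term_le n z)
  have hsum : Summable fun n : ℕ =>
      ∫ p in sqr, ‖Wf p * ((Gr p : ℝ) : ℂ) ^ n * z ^ n‖ := by
    refine Summable.of_nonneg_of_le (fun n => ?_) (fun n => ?_)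
      (((summable_geometric_of_lt_one (by positivity) h7).mul_left
        (12 * ((volume.restrict sqr) Set.univ).toReal)))
    · positivity
    · calc (∫ p in sqr, ‖Wf p * ((Gr p : ℝ) : ℂ) ^ n * z ^ n‖)
          ≤ ∫ _ in sqr, 12 * (7 * ‖z‖) ^ n := by
            refine integral_mono ((hint n).norm) (integrable_const _) ?_
            exact fun p => norm_term_le n z p
      _ = ((volume.restrict sqr) Set.univ).toReal * (12 * (7 * ‖z‖) ^ n) := by
            rw [integral_const, smul_eq_mul, measureReal_def]
      _ = 12 * ((volume.restrict sqr) Set.univ).toReal * (7 * ‖z‖) ^ n := by ring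
  rw [Bfun]
  simp_rw [hgeo]
  rw [← MeasureTheory.integral_tsum_of_summable_integral_norm hint hsum]
  have hI : ∀ n : ℕ, (∫ p in sqr, Wf p * ((Gr p : ℝ) : ℂ) ^ n * z ^ n)
      = (((2 * π) ^ 2 : ℝ) : ℂ) * (((bseq n : ℝ) : ℂ) * z ^ n) := by
    intro n
    rw [show (fun p => Wf p * ((Gr p : ℝ) : ℂ) ^ n * z ^ n)
        = (fun p => (Wf p * ((Gr p : ℝ) : ℂ) ^ n) * z ^ n) from rfl,
      MeasureTheory.integral_mul_const, integral_Wf_Gr_pow n]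
    ring
  simp_rw [hI]
  rw [tsum_mul_left, ← mul_assoc, inv_mul_cancel₀, one_mul]
  · exact Complex.ofReal_ne_zero.mpr (by positivity)

/-- The analytic function `z ↦ ∑ₙ bₙzⁿ` on the disc `{|z| < 1/7}` admits an analytic
continuation to the doubly slit plane `Ω̃ = ℂ ∖ ((−∞,−1/2] ∪ [1/7,∞))`; in particular `B`
extends analytically to a Delta-domain
`{z : |z| < 1/7 + ε, |Arg(z − 1/7)| > θ}` around its disc of convergence. -/
theorem B_extends_to_slit_plane :
    ∃ f : ℂ → ℂ, AnalyticOnNhd ℂ f doublySlitPlane ∧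
      (∀ z : ℂ, ‖z‖ < 1 / 7 → f z = ∑' n : ℕ, (bseq n : ℂ) * z ^ n) ∧
      ∃ ε : ℝ, 0 < ε ∧ ∃ θ ∈ Set.Ioo (0 : ℝ) (Real.pi / 2),
        {z : ℂ | ‖z‖ < 1 / 7 + ε ∧ θ < |Complex.arg (z - 1 / 7)|} ⊆ doublySlitPlane := by
  have hpi := Real.pi_pos
  refine ⟨Bfun, analyticOnNhd_Bfun, fun z hz => Bfun_series hz, 1 / 7, by norm_num,
    Real.pi / 4, ⟨by linarith, by linarith⟩, ?_⟩
  rintro z ⟨hz1, hz2⟩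
  constructor
  · rintro ⟨him, hre⟩
    have h1 : |z.re| ≤ ‖z‖ := Complex.abs_re_le_norm z
    have h2 : (1 : ℝ) / 2 ≤ |z.re| := by
      rw [abs_le'] at h1
      rw [abs_of_nonpos (by linarith : z.re ≤ 0)]
      linarith
    have : (1:ℝ)/7 + 1/7 < 1/2 := by norm_num
    linarith
  · rintro ⟨him, hre⟩
    have harg : Complex.arg (z - 1 / 7) = 0 := by
      rw [Complex.arg_eq_zero_iff]
      constructor
      · rw [Complex.sub_re]
        norm_num
        linarith
      · rw [Complex.sub_im]
        norm_num
        exact him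
    rw [harg] at hz2
    simp at hz2
    linarith
end

section
/- For all integers n > k ≥ 0, the coefficient of xⁿ in the formal power series (1 − x)ᵏ·log(1 − x) equals (−1)^{k+1}·k!/(n(n−1)⋯(n−k)), where log(1 − x) denotes the formal power series −∑_{m≥1} xᵐ/m and the denominator n(n−1)⋯(n−k) is the product of the k+1 factors n, n−1, …, n−k. -/
open scoped BigOperators

/-- The formal power series `log(1 − x) = −∑_{m≥1} xᵐ/m` (over `ℝ`); note that the
`m = 0` coefficient `−1/0` is `0` by convention. -/
noncomputable def logOneSub : PowerSeries ℝ := PowerSeries.mk fun m => -(1 / (m : ℝ))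

lemma prod_ne_zero (n k : ℕ) (hkn : k < n) :
    ∏ j ∈ Finset.range (k + 1), ((n : ℝ) - (j : ℝ)) ≠ 0 := by
  apply Finset.prod_ne_zero_iff.2
  intro j hj
  simp only [Finset.mem_range] at hj
  have : (j : ℝ) < (n : ℝ) := by exact_mod_cast by omega
  linarith

/-- For all integers `n > k ≥ 0`, the coefficient of `xⁿ` in `(1 − x)ᵏ·log(1 − x)` equals
`(−1)^{k+1}·k!/(n(n−1)⋯(n−k))`. -/
theorem coeff_pow_one_sub_mul_log (n k : ℕ) (hkn : k < n) :
    PowerSeries.coeff n ((1 - PowerSeries.X) ^ k * logOneSub) =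
      (-1) ^ (k + 1) * (Nat.factorial k : ℝ) /
        ∏ j ∈ Finset.range (k + 1), ((n : ℝ) - (j : ℝ)) := by
  induction k generalizing n with
  | zero =>
    simp only [pow_zero, one_mul, logOneSub, PowerSeries.coeff_mk, Nat.factorial_zero,
      Nat.cast_one, Finset.prod_range_one, Nat.cast_zero, sub_zero, pow_one]
    ring_nf
    rw [Finset.prod_range_one]
    push_cast
    ring
  | succ k ih =>
    obtain ⟨m, rfl⟩ : ∃ m, n = m + 1 := ⟨n - 1, by omega⟩
    have h1 : k < m + 1 := by omega
    have h2 : k < m := by omega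
    have key : PowerSeries.coeff (m + 1) ((1 - PowerSeries.X) ^ (k + 1) * logOneSub)
        = PowerSeries.coeff (m + 1) ((1 - PowerSeries.X) ^ k * logOneSub)
          - PowerSeries.coeff m ((1 - PowerSeries.X) ^ k * logOneSub) := by
      have h : (1 - PowerSeries.X) ^ (k + 1) * logOneSub
          = (1 - PowerSeries.X) ^ k * logOneSub
            - PowerSeries.X * ((1 - PowerSeries.X) ^ k * logOneSub) := by
        ring
      rw [h, map_sub, PowerSeries.coeff_succ_X_mul]
    rw [key, ih (m + 1) h1, ih m h2]
    have hPne := prod_ne_zero (m + 1) k h1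
    have hQne := prod_ne_zero m k h2
    have hRne := prod_ne_zero (m + 1) (k + 1) hkn
    have hR1 : ∏ j ∈ Finset.range (k + 2), (((m + 1 : ℕ) : ℝ) - (j : ℝ))
        = (∏ j ∈ Finset.range (k + 1), (((m + 1 : ℕ) : ℝ) - (j : ℝ)))
          * (((m + 1 : ℕ) : ℝ) - ((k + 1 : ℕ) : ℝ)) := by
      rw [Finset.prod_range_succ]
    have hR2 : ∏ j ∈ Finset.range (k + 2), (((m + 1 : ℕ) : ℝ) - (j : ℝ))
        = (∏ j ∈ Finset.range (k + 1), ((m : ℝ) - (j : ℝ))) * ((m : ℝ) + 1) := by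
      rw [Finset.prod_range_succ']
      push_cast
      congr 1
      · exact Finset.prod_congr rfl fun j _ => by push_cast; ring
      · ring
    have hPQ : (∏ j ∈ Finset.range (k + 1), (((m + 1 : ℕ) : ℝ) - (j : ℝ)))
          * (((m + 1 : ℕ) : ℝ) - ((k + 1 : ℕ) : ℝ))
        = (∏ j ∈ Finset.range (k + 1), ((m : ℝ) - (j : ℝ))) * ((m : ℝ) + 1) := by
      rw [← hR1, hR2]
    rw [div_sub_div _ _ hPne hQne, div_eq_div_iff (mul_ne_zero hPne hQne) hRne]
    show _ = _ * ((Nat.factorial (k + 1) : ℝ)) * _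
    rw [show (k + 1 + 1 : ℕ) = k + 2 from rfl] at *
    rw [hR2]
    push_cast [Nat.factorial_succ] at hPQ ⊢
    linear_combination (-((-1 : ℝ) ^ (k + 1) * (Nat.factorial k : ℝ))
      * (∏ j ∈ Finset.range (k + 1), ((m : ℝ) - (j : ℝ)))) * hPQ
end
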